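/- arXiv:1108.4478 — 10 statements merged into one kernel-verified Lean document; each statement's English description precedes it below -/
import Mathlib

section
/- Let S ∈ T be an elementary trapping set of size a, suppose T contains no elementary trapping set of size a+1 or a+2, and let S' ∈ T be an elementary trapping set containing S such that |S'| > a and T contains no elementary trapping set whose size lies strictly between a and |S'|. Then no variable node of S' \ S is adjacent to any check node of Γ_e(S); moreover, each check node of Γ_o(S) has at most one neighbor in S' \ S, and the total number of check nodes of Γ_o(S) having a neighbor in S' \ S is exactly one or exactly two. -/
open SimpleGraph

/-- The (check-node) neighborhood `Γ(S)` of a set `S` of variable nodes: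
all vertices adjacent to some vertex of `S`. -/
def Gam {V : Type} (G : SimpleGraph V) (S : Set V) : Set V :=
  {c | ∃ v ∈ S, G.Adj v c}

/-- The degree of a check node `c` in the induced subgraph `G(S)`
(the subgraph induced by `S ∪ Γ(S)`): the number of its neighbors inside `S`. -/
noncomputable def degIn {V : Type} (G : SimpleGraph V) (S : Set V) (c : V) : ℕ :=
  {v | v ∈ S ∧ G.Adj c v}.ncard

/-- The unsatisfied check nodes `Γ_o(S)`: check nodes of `Γ(S)` of odd degree in `G(S)`. -/
def GamO {V : Type} (G : SimpleGraph V) (S : Set V) : Set V :=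
  {c | c ∈ Gam G S ∧ Odd (degIn G S c)}

/-- The satisfied check nodes `Γ_e(S)`: check nodes of `Γ(S)` of even degree in `G(S)`. -/
def GamE {V : Type} (G : SimpleGraph V) (S : Set V) : Set V :=
  {c | c ∈ Gam G S ∧ Even (degIn G S c)}

/-- The number of neighbors of `v` lying in the set `A`. -/
noncomputable def adjCount {V : Type} (G : SimpleGraph V) (A : Set V) (v : V) : ℕ :=
  {c | c ∈ A ∧ G.Adj v c}.ncard

/-- The degree of a vertex in `G`. -/
noncomputable def degG {V : Type} (G : SimpleGraph V) (v : V) : ℕ :=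
  (G.neighborSet v).ncard

/-- `G` is bipartite with variable nodes `{v | isVar v}` and check nodes `{v | ¬ isVar v}`. -/
def Bipartite {V : Type} (G : SimpleGraph V) (isVar : V → Prop) : Prop :=
  ∀ u v, G.Adj u v → (isVar u ↔ ¬ isVar v)

/-- A trapping set `S` is elementary if every check node of `G(S)` has degree 1 or 2 in `G(S)`. -/
def IsElem {V : Type} (G : SimpleGraph V) (S : Set V) : Prop :=
  ∀ c ∈ Gam G S, degIn G S c = 1 ∨ degIn G S c = 2

/-- Membership in the family `𝒯`: the induced subgraph `G(S)` is connected and every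
variable node of `S` is adjacent to at least two satisfied check nodes. -/
def InT {V : Type} (G : SimpleGraph V) (S : Set V) : Prop :=
  (G.induce (S ∪ Gam G S)).Connected ∧ ∀ v ∈ S, 2 ≤ adjCount G (GamE G S) v
set_option linter.unusedSectionVars false

section Aux
variable {V : Type} [Fintype V] {G : SimpleGraph V} {S S' : Set V}

lemma gam_mono (h : S ⊆ S') : Gam G S ⊆ Gam G S' := by
  rintro c ⟨v, hv, hadj⟩; exact ⟨v, h hv, hadj⟩

lemma mem_gam_of_adj {v c : V} (hv : v ∈ S) (h : G.Adj c v) : c ∈ Gam G S :=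
  ⟨v, hv, h.symm⟩

lemma degIn_le (h : S ⊆ S') (c : V) : degIn G S c ≤ degIn G S' c :=
  Set.ncard_le_ncard (fun v hv => ⟨h hv.1, hv.2⟩)

lemma one_le_degIn {c : V} (h : c ∈ Gam G S) : 1 ≤ degIn G S c := by
  obtain ⟨v, hv, hadj⟩ := h
  have : (0:ℕ) < degIn G S c := by
    rw [degIn, Set.ncard_pos]; exact ⟨v, hv, hadj.symm⟩
  omega

lemma degIn_split (h : S ⊆ S') (c : V) :
    degIn G S' c = degIn G S c + {v | v ∈ S' \ S ∧ G.Adj c v}.ncard := by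
  rw [degIn, degIn, ← Set.ncard_union_eq]
  · congr 1; ext v
    simp only [Set.mem_setOf_eq, Set.mem_union, Set.mem_diff]
    constructor
    · rintro ⟨hv, hadj⟩
      by_cases hvS : v ∈ S
      · exact Or.inl ⟨hvS, hadj⟩
      · exact Or.inr ⟨⟨hv, hvS⟩, hadj⟩
    · rintro (⟨hv, hadj⟩ | ⟨⟨hv, _⟩, hadj⟩)
      · exact ⟨h hv, hadj⟩
      · exact ⟨hv, hadj⟩
  · rw [Set.disjoint_left]; rintro v ⟨hv, -⟩ ⟨⟨-, hv'⟩, -⟩; exact hv' hv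

lemma three_le_ncard {A : Set V} {x y z : V} (hx : x ∈ A) (hy : y ∈ A) (hz : z ∈ A)
    (hxy : x ≠ y) (hxz : x ≠ z) (hyz : y ≠ z) : 3 ≤ A.ncard := by
  have h1 : ({x, y, z} : Set V).ncard = 3 := by
    rw [Set.ncard_insert_of_notMem (by simp [hxy, hxz]), Set.ncard_pair hyz]
  have h2 : ({x, y, z} : Set V) ⊆ A := by
    intro w hw; rcases hw with h | h | h <;> simp_all
  have := Set.ncard_le_ncard h2 (Set.toFinite A)
  omega

lemma two_le_ncard {A : Set V} {x y : V} (hx : x ∈ A) (hy : y ∈ A) (hxy : x ≠ y) :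
    2 ≤ A.ncard := by
  have := (Set.one_lt_ncard (Set.toFinite A)).mpr ⟨x, hx, y, hy, hxy⟩
  omega

/-- any check of `Gam U` with `S ⊆ U ⊆ S'` has degree 1 or 2 when `S'` is elementary -/
lemma elem_sandwich (hS'e : IsElem G S') {U : Set V} (hU : U ⊆ S') : IsElem G U := by
  intro c hc
  have h1 : 1 ≤ degIn G U c := one_le_degIn hc
  have h2 : degIn G U c ≤ degIn G S' c := degIn_le hU c
  have h3 := hS'e c (gam_mono hU hc)
  omega

lemma sat_of_two (hS'e : IsElem G S') {U : Set V} (hU : U ⊆ S') {c u1 u2 : V}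
    (h1 : u1 ∈ U) (h2 : u2 ∈ U) (h12 : u1 ≠ u2) (ha1 : G.Adj c u1) (ha2 : G.Adj c u2) :
    c ∈ GamE G U ∧ degIn G U c = 2 := by
  have hcU : c ∈ Gam G U := mem_gam_of_adj h1 ha1
  have hge : 2 ≤ degIn G U c := two_le_ncard ⟨h1, ha1⟩ ⟨h2, ha2⟩ h12
  have hle : degIn G U c ≤ degIn G S' c := degIn_le hU c
  have := hS'e c (gam_mono hU hcU)
  have heq : degIn G U c = 2 := by omega
  exact ⟨⟨hcU, by rw [heq]; exact even_two⟩, heq⟩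

/-- crossing lemma -/
lemma crossing_of_walk {X A : Set V} {p q : ↑X} (w : (G.induce X).Walk p q)
    (hp : (p : V) ∈ A) (hq : (q : V) ∉ A) :
    ∃ x y, x ∈ A ∧ y ∈ X ∧ y ∉ A ∧ G.Adj x y := by
  induction w with
  | nil => exact absurd hp hq
  | @cons u b q h w ih =>
    by_cases hb : (b : V) ∈ A
    · exact ih hb hq
    · exact ⟨u, b, hp, b.2, hb, h⟩

lemma reach_mono {X Y : Set V} (hXY : X ⊆ Y) {u v : V} (hu : u ∈ X) (hv : v ∈ X)
    (h : (G.induce X).Reachable ⟨u, hu⟩ ⟨v, hv⟩) :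
    (G.induce Y).Reachable ⟨u, hXY hu⟩ ⟨v, hXY hv⟩ := by
  let f : G.induce X →g G.induce Y := ⟨fun a => ⟨a.1, hXY a.2⟩, fun h => h⟩
  exact h.map f

lemma induce_adj' {X : Set V} {u v : V} (hu : u ∈ X) (hv : v ∈ X) (h : G.Adj u v) :
    (G.induce X).Adj ⟨u, hu⟩ ⟨v, hv⟩ := h

end Aux

lemma S_nonempty {V : Type} [Fintype V] {G : SimpleGraph V} {S : Set V}
    (hST : InT G S) : S.Nonempty := by
  obtain ⟨⟨x, hx⟩⟩ := hST.1.nonempty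
  rcases hx with hx | ⟨v, hv, -⟩
  · exact ⟨x, hx⟩
  · exact ⟨v, hv⟩

lemma build {V : Type} [Fintype V] {G : SimpleGraph V} {isVar : V → Prop}
    {S S' : Set V} {a : ℕ}
    (hS'L : S' ⊆ {v | isVar v})
    (hST : InT G S)
    (hSe : IsElem G S) (hS'e : IsElem G S')
    (hSa : S.ncard = a) (hsub : S ⊆ S')
    (hnext : ∀ U ⊆ {v | isVar v}, InT G U → IsElem G U →
      ¬ (a < U.ncard ∧ U.ncard < S'.ncard))
    (W : Set V) (hWD : W ⊆ S' \ S) (hWne : W.Nonempty)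
    (hWproper : ((S' \ S) \ W).Nonempty)
    (hWdeg : ∀ d ∈ W, 2 ≤ adjCount G (GamE G (S ∪ W)) d)
    (hWconn : ∀ d (hd : d ∈ W), ∃ s, ∃ (hs : s ∈ S),
        (G.induce ((S ∪ W) ∪ Gam G (S ∪ W))).Reachable
          ⟨d, Or.inl (Or.inr hd)⟩ ⟨s, Or.inl (Or.inl hs)⟩) : False := by
  set U := S ∪ W with hU
  have hUS' : U ⊆ S' := Set.union_subset hsub (fun x hx => (hWD hx).1)
  have hUL : U ⊆ {v | isVar v} := hUS'.trans hS'L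
  have hUe : IsElem G U := elem_sandwich hS'e hUS'
  obtain ⟨s0, hs0⟩ := S_nonempty hST
  -- degree condition for old vertices
  have hdegS : ∀ v ∈ S, 2 ≤ adjCount G (GamE G U) v := by
    intro v hv
    have hmono : {c | c ∈ GamE G S ∧ G.Adj v c} ⊆ {c | c ∈ GamE G U ∧ G.Adj v c} := by
      rintro c ⟨⟨hcG, hce⟩, hadj⟩
      have hc2 : degIn G S c = 2 := by
        rcases hSe c hcG with h | h
        · rw [h] at hce; simp at hce
        · exact h
      have hcU : c ∈ Gam G U := gam_mono Set.subset_union_left hcG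
      have h1 : degIn G S c ≤ degIn G U c := degIn_le Set.subset_union_left c
      have h2 : degIn G U c ≤ degIn G S' c := degIn_le hUS' c
      have h3 := hS'e c (gam_mono hUS' hcU)
      have : degIn G U c = 2 := by omega
      exact ⟨⟨hcU, by rw [this]; exact even_two⟩, hadj⟩
    calc 2 ≤ adjCount G (GamE G S) v := hST.2 v hv
      _ ≤ adjCount G (GamE G U) v := Set.ncard_le_ncard hmono
  -- connectivity
  have hsm : S ∪ Gam G S ⊆ U ∪ Gam G U := by
    apply Set.union_subset_union Set.subset_union_left (gam_mono Set.subset_union_left)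
  have reachS : ∀ s (hs : s ∈ S),
      (G.induce (U ∪ Gam G U)).Reachable ⟨s, Or.inl (Or.inl hs)⟩
        ⟨s0, Or.inl (Or.inl hs0)⟩ := by
    intro s hs
    have := hST.1.preconnected ⟨s, Or.inl hs⟩ ⟨s0, Or.inl hs0⟩
    exact reach_mono hsm _ _ this
  have reachAll : ∀ x (hx : x ∈ U ∪ Gam G U),
      (G.induce (U ∪ Gam G U)).Reachable ⟨x, hx⟩ ⟨s0, Or.inl (Or.inl hs0)⟩ := by
    have key : ∀ x (hx : x ∈ U),
        (G.induce (U ∪ Gam G U)).Reachable ⟨x, Or.inl hx⟩ ⟨s0, Or.inl (Or.inl hs0)⟩ := by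
      intro x hx
      rcases hx with hx | hx
      · exact reachS x hx
      · obtain ⟨s, hs, hr⟩ := hWconn x hx
        exact hr.trans (reachS s hs)
    intro x hx
    rcases hx with hx | hx
    · exact key x hx
    · obtain ⟨v, hv, hadj⟩ := hx
      have hedge : (G.induce (U ∪ Gam G U)).Adj ⟨x, Or.inr ⟨v, hv, hadj⟩⟩ ⟨v, Or.inl hv⟩ :=
        hadj.symm
      exact hedge.reachable.trans (key v hv)
  have hconn : (G.induce (U ∪ Gam G U)).Connected := by
    rw [connected_iff]
    refine ⟨fun x y => ?_, ⟨⟨s0, Or.inl (Or.inl hs0)⟩⟩⟩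
    exact (reachAll x.1 x.2).trans (reachAll y.1 y.2).symm
  have hUT : InT G U := by
    refine ⟨hconn, fun v hv => ?_⟩
    rcases hv with hv | hv
    · exact hdegS v hv
    · exact hWdeg v hv
  -- cardinalities
  have hdisj : Disjoint S W := by
    rw [Set.disjoint_left]; intro x hx hxW; exact (hWD hxW).2 hx
  have hUcard : U.ncard = a + W.ncard := by
    rw [hU, Set.ncard_union_eq hdisj, hSa]
  have hWpos : 1 ≤ W.ncard := by
    have := (Set.ncard_pos (Set.toFinite W)).mpr hWne; omega
  have hWlt : W.ncard < (S' \ S).ncard := by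
    refine Set.ncard_lt_ncard (hWD.ssubset_of_ne ?_) (Set.toFinite _)
    rintro rfl
    obtain ⟨x, hx⟩ := hWproper
    exact hx.2 hx.1
  have hS'card : S'.ncard = a + (S' \ S).ncard := by
    have h1 : (S' \ S).ncard = S'.ncard - S.ncard := Set.ncard_diff hsub
    have h2 : S.ncard ≤ S'.ncard := Set.ncard_le_ncard hsub
    omega
  exact hnext U hUL hUT hUe ⟨by omega, by omega⟩
def ConnProp {V : Type} (G : SimpleGraph V) (B D : Set V) (m : ℕ) : Prop :=
  ∃ (b : V) (b' : V) (y : ℕ → V), b ∈ B ∧ b' ∈ B ∧ b ≠ b' ∧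
    (∀ i ≤ m, y i ∈ D) ∧ G.Adj b (y 0) ∧ G.Adj b' (y m) ∧
    ∀ i < m, ∃ c, G.Adj c (y i) ∧ G.Adj c (y (i+1))

lemma splice {V : Type} {G : SimpleGraph V} {B D : Set V} {m0 : ℕ}
    {b b' : V} {y : ℕ → V} (hb : b ∈ B) (hb' : b' ∈ B) (hbb' : b ≠ b')
    (hyD : ∀ i ≤ m0, y i ∈ D) (hby0 : G.Adj b (y 0)) (hb'ym : G.Adj b' (y m0))
    (hstep : ∀ i < m0, ∃ c, G.Adj c (y i) ∧ G.Adj c (y (i+1)))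
    {i j : ℕ} (hi : i ≤ m0) (hj : j ≤ m0) (hij : i < j) (heq : y i = y j) :
    ConnProp G B D (m0 - (j - i)) := by
  refine ⟨b, b', fun k => if k ≤ i then y k else y (k + (j - i)), hb, hb', hbb', ?_, ?_, ?_, ?_⟩
  · intro k hk
    show (if k ≤ i then y k else y (k + (j - i))) ∈ D
    split_ifs with h
    · exact hyD k (by omega)
    · exact hyD _ (by omega)
  · show G.Adj b (if 0 ≤ i then y 0 else y (0 + (j - i)))
    rw [if_pos (Nat.zero_le i)]; exact hby0
  · show G.Adj b' (if m0 - (j - i) ≤ i then y (m0 - (j - i)) else y (m0 - (j - i) + (j - i)))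
    by_cases hL : m0 - (j - i) ≤ i
    · rw [if_pos hL, show m0 - (j - i) = i from by omega, heq, show j = m0 from by omega]
      exact hb'ym
    · rw [if_neg hL, show m0 - (j - i) + (j - i) = m0 from by omega]
      exact hb'ym
  · intro k hk
    show ∃ c, G.Adj c (if k ≤ i then y k else y (k + (j - i))) ∧
      G.Adj c (if k + 1 ≤ i then y (k + 1) else y (k + 1 + (j - i)))
    by_cases h1 : k + 1 ≤ i
    · rw [if_pos (by omega : k ≤ i), if_pos h1]
      exact hstep k (by omega)
    · by_cases h2 : k ≤ i
      · rw [if_pos h2, if_neg h1, show k + 1 + (j - i) = j + 1 from by omega,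
          show k = i from by omega, heq]
        exact hstep j (by omega)
      · rw [if_neg h2, if_neg h1, show k + 1 + (j - i) = k + (j - i) + 1 from by omega]
        exact hstep (k + (j - i)) (by omega)

lemma chain_reach {V : Type} {G : SimpleGraph V} {U : Set V} {y : ℕ → V} {m : ℕ}
    (hyU : ∀ i ≤ m, y i ∈ U)
    (hstep : ∀ i < m, ∃ c, G.Adj c (y i) ∧ G.Adj c (y (i+1))) :
    ∀ i (hi : i ≤ m), (G.induce (U ∪ Gam G U)).Reachable
      ⟨y i, Or.inl (hyU i hi)⟩ ⟨y 0, Or.inl (hyU 0 (Nat.zero_le m))⟩ := by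
  intro i
  induction i with
  | zero => intro hi; exact Reachable.rfl
  | succ n ih =>
    intro hi
    obtain ⟨c, hc1, hc2⟩ := hstep n (by omega)
    have hcU : c ∈ Gam G U := ⟨y n, hyU n (by omega), hc1.symm⟩
    have e1 : (G.induce (U ∪ Gam G U)).Adj ⟨y (n+1), Or.inl (hyU _ hi)⟩ ⟨c, Or.inr hcU⟩ :=
      hc2.symm
    have e2 : (G.induce (U ∪ Gam G U)).Adj ⟨c, Or.inr hcU⟩ ⟨y n, Or.inl (hyU n (by omega))⟩ :=
      hc1
    exact (e1.reachable.trans e2.reachable).trans (ih (by omega))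

/-- Let `S ∈ 𝒯` be an elementary trapping set of size `a`, suppose `𝒯`
contains no elementary trapping set of size `a+1` or `a+2`, and let `S' ∈ 𝒯` be an
elementary trapping set containing `S` of the smallest size greater than `a`. Then no
variable node of `S' \ S` is adjacent to any check node of `Γ_e(S)`; each check node of
`Γ_o(S)` has at most one neighbor in `S' \ S`; and the number of check nodes of `Γ_o(S)`
having a neighbor in `S' \ S` is exactly one or exactly two. -/
theorem stmt3 {V : Type} [Fintype V] (G : SimpleGraph V) (isVar : V → Prop)
    (hbip : Bipartite G isVar) (hdeg2 : ∀ v : V, 2 ≤ degG G v)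
    (S S' : Set V) (a : ℕ)
    (hSL : S ⊆ {v | isVar v}) (hS'L : S' ⊆ {v | isVar v})
    (hST : InT G S) (hS'T : InT G S')
    (hSe : IsElem G S) (hS'e : IsElem G S')
    (hSa : S.ncard = a)
    (hgap : ∀ U ⊆ {v | isVar v}, InT G U → IsElem G U →
      U.ncard ≠ a + 1 ∧ U.ncard ≠ a + 2)
    (hsub : S ⊆ S') (hS'a : a < S'.ncard)
    (hnext : ∀ U ⊆ {v | isVar v}, InT G U → IsElem G U →
      ¬ (a < U.ncard ∧ U.ncard < S'.ncard)) :
    (∀ v ∈ S' \ S, ∀ c ∈ GamE G S, ¬ G.Adj v c) ∧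
    (∀ c ∈ GamO G S, {v | v ∈ S' \ S ∧ G.Adj c v}.ncard ≤ 1) ∧
    ({c | c ∈ GamO G S ∧ ∃ v ∈ S' \ S, G.Adj c v}.ncard = 1 ∨
      {c | c ∈ GamO G S ∧ ∃ v ∈ S' \ S, G.Adj c v}.ncard = 2) := by
  classical
  set Bset : Set V := {c | c ∈ GamO G S ∧ ∃ v ∈ S' \ S, G.Adj c v} with hBdef
  have hGamSS' : Gam G S ⊆ Gam G S' := gam_mono hsub
  have hS'12 : ∀ c ∈ Gam G S', degIn G S' c ≤ 2 := by
    intro c hc; rcases hS'e c hc with h | h <;> omega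
  have hE2 : ∀ c ∈ GamE G S, degIn G S c = 2 := by
    rintro c ⟨hcG, hce⟩
    rcases hSe c hcG with h | h
    · rw [h] at hce; exact absurd hce (by decide)
    · exact h
  have hO1 : ∀ c ∈ GamO G S, degIn G S c = 1 := by
    rintro c ⟨hcG, hco⟩
    rcases hSe c hcG with h | h
    · exact h
    · rw [h] at hco; exact absurd hco (by decide)
  -- Part 1
  have P1 : ∀ v ∈ S' \ S, ∀ c ∈ GamE G S, ¬ G.Adj v c := by
    intro v hv c hc hadj
    have h2 := hE2 c hc
    have hsplit := degIn_split (G := G) hsub c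
    have hpos : 0 < {u | u ∈ S' \ S ∧ G.Adj c u}.ncard :=
      (Set.ncard_pos (Set.toFinite _)).mpr ⟨v, hv, hadj.symm⟩
    have := hS'12 c (hGamSS' hc.1)
    omega
  -- Part 2
  have P2 : ∀ c ∈ GamO G S, {v | v ∈ S' \ S ∧ G.Adj c v}.ncard ≤ 1 := by
    intro c hc
    have h1 := hO1 c hc
    have hsplit := degIn_split (G := G) hsub c
    have := hS'12 c (hGamSS' hc.1)
    omega
  have hdeg3 : ∀ (c x y z : V), x ∈ S' → y ∈ S' → z ∈ S' → x ≠ y → x ≠ z → y ≠ z →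
      G.Adj c x → G.Adj c y → G.Adj c z → False := by
    intro c x y z hx hy hz hxy hxz hyz ax ay az
    have h3 : 3 ≤ degIn G S' c := three_le_ncard ⟨hx, ax⟩ ⟨hy, ay⟩ ⟨hz, az⟩ hxy hxz hyz
    have := hS'12 c (mem_gam_of_adj hx ax)
    omega
  have hBfacts : ∀ b ∈ Bset, ∃ s ∈ S, G.Adj b s := by
    rintro b ⟨hbO, -⟩
    have h1 : degIn G S b = 1 := hO1 b hbO
    have hpos : 0 < degIn G S b := by omega
    obtain ⟨s, hs, hadj⟩ := (Set.ncard_pos (Set.toFinite _)).mp hpos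
    exact ⟨s, hs, hadj⟩
  have hD3 : 3 ≤ (S' \ S).ncard := by
    obtain ⟨hg1, hg2⟩ := hgap S' hS'L hS'T hS'e
    have h1 : (S' \ S).ncard = S'.ncard - S.ncard := Set.ncard_diff hsub
    have h2 : S.ncard ≤ S'.ncard := Set.ncard_le_ncard hsub
    omega
  have hDne : (S' \ S).Nonempty := (Set.ncard_pos (Set.toFinite _)).mp (by omega)
  have notVarGam : ∀ c ∈ Gam G S', ¬ isVar c := by
    rintro c ⟨v, hv, hadj⟩
    exact (hbip v c hadj).mp (hS'L hv)
  -- lower bound : Bset is nonempty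
  have hBne : Bset.Nonempty := by
    obtain ⟨s0, hs0⟩ := S_nonempty hST
    obtain ⟨d0, hd0⟩ := hDne
    have hd0A : d0 ∉ S ∪ {c | c ∈ Gam G S' ∧ ∀ d ∈ S' \ S, ¬ G.Adj c d} := by
      rintro (h | ⟨hg, -⟩)
      · exact hd0.2 h
      · exact notVarGam d0 hg (hS'L hd0.1)
    obtain ⟨w⟩ := hS'T.1.preconnected ⟨s0, Or.inl (hsub hs0)⟩ ⟨d0, Or.inl hd0.1⟩
    obtain ⟨x, y, hxA, hyX, hyA, hadj⟩ := crossing_of_walk w (Or.inl hs0) hd0A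
    rcases hxA with hxS | ⟨hxG, hxno⟩
    · have hyG : y ∈ Gam G S' := by
        rcases hyX with hyS' | hyG
        · exact absurd (hS'L hyS') ((hbip x y hadj).mp (hSL hxS))
        · exact hyG
      have hyD : ∃ d ∈ S' \ S, G.Adj y d := by
        by_contra hcon; push_neg at hcon
        exact hyA (Or.inr ⟨hyG, hcon⟩)
      obtain ⟨d, hd, hyd⟩ := hyD
      have hyGamS : y ∈ Gam G S := mem_gam_of_adj hxS hadj.symm
      have h1 : degIn G S y = 1 := by
        have hsplit := degIn_split (G := G) hsub y
        have hpos : 0 < {v | v ∈ S' \ S ∧ G.Adj y v}.ncard :=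
          (Set.ncard_pos (Set.toFinite _)).mpr ⟨d, hd, hyd⟩
        have hle := hS'12 y (hGamSS' hyGamS)
        have hge := one_le_degIn hyGamS
        omega
      exact ⟨y, ⟨hyGamS, by rw [h1]; exact odd_one⟩, d, hd, hyd⟩
    · exfalso
      rcases hyX with hyS' | hyG
      · exact hxno y ⟨hyS', fun h => hyA (Or.inl h)⟩ hadj
      · exact (notVarGam x hxG) ((hbip x y hadj).mpr (notVarGam y hyG))
  -- upper bound : at most two boundary checks
  have hB2 : Bset.ncard ≤ 2 := by
    by_contra hcon
    push_neg at hcon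
    obtain ⟨b1, hb1, b2, hb2, hb12⟩ :=
      (Set.one_lt_ncard (s := Bset) (Set.toFinite _)).mp (by omega)
    by_cases hex : ∃ m, ConnProp G Bset (S' \ S) m
    · -- CASE A : some pair of boundary checks is linked through S' \ S
      obtain ⟨m0, hm0, hmin⟩ := Nat.lt_wfRel.wf.has_min {m | ConnProp G Bset (S' \ S) m} hex
      obtain ⟨b, b', y, hb, hb', hbb', hyD, hby0, hb'ym, hstep⟩ := hm0
      have hinj : ∀ i j, i ≤ m0 → j ≤ m0 → i < j → y i ≠ y j := by
        intro i j hi hj hij heq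
        have hlt : m0 - (j - i) < m0 := by omega
        exact hmin (m0 - (j - i)) (splice hb hb' hbb' hyD hby0 hb'ym hstep hi hj hij heq) hlt
      set W : Set V := {v | ∃ i, i ≤ m0 ∧ y i = v} with hW
      have hWD : W ⊆ S' \ S := by rintro v ⟨i, hi, rfl⟩; exact hyD i hi
      have hWne : W.Nonempty := ⟨y 0, 0, Nat.zero_le _, rfl⟩
      have hUS' : S ∪ W ⊆ S' := Set.union_subset hsub (fun v hv => (hWD hv).1)
      have hyU : ∀ i ≤ m0, y i ∈ S ∪ W := fun i hi => Or.inr ⟨i, hi, rfl⟩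
      obtain ⟨sb, hsb, hbsb⟩ := hBfacts b hb
      obtain ⟨sb', hsb', hb'sb'⟩ := hBfacts b' hb'
      have hbE : b ∈ GamE G (S ∪ W) :=
        (sat_of_two hS'e hUS' (Or.inl hsb) (hyU 0 (Nat.zero_le _))
          (fun h => (hyD 0 (Nat.zero_le _)).2 (h ▸ hsb)) hbsb hby0).1
      have hb'E : b' ∈ GamE G (S ∪ W) :=
        (sat_of_two hS'e hUS' (Or.inl hsb') (hyU m0 le_rfl)
          (fun h => (hyD m0 le_rfl).2 (h ▸ hsb')) hb'sb' hb'ym).1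
      have hWdeg : ∀ d ∈ W, 2 ≤ adjCount G (GamE G (S ∪ W)) d := by
        rintro d ⟨i, hi, rfl⟩
        rcases Nat.eq_zero_or_pos m0 with hm0z | hm0pos
        · have hi0 : i = 0 := by omega
          subst hi0
          have hb'0 := hb'ym
          rw [hm0z] at hb'0
          exact two_le_ncard ⟨hbE, hby0.symm⟩ ⟨hb'E, hb'0.symm⟩ hbb'
        · by_cases hi0 : i = 0
          · subst hi0
            obtain ⟨c0, hc01, hc02⟩ := hstep 0 hm0pos
            have hc0E : c0 ∈ GamE G (S ∪ W) :=
              (sat_of_two hS'e hUS' (hyU 0 (Nat.zero_le _)) (hyU 1 hm0pos)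
                (hinj 0 1 (Nat.zero_le _) hm0pos (by omega)) hc01 hc02).1
            have hbc0 : b ≠ c0 := by
              intro h; subst h
              exact hdeg3 b sb (y 0) (y 1) (hsub hsb) (hyD 0 (Nat.zero_le _)).1
                (hyD 1 hm0pos).1 (fun he => (hyD 0 (Nat.zero_le _)).2 (he ▸ hsb))
                (fun he => (hyD 1 hm0pos).2 (he ▸ hsb))
                (hinj 0 1 (Nat.zero_le _) hm0pos (by omega)) hbsb hc01 hc02
            exact two_le_ncard ⟨hbE, hby0.symm⟩ ⟨hc0E, hc01.symm⟩ hbc0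
          · by_cases him : i = m0
            · subst him
              obtain ⟨c1, hc11, hc12⟩ := hstep (i - 1) (by omega)
              have hm1 : i - 1 + 1 = i := by omega
              rw [hm1] at hc12
              have hc1E : c1 ∈ GamE G (S ∪ W) :=
                (sat_of_two hS'e hUS' (hyU (i - 1) (by omega)) (hyU i le_rfl)
                  (hinj (i - 1) i (by omega) le_rfl (by omega)) hc11 hc12).1
              have hb'c1 : b' ≠ c1 := by
                intro h; subst h
                exact hdeg3 b' sb' (y (i - 1)) (y i) (hsub hsb') (hyD _ (by omega)).1
                  (hyD i le_rfl).1 (fun he => (hyD _ (by omega)).2 (he ▸ hsb'))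
                  (fun he => (hyD i le_rfl).2 (he ▸ hsb'))
                  (hinj (i - 1) i (by omega) le_rfl (by omega)) hb'sb' hc11 hc12
              exact two_le_ncard ⟨hb'E, hb'ym.symm⟩ ⟨hc1E, hc12.symm⟩ hb'c1
            · obtain ⟨cp, hcp1, hcp2⟩ := hstep (i - 1) (by omega)
              have hip : i - 1 + 1 = i := by omega
              rw [hip] at hcp2
              obtain ⟨cn, hcn1, hcn2⟩ := hstep i (by omega)
              have hcpE : cp ∈ GamE G (S ∪ W) :=
                (sat_of_two hS'e hUS' (hyU (i - 1) (by omega)) (hyU i hi)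
                  (hinj (i - 1) i (by omega) hi (by omega)) hcp1 hcp2).1
              have hcnE : cn ∈ GamE G (S ∪ W) :=
                (sat_of_two hS'e hUS' (hyU i hi) (hyU (i + 1) (by omega))
                  (hinj i (i + 1) hi (by omega) (by omega)) hcn1 hcn2).1
              have hcpcn : cp ≠ cn := by
                intro h; subst h
                exact hdeg3 cp (y (i - 1)) (y i) (y (i + 1)) (hyD _ (by omega)).1
                  (hyD i hi).1 (hyD _ (by omega)).1
                  (hinj (i - 1) i (by omega) hi (by omega))
                  (hinj (i - 1) (i + 1) (by omega) (by omega) (by omega))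
                  (hinj i (i + 1) hi (by omega) (by omega)) hcp1 hcp2 hcn2
              exact two_le_ncard ⟨hcpE, hcp2.symm⟩ ⟨hcnE, hcn1.symm⟩ hcpcn
      have hWconn : ∀ d (hd : d ∈ W), ∃ s, ∃ (hs : s ∈ S),
          (G.induce ((S ∪ W) ∪ Gam G (S ∪ W))).Reachable
            ⟨d, Or.inl (Or.inr hd)⟩ ⟨s, Or.inl (Or.inl hs)⟩ := by
        intro d hd
        obtain ⟨i, hi, hyi⟩ := id hd
        refine ⟨sb, hsb, ?_⟩
        have h1 := chain_reach hyU hstep i hi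
        have hbG : b ∈ Gam G (S ∪ W) := mem_gam_of_adj (hyU 0 (Nat.zero_le _)) hby0
        have e1 : (G.induce ((S ∪ W) ∪ Gam G (S ∪ W))).Adj
            ⟨y 0, Or.inl (hyU 0 (Nat.zero_le _))⟩ ⟨b, Or.inr hbG⟩ := hby0.symm
        have e2 : (G.induce ((S ∪ W) ∪ Gam G (S ∪ W))).Adj
            ⟨b, Or.inr hbG⟩ ⟨sb, Or.inl (Or.inl hsb)⟩ := hbsb
        have hd_eq : (⟨d, Or.inl (Or.inr hd)⟩ : ↥((S ∪ W) ∪ Gam G (S ∪ W))) =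
            ⟨y i, Or.inl (hyU i hi)⟩ := Subtype.ext hyi.symm
        rw [hd_eq]
        exact h1.trans (e1.reachable.trans e2.reachable)
      have hWproper : ((S' \ S) \ W).Nonempty := by
        rcases Nat.eq_zero_or_pos m0 with hm0z | hm0pos
        · by_contra hcon2
          rw [Set.not_nonempty_iff_eq_empty, Set.diff_eq_empty] at hcon2
          have hle : (S' \ S).ncard ≤ ({y 0} : Set V).ncard := by
            refine Set.ncard_le_ncard (fun v hv => ?_) (Set.toFinite _)
            obtain ⟨i, hi, rfl⟩ := hcon2 hv
            have : i = 0 := by omega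
            subst this; rfl
          rw [Set.ncard_singleton] at hle
          omega
        · have hdiffne : (Bset \ {b, b'}).Nonempty := by
            have h1 : Bset ⊆ (Bset \ {b, b'}) ∪ {b, b'} := by
              intro t ht
              by_cases h : t ∈ ({b, b'} : Set V)
              · exact Or.inr h
              · exact Or.inl ⟨ht, h⟩
            have h2 := Set.ncard_le_ncard h1 (Set.toFinite _)
            have h3 := Set.ncard_union_le (Bset \ {b, b'}) ({b, b'} : Set V)
            have h4 : ({b, b'} : Set V).ncard = 2 := Set.ncard_pair hbb'
            exact (Set.ncard_pos (Set.toFinite _)).mp (by omega)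
          obtain ⟨b3, hb3B, hb3n⟩ := hdiffne
          have hb3b : b3 ≠ b := fun h => hb3n (by rw [h]; exact Or.inl rfl)
          have hb3b' : b3 ≠ b' := fun h => hb3n (by rw [h]; exact Or.inr rfl)
          obtain ⟨x3, hx3D, hb3x3⟩ := hb3B.2
          refine ⟨x3, hx3D, ?_⟩
          rintro ⟨t, ht, hyt⟩
          by_cases htm : t = m0
          · have hym0 : y m0 = x3 := by rw [← htm]; exact hyt
            have h0 : ConnProp G Bset (S' \ S) 0 :=
              ⟨b3, b', fun _ => y m0, hb3B, hb', hb3b',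
                fun i hi => hyD m0 le_rfl, by rw [hym0]; exact hb3x3, hb'ym,
                fun i hi => absurd hi (by omega)⟩
            exact hmin 0 h0 hm0pos
          · have htlt : t < m0 := by omega
            have h0 : ConnProp G Bset (S' \ S) t :=
              ⟨b, b3, y, hb, hb3B, fun h => hb3b h.symm,
                fun i hi => hyD i (by omega), hby0, by rw [hyt]; exact hb3x3,
                fun i hi => hstep i (by omega)⟩
            exact hmin t h0 htlt
      exact build hS'L hST hSe hS'e hSa hsub hnext W hWD hWne hWproper hWdeg hWconn
    · -- CASE B : no pair is linked; take the component of one boundary check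
      push_neg at hex
      obtain ⟨x1, hx1D, hb1x1⟩ := hb1.2
      obtain ⟨x2, hx2D, hb2x2⟩ := hb2.2
      set W : Set V := {d | ∃ (m : ℕ) (y : ℕ → V), y 0 = x1 ∧ y m = d ∧
        (∀ i ≤ m, y i ∈ S' \ S) ∧
        ∀ i < m, ∃ c, G.Adj c (y i) ∧ G.Adj c (y (i + 1))} with hW
      have hWD : W ⊆ S' \ S := by
        rintro d ⟨m, y, h0, rfl, hD', -⟩; exact hD' m le_rfl
      have hx1W : x1 ∈ W :=
        ⟨0, fun _ => x1, rfl, rfl, fun i hi => hx1D, fun i hi => absurd hi (by omega)⟩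
      have hWne : W.Nonempty := ⟨x1, hx1W⟩
      have hUS' : S ∪ W ⊆ S' := Set.union_subset hsub (fun v hv => (hWD hv).1)
      have hclosed : ∀ d ∈ W, ∀ e c, e ∈ S' \ S → G.Adj c d → G.Adj c e → e ∈ W := by
        rintro d ⟨m, y, h0, hym, hyD', hystep⟩ e c heD hcd hce
        refine ⟨m + 1, fun k => if k ≤ m then y k else e, ?_, ?_, ?_, ?_⟩
        · show (if 0 ≤ m then y 0 else e) = x1
          rw [if_pos (Nat.zero_le m)]; exact h0
        · show (if m + 1 ≤ m then y (m + 1) else e) = e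
          rw [if_neg (by omega)]
        · intro i hi
          show (if i ≤ m then y i else e) ∈ S' \ S
          split_ifs with h
          · exact hyD' i h
          · exact heD
        · intro i hi
          show ∃ c', G.Adj c' (if i ≤ m then y i else e) ∧
            G.Adj c' (if i + 1 ≤ m then y (i + 1) else e)
          by_cases h1 : i + 1 ≤ m
          · rw [if_pos (by omega : i ≤ m), if_pos h1]
            exact hystep i (by omega)
          · have him : i = m := by omega
            rw [if_pos (by omega : i ≤ m), if_neg h1, him]
            exact ⟨c, by rw [hym]; exact hcd, hce⟩
      have hWdeg : ∀ d ∈ W, 2 ≤ adjCount G (GamE G (S ∪ W)) d := by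
        intro d hd
        have hdD := hWD hd
        have hmono : {c | c ∈ GamE G S' ∧ G.Adj d c} ⊆
            {c | c ∈ GamE G (S ∪ W) ∧ G.Adj d c} := by
          rintro c ⟨⟨hcG', hce'⟩, hadj⟩
          have hc2 : degIn G S' c = 2 := by
            rcases hS'e c hcG' with h | h
            · rw [h] at hce'; exact absurd hce' (by decide)
            · exact h
          obtain ⟨p, q, hpq, hN⟩ := Set.ncard_eq_two.mp hc2
          have hdN : d ∈ {v | v ∈ S' ∧ G.Adj c v} := ⟨hdD.1, hadj.symm⟩
          rw [hN] at hdN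
          obtain ⟨e, heN, hed⟩ : ∃ e, e ∈ ({p, q} : Set V) ∧ e ≠ d := by
            rcases hdN with rfl | rfl
            · exact ⟨q, Or.inr rfl, fun h => hpq h.symm⟩
            · exact ⟨p, Or.inl rfl, hpq⟩
          rw [← hN] at heN
          have heU : e ∈ S ∪ W := by
            by_cases heS : e ∈ S
            · exact Or.inl heS
            · exact Or.inr (hclosed d hd e c ⟨heN.1, heS⟩ hadj.symm heN.2)
          have hsat := sat_of_two hS'e hUS' (Or.inr hd) heU
            (fun h => hed h.symm) hadj.symm heN.2
          exact ⟨hsat.1, hadj⟩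
        calc 2 ≤ adjCount G (GamE G S') d := hS'T.2 d hdD.1
          _ ≤ adjCount G (GamE G (S ∪ W)) d := Set.ncard_le_ncard hmono (Set.toFinite _)
      have hWconn : ∀ d (hd : d ∈ W), ∃ s, ∃ (hs : s ∈ S),
          (G.induce ((S ∪ W) ∪ Gam G (S ∪ W))).Reachable
            ⟨d, Or.inl (Or.inr hd)⟩ ⟨s, Or.inl (Or.inl hs)⟩ := by
        intro d hd
        obtain ⟨m, y, h0, hym, hyD', hystep⟩ := id hd
        have hyW : ∀ i ≤ m, y i ∈ W := fun i hi =>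
          ⟨i, y, h0, rfl, fun j hj => hyD' j (by omega), fun j hj => hystep j (by omega)⟩
        have hyU : ∀ i ≤ m, y i ∈ S ∪ W := fun i hi => Or.inr (hyW i hi)
        obtain ⟨s1, hs1, hb1s1⟩ := hBfacts b1 hb1
        refine ⟨s1, hs1, ?_⟩
        have h1 := chain_reach hyU hystep m le_rfl
        have hb1G : b1 ∈ Gam G (S ∪ W) := mem_gam_of_adj (Or.inr hx1W) hb1x1
        have e1 : (G.induce ((S ∪ W) ∪ Gam G (S ∪ W))).Adj
            ⟨x1, Or.inl (Or.inr hx1W)⟩ ⟨b1, Or.inr hb1G⟩ := hb1x1.symm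
        have e2 : (G.induce ((S ∪ W) ∪ Gam G (S ∪ W))).Adj
            ⟨b1, Or.inr hb1G⟩ ⟨s1, Or.inl (Or.inl hs1)⟩ := hb1s1
        have hd_eq : (⟨d, Or.inl (Or.inr hd)⟩ : ↥((S ∪ W) ∪ Gam G (S ∪ W))) =
            ⟨y m, Or.inl (hyU m le_rfl)⟩ := Subtype.ext hym.symm
        rw [hd_eq]
        refine h1.trans ?_
        have hx_eq : (⟨y 0, Or.inl (hyU 0 (Nat.zero_le m))⟩ : ↥((S ∪ W) ∪ Gam G (S ∪ W))) =
            ⟨x1, Or.inl (Or.inr hx1W)⟩ := Subtype.ext h0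
        rw [hx_eq]
        exact e1.reachable.trans e2.reachable
      have hWproper : ((S' \ S) \ W).Nonempty := by
        refine ⟨x2, hx2D, fun hx2W => ?_⟩
        obtain ⟨m, y, h0, hym, hyD', hystep⟩ := hx2W
        exact hex m ⟨b1, b2, y, hb1, hb2, hb12, hyD',
          by rw [h0]; exact hb1x1, by rw [hym]; exact hb2x2, hystep⟩
      exact build hS'L hST hSe hS'e hSa hsub hnext W hWD hWne hWproper hWdeg hWconn
  refine ⟨P1, P2, ?_⟩
  have h1 : 0 < Bset.ncard := (Set.ncard_pos (Set.toFinite _)).mpr hBne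
  omega
end

section
/- Let S ∈ T be an elementary trapping set of size a, suppose T contains no elementary trapping set of size a+1 or a+2, and let S' ∈ T be an elementary trapping set containing S such that |S'| > a and T contains no elementary trapping set whose size lies strictly between a and |S'|. If exactly two check nodes of Γ_o(S) have a neighbor in S' \ S, then the induced subgraph G(S' \ S) contains no cycle. -/
open SimpleGraph

namespace Stmt4AuxW
variable {V : Type} {G : SimpleGraph V}

lemma support_getElem? : ∀ {u v : V} (p : G.Walk u v) (i : ℕ), i ≤ p.length →
    p.support[i]? = some (p.getVert i)
  | _, _, .nil, 0, _ => rfl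
  | _, _, .cons h q, 0, _ => by simp [SimpleGraph.Walk.support_cons, Walk.getVert_zero]
  | _, _, .cons h q, (i+1), hi => by
    simpa [SimpleGraph.Walk.support_cons] using
      support_getElem? q i (by simpa [SimpleGraph.Walk.length_cons] using hi)

lemma path_getVert_inj {u v : V} {p : G.Walk u v} (hp : p.IsPath) {i j : ℕ}
    (hi : i ≤ p.length) (hj : j ≤ p.length) (h : p.getVert i = p.getVert j) : i = j := by
  apply (List.getElem?_inj (l := p.support) (by rw [Walk.length_support]; omega) hp.support_nodup).mp
  rw [support_getElem? p i hi, support_getElem? p j hj, h]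

lemma cycle_getVert_inj {v : V} {p : G.Walk v v} (hp : p.IsCycle) {i j : ℕ}
    (hi1 : 1 ≤ i) (hi : i ≤ p.length) (hj1 : 1 ≤ j) (hj : j ≤ p.length)
    (h : p.getVert i = p.getVert j) : i = j := by
  have hnd := (Walk.isCycle_def p).mp hp |>.2.2
  have htl : p.support.tail.length = p.length := by
    have h2 := Walk.length_support p
    rw [Walk.support_eq_cons] at h2
    simp only [List.length_cons] at h2
    omega
  have key : ∀ k, 1 ≤ k → k ≤ p.length → p.support.tail[k-1]? = some (p.getVert k) := by
    intro k hk1 hk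
    have h3 := support_getElem? p k hk
    rw [Walk.support_eq_cons] at h3
    rcases Nat.exists_eq_add_of_le hk1 with ⟨m, rfl⟩
    simp only [Nat.add_comm 1 m, List.getElem?_cons_succ, Nat.add_sub_cancel] at h3 ⊢
    exact h3
  have h4 := (List.getElem?_inj (i := i - 1) (j := j - 1) (l := p.support.tail) (by omega) hnd).mp
    (by rw [key i hi1 hi, key j hj1 hj, h])
  omega

end Stmt4AuxW

namespace Stmt4Aux
variable {V : Type}
variable [Fintype V] {G : SimpleGraph V} {S S' : Set V}

lemma no_three (hS'e : IsElem G S') {c x y z : V} (hx : x ∈ S') (hy : y ∈ S') (hz : z ∈ S')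
    (hxy : x ≠ y) (hxz : x ≠ z) (hyz : y ≠ z)
    (ax : G.Adj c x) (ay : G.Adj c y) (az : G.Adj c z) : False := by
  have hc : c ∈ Gam G S' := ⟨x, hx, ax.symm⟩
  have h2 : degIn G S' c ≤ 2 := by rcases hS'e c hc with h | h <;> omega
  have hsub : ({x, y, z} : Set V) ⊆ {v | v ∈ S' ∧ G.Adj c v} := by
    rintro t (rfl | rfl | rfl)
    exacts [⟨hx, ax⟩, ⟨hy, ay⟩, ⟨hz, az⟩]
  have h3 : ({x, y, z} : Set V).ncard = 3 := by
    rw [Set.ncard_insert_of_notMem (by simp [hxy, hxz]), Set.ncard_pair hyz]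
  have := Set.ncard_le_ncard hsub (Set.toFinite _)
  rw [h3] at this
  exact absurd (this.trans h2) (by omega)

lemma degIn_pair (hS'e : IsElem G S') {W : Set V} (hWS' : W ⊆ S') {c x y : V}
    (hx : x ∈ W) (hy : y ∈ W) (hxy : x ≠ y) (ax : G.Adj c x) (ay : G.Adj c y) :
    degIn G W c = 2 := by
  have : {v | v ∈ W ∧ G.Adj c v} = {x, y} := by
    ext z
    constructor
    · rintro ⟨hzW, hz⟩
      by_contra hne
      rw [Set.mem_insert_iff, Set.mem_singleton_iff] at hne
      push_neg at hne
      exact no_three hS'e (hWS' hx) (hWS' hy) (hWS' hzW) hxy (Ne.symm hne.1) (Ne.symm hne.2) ax ay hz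
    · rintro (rfl | rfl)
      exacts [⟨hx, ax⟩, ⟨hy, ay⟩]
  rw [degIn, this, Set.ncard_pair hxy]

lemma linkGamE (hS'e : IsElem G S') {W : Set V} (hWS' : W ⊆ S') {c x y : V}
    (hx : x ∈ W) (hy : y ∈ W) (hxy : x ≠ y) (ax : G.Adj c x) (ay : G.Adj c y) :
    c ∈ GamE G W :=
  ⟨⟨x, hx, ax.symm⟩, by rw [degIn_pair hS'e hWS' hx hy hxy ax ay]; exact even_two⟩

/-- The master lemma: any nonempty `D ⊆ S' \ S` which is "closed" (every vertex has two
distinct links into `S ∪ D`) and connected to `S` by link-chains must be all of `S' \ S`. -/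
lemma mainD (L0 : Set V) (a : ℕ)
    (hS'L : S' ⊆ L0) (hST : InT G S) (hSe : IsElem G S) (hS'e : IsElem G S')
    (hSa : S.ncard = a) (hsub : S ⊆ S')
    (hnext : ∀ U ⊆ L0, InT G U → IsElem G U → ¬ (a < U.ncard ∧ U.ncard < S'.ncard))
    (D : Set V) (hDX : D ⊆ S' \ S) (hDne : D.Nonempty)
    (hHD : ∀ v ∈ D, ∃ c1 c2 y1 y2, c1 ≠ c2 ∧ G.Adj v c1 ∧ G.Adj v c2 ∧
        y1 ∈ S ∪ D ∧ y2 ∈ S ∪ D ∧ y1 ≠ v ∧ y2 ≠ v ∧ G.Adj c1 y1 ∧ G.Adj c2 y2)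
    (hconn : ∀ v ∈ D, ∃ s ∈ S, Relation.ReflTransGen
        (fun y z => y ∈ S ∪ D ∧ z ∈ S ∪ D ∧ y ≠ z ∧ ∃ c, G.Adj y c ∧ G.Adj z c) v s) :
    D = S' \ S := by
  classical
  set W : Set V := S ∪ D with hWdef
  have hDS' : D ⊆ S' := fun v hv => (hDX hv).1
  have hWS' : W ⊆ S' := Set.union_subset hsub hDS'
  have hSW : S ⊆ W := Set.subset_union_left
  -- Gam is monotone
  have hGamMono : ∀ {A B : Set V}, A ⊆ B → Gam G A ⊆ Gam G B := by
    rintro A B hAB c ⟨v, hv, h⟩; exact ⟨v, hAB hv, h⟩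
  -- every vertex of W has ≥ 2 satisfied checks
  have hsat : ∀ v ∈ W, 2 ≤ adjCount G (GamE G W) v := by
    rintro v (hvS | hvD)
    · have h2 := hST.2 v hvS
      have hsub2 : {c | c ∈ GamE G S ∧ G.Adj v c} ⊆ {c | c ∈ GamE G W ∧ G.Adj v c} := by
        rintro c ⟨⟨hcGam, hceven⟩, hadj⟩
        have hdeg : degIn G S c = 2 := by
          rcases hSe c hcGam with h | h
          · exfalso; rw [h] at hceven; exact (Nat.not_even_one) hceven
          · exact h
        obtain ⟨x, y, hxy, hset⟩ := Set.ncard_eq_two.mp hdeg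
        have hx : x ∈ {v | v ∈ S ∧ G.Adj c v} := by rw [hset]; exact Or.inl rfl
        have hy : y ∈ {v | v ∈ S ∧ G.Adj c v} := by rw [hset]; exact Or.inr rfl
        exact ⟨linkGamE hS'e hWS' (hSW hx.1) (hSW hy.1) hxy hx.2 hy.2, hadj⟩
      calc 2 ≤ adjCount G (GamE G S) v := h2
        _ ≤ _ := Set.ncard_le_ncard hsub2 (Set.toFinite _)
    · obtain ⟨c1, c2, y1, y2, h12, a1, a2, hy1, hy2, hy1v, hy2v, b1, b2⟩ := hHD v hvD
      have hvW : v ∈ W := Or.inr hvD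
      have hc1 : c1 ∈ GamE G W := linkGamE hS'e hWS' hvW hy1 (Ne.symm hy1v) a1.symm b1
      have hc2 : c2 ∈ GamE G W := linkGamE hS'e hWS' hvW hy2 (Ne.symm hy2v) a2.symm b2
      have : ({c1, c2} : Set V) ⊆ {c | c ∈ GamE G W ∧ G.Adj v c} := by
        rintro t (rfl | rfl); exacts [⟨hc1, a1⟩, ⟨hc2, a2⟩]
      calc 2 = ({c1, c2} : Set V).ncard := (Set.ncard_pair h12).symm
        _ ≤ _ := Set.ncard_le_ncard this (Set.toFinite _)
  -- connectivity
  have hTsub : S ∪ Gam G S ⊆ W ∪ Gam G W :=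
    Set.union_subset_union hSW (hGamMono hSW)
  obtain ⟨s0, hs0⟩ : ∃ s, s ∈ S := by
    obtain ⟨⟨z, hz⟩⟩ := hST.1.nonempty
    rcases hz with hz | ⟨v, hv, _⟩
    exacts [⟨z, hz⟩, ⟨v, hv⟩]
  have hs0T : s0 ∈ W ∪ Gam G W := Or.inl (hSW hs0)
  set T : Set V := W ∪ Gam G W with hTdef
  let F : (G.induce (S ∪ Gam G S)) →g (G.induce T) :=
    ⟨fun x => ⟨x.1, hTsub x.2⟩, fun {a b} h => h⟩
  have reach1 : ∀ (x : V) (hx : x ∈ S ∪ Gam G S),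
      (G.induce T).Reachable ⟨x, hTsub hx⟩ ⟨s0, hs0T⟩ := by
    intro x hx
    have := (hST.1.preconnected ⟨x, hx⟩ ⟨s0, Or.inl hs0⟩).map F
    exact this
  have reachLS : ∀ y z (hy : y ∈ W) (hz : z ∈ W), (∃ c, G.Adj y c ∧ G.Adj z c) →
      (G.induce T).Reachable ⟨y, Or.inl hy⟩ ⟨z, Or.inl hz⟩ := by
    rintro y z hy hz ⟨c, hyc, hzc⟩
    have hcT : c ∈ T := Or.inr ⟨y, hy, hyc⟩
    have e1 : (G.induce T).Adj ⟨y, Or.inl hy⟩ ⟨c, hcT⟩ := hyc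
    have e2 : (G.induce T).Adj ⟨c, hcT⟩ ⟨z, Or.inl hz⟩ := hzc.symm
    exact (e1.reachable).trans e2.reachable
  have reachW : ∀ (v : V) (hv : v ∈ W), (G.induce T).Reachable ⟨v, Or.inl hv⟩ ⟨s0, hs0T⟩ := by
    rintro v (hvS | hvD)
    · exact reach1 v (Or.inl hvS)
    · obtain ⟨s, hsS, hRTG⟩ := hconn v hvD
      have key : ∀ x, Relation.ReflTransGen
          (fun y z => y ∈ S ∪ D ∧ z ∈ S ∪ D ∧ y ≠ z ∧ ∃ c, G.Adj y c ∧ G.Adj z c) x s →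
          ∀ hx : x ∈ W, (G.induce T).Reachable ⟨x, Or.inl hx⟩ ⟨s, Or.inl (hSW hsS)⟩ := by
        intro x h
        induction h using Relation.ReflTransGen.head_induction_on with
        | refl => intro hx; rfl
        | head hstep hrest ih =>
          intro hx
          exact (reachLS _ _ hstep.1 hstep.2.1 hstep.2.2.2).trans (ih hstep.2.1)
      exact (key v hRTG (Or.inr hvD)).trans (reach1 s (Or.inl hsS))
  have hconnW : (G.induce T).Connected := by
    rw [connected_iff]
    refine ⟨fun x y => ?_, ⟨⟨s0, hs0T⟩⟩⟩
    have reachAll : ∀ (z : ↥T), (G.induce T).Reachable z ⟨s0, hs0T⟩ := by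
      rintro ⟨z, hz | ⟨v, hv, hadj⟩⟩
      · exact reachW z hz
      · have hzT : z ∈ T := Or.inr ⟨v, hv, hadj⟩
        have e : (G.induce T).Adj ⟨z, hzT⟩ ⟨v, Or.inl hv⟩ := hadj.symm
        exact e.reachable.trans (reachW v hv)
    exact (reachAll x).trans (reachAll y).symm
  have hInT : InT G W := ⟨hconnW, hsat⟩
  -- elementarity
  have hElem : IsElem G W := by
    intro c hc
    obtain ⟨v, hv, hadj⟩ := hc
    have h1 : 1 ≤ degIn G W c := by
      rw [Nat.one_le_iff_ne_zero, ← Nat.pos_iff_ne_zero, degIn,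
        Set.ncard_pos (Set.toFinite _)]
      exact ⟨v, hv, hadj.symm⟩
    have hmono : degIn G W c ≤ degIn G S' c :=
      Set.ncard_le_ncard (fun z hz => ⟨hWS' hz.1, hz.2⟩) (Set.toFinite _)
    have h2 : degIn G S' c ≤ 2 := by
      rcases hS'e c (hGamMono hWS' ⟨v, hv, hadj⟩) with h | h <;> omega
    omega
  -- cardinality
  have hdisj : Disjoint S D := Set.disjoint_left.mpr (fun x hx hxD => (hDX hxD).2 hx)
  have hWcard : W.ncard = a + D.ncard := by
    rw [hWdef, Set.ncard_union_eq hdisj (Set.toFinite _) (Set.toFinite _), hSa]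
  have hS'card : S'.ncard = a + (S' \ S).ncard := by
    nth_rewrite 1 [← Set.union_diff_cancel hsub]
    rw [Set.ncard_union_eq Set.disjoint_sdiff_right (Set.toFinite _) (Set.toFinite _), hSa]
  have hDpos : 0 < D.ncard := (Set.ncard_pos (Set.toFinite _)).mpr hDne
  have hn := hnext W (hWS'.trans hS'L) hInT hElem
  push_neg at hn
  have hineq : S'.ncard ≤ W.ncard := hn (by omega)
  exact Set.eq_of_subset_of_ncard_le hDX (by omega) (Set.toFinite _)

end Stmt4Aux
/-- In the setting of Lemma 3 (expansion to the next larger size), if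
exactly two check nodes of `Γ_o(S)` have a neighbor in `S' \ S`, then the induced
subgraph `G(S' \ S)` contains no cycle. -/
theorem stmt4 {V : Type} [Fintype V] (G : SimpleGraph V) (isVar : V → Prop)
    (hbip : Bipartite G isVar) (hdeg2 : ∀ v : V, 2 ≤ degG G v)
    (S S' : Set V) (a : ℕ)
    (hSL : S ⊆ {v | isVar v}) (hS'L : S' ⊆ {v | isVar v})
    (hST : InT G S) (hS'T : InT G S')
    (hSe : IsElem G S) (hS'e : IsElem G S')
    (hSa : S.ncard = a)
    (hgap : ∀ U ⊆ {v | isVar v}, InT G U → IsElem G U →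
      U.ncard ≠ a + 1 ∧ U.ncard ≠ a + 2)
    (hsub : S ⊆ S') (hS'a : a < S'.ncard)
    (hnext : ∀ U ⊆ {v | isVar v}, InT G U → IsElem G U →
      ¬ (a < U.ncard ∧ U.ncard < S'.ncard))
    (htwo : {c | c ∈ GamO G S ∧ ∃ v ∈ S' \ S, G.Adj c v}.ncard = 2) :
    (G.induce ((S' \ S) ∪ Gam G (S' \ S))).IsAcyclic := by
  classical
  set X : Set V := S' \ S with hXdef
  have hXS' : X ⊆ S' := Set.diff_subset
  have hXnotS : ∀ x ∈ X, x ∉ S := fun x hx => hx.2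
  have hS'card : S'.ncard = a + X.ncard := by
    nth_rewrite 1 [← Set.union_diff_cancel hsub]
    rw [Set.ncard_union_eq Set.disjoint_sdiff_right (Set.toFinite _) (Set.toFinite _), hSa]
  have hX3 : 3 ≤ X.ncard := by
    have h := hgap S' hS'L hS'T hS'e
    omega
  have hXvar : ∀ x ∈ X, isVar x := fun x hx => hS'L (hXS' hx)
  have hnotvar : ∀ z ∈ Gam G X, ¬ isVar z := by
    rintro z ⟨v, hv, hadj⟩ hz
    exact ((hbip v z hadj).mp (hXvar v hv)) hz
  -- the master lemma, instantiated
  have main : ∀ D : Set V, D ⊆ X → D.Nonempty →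
      (∀ v ∈ D, ∃ c1 c2 y1 y2, c1 ≠ c2 ∧ G.Adj v c1 ∧ G.Adj v c2 ∧
        y1 ∈ S ∪ D ∧ y2 ∈ S ∪ D ∧ y1 ≠ v ∧ y2 ≠ v ∧ G.Adj c1 y1 ∧ G.Adj c2 y2) →
      (∀ v ∈ D, ∃ s ∈ S, Relation.ReflTransGen
        (fun y z => y ∈ S ∪ D ∧ z ∈ S ∪ D ∧ y ≠ z ∧ ∃ c, G.Adj y c ∧ G.Adj z c) v s) →
      D = X :=
    fun D h1 h2 h3 h4 =>
      Stmt4Aux.mainD {v | isVar v} a hS'L hST hSe hS'e hSa hsub hnext D h1 h2 h3 h4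
  -- the two crossing checks
  have hBspec : ∀ b ∈ {c | c ∈ GamO G S ∧ ∃ v ∈ S' \ S, G.Adj c v},
      ∃ s x, s ∈ S ∧ x ∈ X ∧ G.Adj b s ∧ G.Adj b x ∧
        (∀ z ∈ S', G.Adj b z → z = s ∨ z = x) := by
    rintro b ⟨⟨hbGam, hbodd⟩, x, hxX, hbx⟩
    have hpos : degIn G S b ≠ 0 := by rcases hbodd with ⟨k, hk⟩; omega
    obtain ⟨s, hsS, hbs⟩ : ∃ s, s ∈ S ∧ G.Adj b s := by
      obtain ⟨s, hs⟩ := Set.nonempty_of_ncard_ne_zero hpos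
      exact ⟨s, hs.1, hs.2⟩
    refine ⟨s, x, hsS, hxX, hbs, hbx, ?_⟩
    intro z hz hbz
    by_contra hne
    push_neg at hne
    exact Stmt4Aux.no_three hS'e (hsub hsS) (hXS' hxX) hz
      (fun h => hxX.2 (h ▸ hsS)) (Ne.symm hne.1) (Ne.symm hne.2) hbs hbx hbz
  obtain ⟨b1, b2, hb12, hB⟩ := Set.ncard_eq_two.mp htwo
  obtain ⟨s1, u, hs1S, huX, hb1s, hb1u, hb1only⟩ :=
    hBspec b1 (by rw [hB]; exact Or.inl rfl)
  obtain ⟨s2, w, hs2S, hwX, hb2s, hb2w, hb2only⟩ :=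
    hBspec b2 (by rw [hB]; exact Or.inr rfl)
  have huS : u ∉ S := huX.2
  have hwS : w ∉ S := hwX.2
  have hs1u : s1 ≠ u := by rintro rfl; exact huS hs1S
  have hs2w : s2 ≠ w := by rintro rfl; exact hwS hs2S
  -- Step A : u ≠ w
  have huw : u ≠ w := by
    intro he
    have h1 : ({u} : Set V) = X := by
      apply main {u} (by simpa using huX) ⟨u, rfl⟩
      · intro v hv
        rw [Set.mem_singleton_iff] at hv; subst hv
        refine ⟨b1, b2, s1, s2, hb12, hb1u.symm, ?_, Or.inl hs1S, Or.inl hs2S,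
          hs1u, ?_, hb1s, hb2s⟩
        · rw [he]; exact hb2w.symm
        · rintro rfl; exact huS hs2S
      · intro v hv
        rw [Set.mem_singleton_iff] at hv; subst hv
        exact ⟨s1, hs1S, Relation.ReflTransGen.single
          ⟨Or.inr rfl, Or.inl hs1S, hs1u.symm, b1, hb1u.symm, hb1s.symm⟩⟩
    have : X.ncard = 1 := by rw [← h1, Set.ncard_singleton]
    omega
  -- Step B : the "normal graph" on X and the component of u
  let NX : SimpleGraph V :=
    { Adj := fun x y => x ≠ y ∧ x ∈ X ∧ y ∈ X ∧ ∃ c, G.Adj x c ∧ G.Adj y c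
      symm := ⟨by rintro x y ⟨h1, h2, h3, c, hc1, hc2⟩; exact ⟨h1.symm, h3, h2, c, hc2, hc1⟩⟩
      loopless := ⟨fun x h => h.1 rfl⟩ }
  have hNX : ∀ {x y : V}, (x ≠ y ∧ x ∈ X ∧ y ∈ X ∧ ∃ c, G.Adj x c ∧ G.Adj y c) → NX.Adj x y :=
    fun h => h
  have hNX' : ∀ {x y : V}, NX.Adj x y →
      (x ≠ y ∧ x ∈ X ∧ y ∈ X ∧ ∃ c, G.Adj x c ∧ G.Adj y c) := fun h => h
  have twoLinks : ∀ v ∈ X, ∃ c1 c2 y1 y2, c1 ≠ c2 ∧ G.Adj v c1 ∧ G.Adj v c2 ∧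
      y1 ∈ S' ∧ y2 ∈ S' ∧ y1 ≠ v ∧ y2 ≠ v ∧ G.Adj c1 y1 ∧ G.Adj c2 y2 := by
    intro v hv
    have h2 := hS'T.2 v (hXS' hv)
    obtain ⟨c1, c2, hc1, hc2, h12⟩ :=
      (Set.one_lt_ncard_iff (s := {c | c ∈ GamE G S' ∧ G.Adj v c}) (Set.toFinite _)).mp
        (by exact lt_of_lt_of_le one_lt_two h2)
    have other : ∀ c, c ∈ GamE G S' ∧ G.Adj v c → ∃ y, y ∈ S' ∧ y ≠ v ∧ G.Adj c y := by
      rintro c ⟨⟨hGam, heven⟩, hadj⟩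
      have hdeg : degIn G S' c = 2 := by
        rcases hS'e c hGam with h | h
        · exfalso; rw [h] at heven; exact (Nat.not_even_one) heven
        · exact h
      obtain ⟨p, r, hpr, hset⟩ := Set.ncard_eq_two.mp hdeg
      have hvmem : v ∈ {z | z ∈ S' ∧ G.Adj c z} := ⟨hXS' hv, hadj.symm⟩
      rw [hset] at hvmem
      rcases hvmem with rfl | rfl
      · have hr : r ∈ {z | z ∈ S' ∧ G.Adj c z} := by rw [hset]; exact Or.inr rfl
        exact ⟨r, hr.1, hpr.symm, hr.2⟩
      · have hp : p ∈ {z | z ∈ S' ∧ G.Adj c z} := by rw [hset]; exact Or.inl rfl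
        exact ⟨p, hp.1, hpr, hp.2⟩
    obtain ⟨y1, hy1⟩ := other c1 hc1
    obtain ⟨y2, hy2⟩ := other c2 hc2
    exact ⟨c1, c2, y1, y2, h12, hc1.2, hc2.2, hy1.1, hy2.1, hy1.2.1, hy2.2.1,
      hy1.2.2, hy2.2.2⟩
  have hDuX : {y | y ∈ X ∧ Relation.ReflTransGen NX.Adj u y} = X := by
    apply main {y | y ∈ X ∧ Relation.ReflTransGen NX.Adj u y} (fun y hy => hy.1)
      ⟨u, huX, Relation.ReflTransGen.refl⟩
    · rintro v ⟨hvX, hvR⟩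
      obtain ⟨c1, c2, y1, y2, h12, a1, a2, hy1S', hy2S', hy1v, hy2v, ay1, ay2⟩ :=
        twoLinks v hvX
      have place : ∀ y c, y ∈ S' → y ≠ v → G.Adj v c → G.Adj c y →
          y ∈ S ∪ {y | y ∈ X ∧ Relation.ReflTransGen NX.Adj u y} := by
        intro y c hyS' hyv hvc hcy
        by_cases hyS : y ∈ S
        · exact Or.inl hyS
        · have hyX : y ∈ X := ⟨hyS', hyS⟩
          exact Or.inr ⟨hyX, hvR.tail (hNX ⟨Ne.symm hyv, hvX, hyX, c, hvc, hcy.symm⟩)⟩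
      exact ⟨c1, c2, y1, y2, h12, a1, a2, place y1 c1 hy1S' hy1v a1 ay1,
        place y2 c2 hy2S' hy2v a2 ay2, hy1v, hy2v, ay1, ay2⟩
    · rintro v ⟨hvX, hvR⟩
      refine ⟨s1, hs1S, ?_⟩
      have hchain : ∀ y, Relation.ReflTransGen NX.Adj u y →
          Relation.ReflTransGen (fun y z =>
            y ∈ S ∪ {y | y ∈ X ∧ Relation.ReflTransGen NX.Adj u y} ∧
            z ∈ S ∪ {y | y ∈ X ∧ Relation.ReflTransGen NX.Adj u y} ∧
            y ≠ z ∧ ∃ c, G.Adj y c ∧ G.Adj z c) y u := by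
        intro y h
        induction h with
        | refl => exact Relation.ReflTransGen.refl
        | tail hub hbc ih =>
          refine Relation.ReflTransGen.head ?_ ih
          obtain ⟨hne, hbX, hcX, c0, hb0, hc0⟩ := hNX' hbc
          exact ⟨Or.inr ⟨hcX, hub.tail hbc⟩, Or.inr ⟨hbX, hub⟩, hne.symm, c0, hc0, hb0⟩
      exact (hchain v hvR).tail
        ⟨Or.inr ⟨huX, Relation.ReflTransGen.refl⟩, Or.inl hs1S, hs1u.symm,
          b1, hb1u.symm, hb1s.symm⟩
  have hreach_uw : Relation.ReflTransGen NX.Adj u w :=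
    (show w ∈ {y | y ∈ X ∧ Relation.ReflTransGen NX.Adj u y} by rw [hDuX]; exact hwX).2
  obtain ⟨p0⟩ := (reachable_iff_reflTransGen (G := NX) u w).mpr hreach_uw
  -- Step C : a u–w path in NX whose support is all of X
  set q := p0.bypass with hqdef
  have hq : q.IsPath := p0.bypass_isPath
  set L := q.length with hLdef
  have hgv0 : q.getVert 0 = u := q.getVert_zero
  have hgvL : q.getVert L = w := q.getVert_length
  have hgvX : ∀ k, k ≤ L → q.getVert k ∈ X := by
    intro k hk
    rcases eq_or_lt_of_le hk with heq | hk'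
    · rw [heq, hgvL]; exact hwX
    · exact (hNX' (q.adj_getVert_succ hk')).2.1
  have hinj : ∀ {i j}, i ≤ L → j ≤ L → q.getVert i = q.getVert j → i = j :=
    fun hi hj h => Stmt4AuxW.path_getVert_inj hq hi hj h
  have hadjQ : ∀ k, k < L →
      (q.getVert k ≠ q.getVert (k+1) ∧ q.getVert k ∈ X ∧ q.getVert (k+1) ∈ X ∧
        ∃ c, G.Adj (q.getVert k) c ∧ G.Adj (q.getVert (k+1)) c) :=
    fun k hk => hNX' (q.adj_getVert_succ hk)
  have hL1 : 1 ≤ L := by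
    by_contra h
    have h0 : q.length = 0 := by omega
    exact huw (Walk.eq_of_length_eq_zero h0)
  -- the master lemma for "segments" of q
  have segMain : ∀ i j : ℕ, i ≤ j → j ≤ L →
      (∀ m, m = i ∨ m = j →
        ∃ c1 c2 y1 y2, c1 ≠ c2 ∧ G.Adj (q.getVert m) c1 ∧ G.Adj (q.getVert m) c2 ∧
          y1 ∈ S ∪ {y | ∃ k, i ≤ k ∧ k ≤ j ∧ q.getVert k = y} ∧
          y2 ∈ S ∪ {y | ∃ k, i ≤ k ∧ k ≤ j ∧ q.getVert k = y} ∧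
          y1 ≠ q.getVert m ∧ y2 ≠ q.getVert m ∧ G.Adj c1 y1 ∧ G.Adj c2 y2) →
      (∃ s ∈ S, ∃ m, (m = i ∨ m = j) ∧ s ≠ q.getVert m ∧
        ∃ c, G.Adj (q.getVert m) c ∧ G.Adj s c) →
      {y | ∃ k, i ≤ k ∧ k ≤ j ∧ q.getVert k = y} = X := by
    intro i j hij hjL hEnds hSeed
    apply main {y | ∃ k, i ≤ k ∧ k ≤ j ∧ q.getVert k = y}
      (by rintro y ⟨k, h1, h2, rfl⟩; exact hgvX k (h2.trans hjL))
      ⟨q.getVert i, i, le_refl i, hij, rfl⟩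
    · rintro v ⟨k, hik, hkj, rfl⟩
      by_cases hki : k = i
      · subst hki; exact hEnds k (Or.inl rfl)
      by_cases hkj' : k = j
      · subst hkj'; exact hEnds k (Or.inr rfl)
      · have hk1 : 1 ≤ k := by omega
        have adj1 : q.getVert (k-1) ≠ q.getVert k ∧ q.getVert (k-1) ∈ X ∧
            q.getVert k ∈ X ∧ ∃ c, G.Adj (q.getVert (k-1)) c ∧ G.Adj (q.getVert k) c := by
          have h := hadjQ (k-1) (by omega)
          rwa [Nat.sub_add_cancel hk1] at h
        obtain ⟨hne1, hX1, hXk, c1, hc1a, hc1b⟩ := adj1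
        obtain ⟨hne2, hXk', hX2, c2, hc2a, hc2b⟩ := hadjQ k (by omega)
        have hnc : c1 ≠ c2 := by
          rintro rfl
          refine Stmt4Aux.no_three hS'e (hXS' (hgvX (k-1) (by omega)))
            (hXS' (hgvX k (by omega))) (hXS' (hgvX (k+1) (by omega)))
            hne1 ?_ ?_ hc1a.symm hc1b.symm hc2b.symm
          · intro h; have := hinj (i := k-1) (j := k+1) (by omega) (by omega) h; omega
          · intro h; have := hinj (i := k) (j := k+1) (by omega) (by omega) h; omega
        exact ⟨c1, c2, q.getVert (k-1), q.getVert (k+1), hnc, hc1b.symm.symm, hc2a,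
          Or.inr ⟨k-1, by omega, by omega, rfl⟩, Or.inr ⟨k+1, by omega, by omega, rfl⟩,
          hne1, hne2.symm, hc1a.symm, hc2b.symm⟩
    · obtain ⟨s, hsS, m, hm, hsne, c0, hc0a, hc0b⟩ := hSeed
      have hmij : i ≤ m ∧ m ≤ j := by rcases hm with rfl | rfl <;> omega
      have chainUp : ∀ d k, i ≤ k → k + d ≤ j → Relation.ReflTransGen
          (fun y z => y ∈ S ∪ {y | ∃ k, i ≤ k ∧ k ≤ j ∧ q.getVert k = y} ∧
            z ∈ S ∪ {y | ∃ k, i ≤ k ∧ k ≤ j ∧ q.getVert k = y} ∧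
            y ≠ z ∧ ∃ c, G.Adj y c ∧ G.Adj z c)
          (q.getVert k) (q.getVert (k + d)) := by
        intro d
        induction d with
        | zero => intro k _ _; exact Relation.ReflTransGen.refl
        | succ d ih =>
          intro k hik hkd
          refine (ih k hik (by omega)).tail ?_
          obtain ⟨hne, hX1, hX2, c, hca, hcb⟩ := hadjQ (k+d) (by omega)
          exact ⟨Or.inr ⟨k+d, by omega, by omega, rfl⟩,
            Or.inr ⟨k+d+1, by omega, by omega, rfl⟩, hne, c, hca, hcb⟩
      have hsym : Symmetric (fun y z =>
          y ∈ S ∪ {y | ∃ k, i ≤ k ∧ k ≤ j ∧ q.getVert k = y} ∧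
          z ∈ S ∪ {y | ∃ k, i ≤ k ∧ k ≤ j ∧ q.getVert k = y} ∧
          y ≠ z ∧ ∃ c, G.Adj y c ∧ G.Adj z c) := by
        rintro y z ⟨h1, h2, h3, c, hca, hcb⟩; exact ⟨h2, h1, h3.symm, c, hcb, hca⟩
      rintro v ⟨k, hik, hkj, rfl⟩
      refine ⟨s, hsS, Relation.ReflTransGen.tail (b := q.getVert m) ?_
        ⟨Or.inr ⟨m, hmij.1, hmij.2, rfl⟩, Or.inl hsS, hsne.symm, c0, hc0a, hc0b⟩⟩
      rcases le_or_gt k m with hkm | hmk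
      · have h := chainUp (m - k) k hik (by omega)
        rwa [show k + (m - k) = m by omega] at h
      · have h := chainUp (k - m) m hmij.1 (by omega)
        rw [show m + (k - m) = k by omega] at h
        exact (@Relation.ReflTransGen.stdSymm _ _ ⟨fun a b hab => hsym hab⟩).symm _ _ h
  -- end-vertex link data
  have endU : ∀ jj, 1 ≤ jj → jj ≤ L →
      ∃ c1 c2 y1 y2, c1 ≠ c2 ∧ G.Adj (q.getVert 0) c1 ∧ G.Adj (q.getVert 0) c2 ∧
        y1 ∈ S ∪ {y | ∃ k, 0 ≤ k ∧ k ≤ jj ∧ q.getVert k = y} ∧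
        y2 ∈ S ∪ {y | ∃ k, 0 ≤ k ∧ k ≤ jj ∧ q.getVert k = y} ∧
        y1 ≠ q.getVert 0 ∧ y2 ≠ q.getVert 0 ∧ G.Adj c1 y1 ∧ G.Adj c2 y2 := by
    intro jj h1 h2
    obtain ⟨hneS, hX0, hX1, cS, hcSa, hcSb⟩ := hadjQ 0 (by omega)
    refine ⟨b1, cS, s1, q.getVert 1, ?_, by rw [hgv0]; exact hb1u.symm, hcSa,
      Or.inl hs1S, Or.inr ⟨1, by omega, by omega, rfl⟩,
      by rw [hgv0]; exact hs1u, hneS.symm, hb1s, hcSb.symm⟩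
    rintro rfl
    rcases hb1only (q.getVert 1) (hXS' (hgvX 1 (by omega))) hcSb.symm with h | h
    · exact hXnotS _ (hgvX 1 (by omega)) (h ▸ hs1S)
    · have := hinj (i := 1) (j := 0) (by omega) (by omega) (by rw [h, hgv0])
      omega
  have endW : ∀ ii, ii + 1 ≤ L →
      ∃ c1 c2 y1 y2, c1 ≠ c2 ∧ G.Adj (q.getVert L) c1 ∧ G.Adj (q.getVert L) c2 ∧
        y1 ∈ S ∪ {y | ∃ k, ii ≤ k ∧ k ≤ L ∧ q.getVert k = y} ∧
        y2 ∈ S ∪ {y | ∃ k, ii ≤ k ∧ k ≤ L ∧ q.getVert k = y} ∧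
        y1 ≠ q.getVert L ∧ y2 ≠ q.getVert L ∧ G.Adj c1 y1 ∧ G.Adj c2 y2 := by
    intro ii hii
    have hpred := hadjQ (L-1) (by omega)
    rw [Nat.sub_add_cancel hL1] at hpred
    obtain ⟨hneP, hXL1, hXL, cP, hcPa, hcPb⟩ := hpred
    refine ⟨b2, cP, s2, q.getVert (L-1), ?_, by rw [hgvL]; exact hb2w.symm, hcPb,
      Or.inl hs2S, Or.inr ⟨L-1, by omega, by omega, rfl⟩,
      by rw [hgvL]; exact hs2w, hneP, hb2s, hcPa.symm⟩
    rintro rfl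
    rcases hb2only (q.getVert (L-1)) (hXS' (hgvX (L-1) (by omega))) hcPa.symm with h | h
    · exact hXnotS _ (hgvX (L-1) (by omega)) (h ▸ hs2S)
    · have := hinj (i := L-1) (j := L) (by omega) (by omega) (by rw [h, hgvL])
      omega
  have seedU : ∀ jj, ∃ s ∈ S, ∃ m, (m = 0 ∨ m = jj) ∧ s ≠ q.getVert m ∧
      ∃ c, G.Adj (q.getVert m) c ∧ G.Adj s c :=
    fun jj => ⟨s1, hs1S, 0, Or.inl rfl, by rw [hgv0]; exact hs1u, b1,
      by rw [hgv0]; exact hb1u.symm, hb1s.symm⟩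
  have seedW : ∀ ii, ∃ s ∈ S, ∃ m, (m = ii ∨ m = L) ∧ s ≠ q.getVert m ∧
      ∃ c, G.Adj (q.getVert m) c ∧ G.Adj s c :=
    fun ii => ⟨s2, hs2S, L, Or.inr rfl, by rw [hgvL]; exact hs2w, b2,
      by rw [hgvL]; exact hb2w.symm, hb2s.symm⟩
  -- the support of q is all of X
  have hQX : {y | ∃ k, 0 ≤ k ∧ k ≤ L ∧ q.getVert k = y} = X := by
    apply segMain 0 L (by omega) le_rfl ?_ (seedU L)
    rintro m (rfl | rfl)
    · exact endU L hL1 le_rfl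
    · exact endW 0 (by omega)
  -- adjacent X-vertices through a common check sit at consecutive positions
  have consec : ∀ i j d, i < j → j ≤ L → G.Adj (q.getVert i) d → G.Adj (q.getVert j) d →
      j = i + 1 := by
    intro i j d hij hjL hdi hdj
    by_contra hnec
    have hij2 : i + 2 ≤ j := by omega
    have hi0 : i = 0 := by
      have hseg := segMain i L (by omega) le_rfl
        (by
          rintro m (rfl | rfl)
          · obtain ⟨hneS, hXi, hXi1, cS, hcSa, hcSb⟩ := hadjQ m (by omega)
            refine ⟨d, cS, q.getVert j, q.getVert (m+1), ?_, hdi, hcSa,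
              Or.inr ⟨j, by omega, by omega, rfl⟩, Or.inr ⟨m+1, by omega, by omega, rfl⟩,
              ?_, hneS.symm, hdj.symm, hcSb.symm⟩
            · rintro rfl
              exact Stmt4Aux.no_three hS'e (hXS' (hgvX m (by omega)))
                (hXS' (hgvX (m+1) (by omega))) (hXS' (hgvX j (by omega))) hneS
                (fun h => by have := hinj (i := m) (j := j) (by omega) (by omega) h; omega)
                (fun h => by have := hinj (i := m+1) (j := j) (by omega) (by omega) h; omega)
                hcSa.symm hcSb.symm hdj.symm
            · exact fun h => by have := hinj (i := j) (j := m) (by omega) (by omega) h; omega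
          · exact endW i (by omega))
        (seedW i)
      have hu : u ∈ {y | ∃ k, i ≤ k ∧ k ≤ L ∧ q.getVert k = y} := by rw [hseg]; exact huX
      obtain ⟨k, h1, h2, h3⟩ := hu
      have : k = 0 := hinj h2 (by omega) (by rw [h3, hgv0])
      omega
    have hj0 : j = L := by
      have hseg := segMain 0 j (by omega) (by omega)
        (by
          rintro m (rfl | rfl)
          · exact endU j (by omega) (by omega)
          · have hpred := hadjQ (m-1) (by omega)
            rw [Nat.sub_add_cancel (by omega)] at hpred
            obtain ⟨hneP, hXm1, hXm, cP, hcPa, hcPb⟩ := hpred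
            refine ⟨d, cP, q.getVert i, q.getVert (m-1), ?_, hdj, hcPb,
              Or.inr ⟨i, by omega, by omega, rfl⟩, Or.inr ⟨m-1, by omega, by omega, rfl⟩,
              ?_, hneP, hdi.symm, hcPa.symm⟩
            · rintro rfl
              exact Stmt4Aux.no_three hS'e (hXS' (hgvX i (by omega)))
                (hXS' (hgvX (m-1) (by omega))) (hXS' (hgvX m (by omega)))
                (fun h => by have := hinj (i := i) (j := m-1) (by omega) (by omega) h; omega)
                (fun h => by have := hinj (i := i) (j := m) (by omega) (by omega) h; omega)
                hneP hdi.symm hcPa.symm hcPb.symm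
            · exact fun h => by have := hinj (i := i) (j := m) (by omega) (by omega) h; omega)
        (seedU j)
      have hw' : w ∈ {y | ∃ k, 0 ≤ k ∧ k ≤ j ∧ q.getVert k = y} := by rw [hseg]; exact hwX
      obtain ⟨k, h1, h2, h3⟩ := hw'
      have : k = L := hinj (by omega) le_rfl (by rw [h3, hgvL])
      omega
    subst hi0
    subst hj0
    have hdu : G.Adj u d := by rw [← hgv0]; exact hdi
    have hdw : G.Adj w d := by rw [← hgvL]; exact hdj
    have hXuw : ({u, w} : Set V) = X := by
      apply main {u, w} (by rintro y (rfl | rfl); exacts [huX, hwX]) ⟨u, Or.inl rfl⟩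
      · rintro v (rfl | rfl)
        · refine ⟨b1, d, s1, w, ?_, hb1u.symm, hdu, Or.inl hs1S, Or.inr (Or.inr rfl),
            hs1u, Ne.symm huw, hb1s, hdw.symm⟩
          rintro rfl
          rcases hb1only w (hXS' hwX) hdw.symm with h | h
          · exact hwS (h ▸ hs1S)
          · exact huw h.symm
        · refine ⟨b2, d, s2, u, ?_, hb2w.symm, hdw, Or.inl hs2S, Or.inr (Or.inl rfl),
            hs2w, huw, hb2s, hdu.symm⟩
          rintro rfl
          rcases hb2only u (hXS' huX) hdu.symm with h | h
          · exact huS (h ▸ hs2S)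
          · exact huw h
      · rintro v (rfl | rfl)
        · exact ⟨s1, hs1S, Relation.ReflTransGen.single
            ⟨Or.inr (Or.inl rfl), Or.inl hs1S, hs1u.symm, b1, hb1u.symm, hb1s.symm⟩⟩
        · exact ⟨s2, hs2S, Relation.ReflTransGen.single
            ⟨Or.inr (Or.inr rfl), Or.inl hs2S, hs2w.symm, b2, hb2w.symm, hb2s.symm⟩⟩
    have : X.ncard = 2 := by rw [← hXuw, Set.ncard_pair huw]
    omega
  -- no two distinct checks join the same pair of X-vertices
  have auxPar : ∀ i j d1 d2, i < j → j ≤ L → d1 ≠ d2 →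
      G.Adj (q.getVert i) d1 → G.Adj (q.getVert j) d1 →
      G.Adj (q.getVert i) d2 → G.Adj (q.getVert j) d2 → False := by
    intro i j d1 d2 hij hjL h12 hi1 hj1 hi2 hj2
    have hi0 : i = 0 := by
      have hseg := segMain i L (by omega) le_rfl
        (by
          rintro m (rfl | rfl)
          · exact ⟨d1, d2, q.getVert j, q.getVert j, h12, hi1, hi2,
              Or.inr ⟨j, by omega, by omega, rfl⟩, Or.inr ⟨j, by omega, by omega, rfl⟩,
              fun h => by have := hinj (i := j) (j := m) (by omega) (by omega) h; omega,
              fun h => by have := hinj (i := j) (j := m) (by omega) (by omega) h; omega,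
              hj1.symm, hj2.symm⟩
          · exact endW i (by omega))
        (seedW i)
      have hu : u ∈ {y | ∃ k, i ≤ k ∧ k ≤ L ∧ q.getVert k = y} := by rw [hseg]; exact huX
      obtain ⟨k, h1, h2, h3⟩ := hu
      have : k = 0 := hinj h2 (by omega) (by rw [h3, hgv0])
      omega
    have hj0 : j = L := by
      have hseg := segMain 0 j (by omega) (by omega)
        (by
          rintro m (rfl | rfl)
          · exact endU j (by omega) (by omega)
          · exact ⟨d1, d2, q.getVert i, q.getVert i, h12, hj1, hj2,
              Or.inr ⟨i, by omega, by omega, rfl⟩, Or.inr ⟨i, by omega, by omega, rfl⟩,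
              fun h => by have := hinj (i := i) (j := m) (by omega) (by omega) h; omega,
              fun h => by have := hinj (i := i) (j := m) (by omega) (by omega) h; omega,
              hi1.symm, hi2.symm⟩)
        (seedU j)
      have hw' : w ∈ {y | ∃ k, 0 ≤ k ∧ k ≤ j ∧ q.getVert k = y} := by rw [hseg]; exact hwX
      obtain ⟨k, h1, h2, h3⟩ := hw'
      have : k = L := hinj (by omega) le_rfl (by rw [h3, hgvL])
      omega
    subst hi0
    subst hj0
    have hd1u : G.Adj u d1 := by rw [← hgv0]; exact hi1
    have hd1w : G.Adj w d1 := by rw [← hgvL]; exact hj1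
    have hd2u : G.Adj u d2 := by rw [← hgv0]; exact hi2
    have hd2w : G.Adj w d2 := by rw [← hgvL]; exact hj2
    have hXuw : ({u, w} : Set V) = X := by
      apply main {u, w} (by rintro y (rfl | rfl); exacts [huX, hwX]) ⟨u, Or.inl rfl⟩
      · rintro v (rfl | rfl)
        · exact ⟨d1, d2, w, w, h12, hd1u, hd2u, Or.inr (Or.inr rfl), Or.inr (Or.inr rfl),
            Ne.symm huw, Ne.symm huw, hd1w.symm, hd2w.symm⟩
        · exact ⟨d1, d2, u, u, h12, hd1w, hd2w, Or.inr (Or.inl rfl), Or.inr (Or.inl rfl),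
            huw, huw, hd1u.symm, hd2u.symm⟩
      · rintro v (rfl | rfl)
        · exact ⟨s1, hs1S, Relation.ReflTransGen.single
            ⟨Or.inr (Or.inl rfl), Or.inl hs1S, hs1u.symm, b1, hb1u.symm, hb1s.symm⟩⟩
        · exact ⟨s2, hs2S, Relation.ReflTransGen.single
            ⟨Or.inr (Or.inr rfl), Or.inl hs2S, hs2w.symm, b2, hb2w.symm, hb2s.symm⟩⟩
    have : X.ncard = 2 := by rw [← hXuw, Set.ncard_pair huw]
    omega
  -- positions on the path q
  have hposEx : ∀ x ∈ X, ∃ k, k ≤ L ∧ q.getVert k = x := by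
    intro x hx
    have hx' : x ∈ {y | ∃ k, 0 ≤ k ∧ k ≤ L ∧ q.getVert k = y} := by rw [hQX]; exact hx
    obtain ⟨k, _, h2, h3⟩ := hx'
    exact ⟨k, h2, h3⟩
  let posT : V → ℕ := fun x => if hx : ∃ k, k ≤ L ∧ q.getVert k = x then hx.choose else 0
  have hposT : ∀ x ∈ X, posT x ≤ L ∧ q.getVert (posT x) = x := by
    intro x hx
    have he := hposEx x hx
    simp only [posT, dif_pos he]
    exact he.choose_spec
  -- no parallel checks, in terms of X-vertices
  have NoPar : ∀ x y dd1 dd2, x ∈ X → y ∈ X → x ≠ y → dd1 ≠ dd2 →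
      G.Adj x dd1 → G.Adj y dd1 → G.Adj x dd2 → G.Adj y dd2 → False := by
    intro x y dd1 dd2 hx hy hxy h12 ax1 ay1 ax2 ay2
    obtain ⟨hxL, hxE⟩ := hposT x hx
    obtain ⟨hyL, hyE⟩ := hposT y hy
    have hne : posT x ≠ posT y := fun h => hxy (by rw [← hxE, ← hyE, h])
    rcases Nat.lt_or_ge (posT x) (posT y) with h | h
    · exact auxPar (posT x) (posT y) dd1 dd2 h hyL h12 (by rw [hxE]; exact ax1)
        (by rw [hyE]; exact ay1) (by rw [hxE]; exact ax2) (by rw [hyE]; exact ay2)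
    · exact auxPar (posT y) (posT x) dd1 dd2 (by omega) hxL h12 (by rw [hyE]; exact ay1)
        (by rw [hxE]; exact ax1) (by rw [hyE]; exact ay2) (by rw [hxE]; exact ax2)
  -- Step E : the cycle argument
  intro v0 cyc hcyc
  set n := cyc.length with hn
  have hn3 : 3 ≤ n := hcyc.three_le_length
  let f : ℕ → V := fun k => ((cyc.getVert k : ↥(X ∪ Gam G X)) : V)
  have hf0 : f n = f 0 := by
    show ((cyc.getVert n : ↥(X ∪ Gam G X)) : V) = ((cyc.getVert 0 : ↥(X ∪ Gam G X)) : V)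
    rw [hn, Walk.getVert_length, Walk.getVert_zero]
  have hfadj : ∀ k, k < n → G.Adj (f k) (f (k+1)) := fun k hk => cyc.adj_getVert_succ hk
  have hfmem : ∀ k, f k ∈ X ∪ Gam G X := fun k => (cyc.getVert k).2
  have hfinj : ∀ {j k}, 1 ≤ j → j ≤ n → 1 ≤ k → k ≤ n → f j = f k → j = k :=
    fun h1 h2 h3 h4 h =>
      Stmt4AuxW.cycle_getVert_inj hcyc h1 h2 h3 h4 (Subtype.coe_injective h)
  have hvarX : ∀ k, isVar (f k) → f k ∈ X := by
    intro k hk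
    rcases hfmem k with h | h
    · exact h
    · exact absurd hk (hnotvar _ h)
  let nxt : ℕ → ℕ := fun m => if m = n then 1 else m + 1
  have hnxt_le : ∀ m, 1 ≤ m → m ≤ n → 1 ≤ nxt m ∧ nxt m ≤ n := by
    intro m h1 h2
    by_cases hmn : m = n <;> simp only [nxt, hmn, if_true, if_false, if_pos, if_neg] <;> omega
  have hfnxt : ∀ m, 1 ≤ m → m ≤ n → G.Adj (f m) (f (nxt m)) := by
    intro m h1 h2
    by_cases hmn : m = n
    · subst hmn
      simp only [nxt, if_pos rfl]
      rw [hf0]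
      exact hfadj 0 (by omega)
    · simp only [nxt, if_neg hmn]
      exact hfadj m (by omega)
  have hfprev : ∀ m, 1 ≤ m → m ≤ n → G.Adj (f (m-1)) (f m) := by
    intro m h1 h2
    have h := hfadj (m-1) (by omega)
    rwa [Nat.sub_add_cancel h1] at h
  have nbrsNe : ∀ m, 1 ≤ m → m ≤ n → f (m-1) ≠ f (nxt m) := by
    intro m h1 h2 heq
    by_cases hm1 : m = 1
    · subst hm1
      rw [show nxt 1 = 2 by simp only [nxt]; rw [if_neg (by omega)]] at heq
      rw [show (1:ℕ) - 1 = 0 by rfl, ← hf0] at heq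
      have := hfinj (by omega) le_rfl (by omega) (by omega) heq
      omega
    · by_cases hmn : m = n
      · subst hmn
        rw [show nxt n = 1 by simp only [nxt, if_pos rfl]] at heq
        have := hfinj (j := n-1) (by omega) (by omega) le_rfl (by omega) heq
        omega
      · rw [show nxt m = m + 1 by simp only [nxt, if_neg hmn]] at heq
        have := hfinj (by omega) (by omega) (by omega) (by omega) heq
        omega
  have hcanon : ∀ m, m ≤ n → ∃ m', 1 ≤ m' ∧ m' ≤ n ∧ f m' = f m := by
    intro m hm
    by_cases h0 : m = 0
    · exact ⟨n, by omega, le_rfl, by rw [h0, hf0]⟩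
    · exact ⟨m, by omega, hm, rfl⟩
  -- the set of cycle indices carrying X-vertices, and its maximum position
  let K : Finset ℕ := (Finset.Icc 1 n).filter (fun k => f k ∈ X)
  have hKne : K.Nonempty := by
    rcases hfmem 1 with h | h
    · exact ⟨1, Finset.mem_filter.mpr ⟨Finset.mem_Icc.mpr ⟨le_rfl, by omega⟩, h⟩⟩
    · have hadj12 := hfadj 1 (by omega)
      have hv2 : isVar (f 2) := by
        by_contra hnv
        exact (hnotvar _ h) ((hbip (f 1) (f 2) hadj12).mpr hnv)
      exact ⟨2, Finset.mem_filter.mpr ⟨Finset.mem_Icc.mpr ⟨by omega, by omega⟩, hvarX 2 hv2⟩⟩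
  obtain ⟨kst, hkstK, hkmax⟩ := K.exists_max_image (fun k => posT (f k)) hKne
  obtain ⟨hkstI, hxstX⟩ := Finset.mem_filter.mp hkstK
  obtain ⟨hkst1, hkstn⟩ := Finset.mem_Icc.mp hkstI
  -- the two neighboring checks of f kst on the cycle
  have hxvar : isVar (f kst) := hXvar _ hxstX
  have hd1a : G.Adj (f (kst - 1)) (f kst) := hfprev kst hkst1 hkstn
  have hd2a : G.Adj (f kst) (f (nxt kst)) := hfnxt kst hkst1 hkstn
  have hd1nv : ¬ isVar (f (kst - 1)) := fun h => ((hbip _ _ hd1a).mp h) hxvar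
  have hd2nv : ¬ isVar (f (nxt kst)) := fun h => ((hbip _ _ hd2a.symm).mp h) hxvar
  have hd12 : f (kst - 1) ≠ f (nxt kst) := nbrsNe kst hkst1 hkstn
  -- canonical index m1 for the check f (kst - 1)
  obtain ⟨m1, hm11, hm1n, hm1f⟩ := hcanon (kst - 1) (by omega)
  have hnxtm1 : f (nxt m1) = f kst := by
    by_cases h : kst = 1
    · have hm1def : f m1 = f n := by rw [hm1f, h, ← hf0]
      have hm1n' : m1 = n := hfinj hm11 hm1n (by omega) le_rfl hm1def
      rw [hm1n']
      rw [show nxt n = 1 by simp only [nxt, if_pos rfl], h]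
    · have hm1def : m1 = kst - 1 := hfinj hm11 hm1n (by omega) (by omega) hm1f
      rw [hm1def, show nxt (kst - 1) = kst - 1 + 1 by
        simp only [nxt]; rw [if_neg (by omega)], Nat.sub_add_cancel hkst1]
  -- the far neighbor of the check f (kst - 1)
  have hy1a : G.Adj (f (m1 - 1)) (f m1) := hfprev m1 hm11 hm1n
  have hy1x : f (m1 - 1) ≠ f kst := by
    have := nbrsNe m1 hm11 hm1n
    rwa [hnxtm1] at this
  have hy1var : isVar (f (m1 - 1)) := by
    by_contra hnv
    have := (hbip _ _ hy1a).mpr (by rw [hm1f]; exact hd1nv)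
    exact hnv this
  have hy1X : f (m1 - 1) ∈ X := hvarX _ hy1var
  -- canonical index m2 for the check f (nxt kst)
  have hm21 : 1 ≤ nxt kst ∧ nxt kst ≤ n := hnxt_le kst hkst1 hkstn
  have hprevm2 : f (nxt kst - 1) = f kst := by
    by_cases h : kst = n
    · rw [show nxt kst = 1 by simp only [nxt]; rw [if_pos h]]
      rw [show (1:ℕ) - 1 = 0 by rfl, ← hf0, h]
    · rw [show nxt kst = kst + 1 by simp only [nxt]; rw [if_neg h]]
      simp
  have hy2a : G.Adj (f (nxt kst)) (f (nxt (nxt kst))) := hfnxt _ hm21.1 hm21.2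
  have hy2x : f (nxt (nxt kst)) ≠ f kst := by
    have := nbrsNe (nxt kst) hm21.1 hm21.2
    rw [hprevm2] at this
    exact this.symm
  have hy2var : isVar (f (nxt (nxt kst))) := by
    by_contra hnv
    exact hd2nv ((hbip _ _ hy2a).mpr hnv)
  have hy2X : f (nxt (nxt kst)) ∈ X := hvarX _ hy2var
  -- maximality of the position of f kst
  have hmaxle : ∀ m, m ≤ n → f m ∈ X → posT (f m) ≤ posT (f kst) := by
    intro m hm hmX
    obtain ⟨m', h1', h2', heq'⟩ := hcanon m hm
    have : m' ∈ K := Finset.mem_filter.mpr ⟨Finset.mem_Icc.mpr ⟨h1', h2'⟩, by rw [heq']; exact hmX⟩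
    have h := hkmax m' this
    rwa [heq'] at h
  have hy1le : posT (f (m1 - 1)) ≤ posT (f kst) := hmaxle (m1 - 1) (by omega) hy1X
  have hy2le : posT (f (nxt (nxt kst))) ≤ posT (f kst) :=
    hmaxle (nxt (nxt kst)) (hnxt_le _ hm21.1 hm21.2).2 hy2X
  -- both far neighbors sit at position (posT (f kst)) - 1
  obtain ⟨hpkL, hpkE⟩ := hposT (f kst) hxstX
  obtain ⟨hp1L, hp1E⟩ := hposT (f (m1 - 1)) hy1X
  obtain ⟨hp2L, hp2E⟩ := hposT (f (nxt (nxt kst))) hy2X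
  have hp1lt : posT (f (m1 - 1)) < posT (f kst) := by
    rcases Nat.lt_or_ge (posT (f (m1 - 1))) (posT (f kst)) with h | h
    · exact h
    · exfalso
      have heq : posT (f (m1 - 1)) = posT (f kst) := by omega
      exact hy1x (by rw [← hp1E, ← hpkE, heq])
  have hp2lt : posT (f (nxt (nxt kst))) < posT (f kst) := by
    rcases Nat.lt_or_ge (posT (f (nxt (nxt kst)))) (posT (f kst)) with h | h
    · exact h
    · exfalso
      have heq : posT (f (nxt (nxt kst))) = posT (f kst) := by omega
      exact hy2x (by rw [← hp2E, ← hpkE, heq])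
  -- the check f (kst - 1) joins positions posT y1 < posT x*, so they are consecutive
  have hc1 : posT (f kst) = posT (f (m1 - 1)) + 1 := by
    apply consec _ _ (f (kst - 1)) hp1lt hpkL
    · rw [hp1E]
      rw [hm1f] at hy1a
      exact hy1a
    · rw [hpkE]
      exact hd1a.symm
  have hc2 : posT (f kst) = posT (f (nxt (nxt kst))) + 1 := by
    apply consec _ _ (f (nxt kst)) hp2lt hpkL
    · rw [hp2E]
      exact hy2a.symm
    · rw [hpkE]
      exact hd2a
  have hy12 : f (m1 - 1) = f (nxt (nxt kst)) := by
    have hpp : posT (f (m1 - 1)) = posT (f (nxt (nxt kst))) := by omega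
    rw [← hp1E, ← hp2E, hpp]
  -- two distinct checks join f kst and the common far neighbor: contradiction
  exact NoPar (f kst) (f (m1 - 1)) (f (kst - 1)) (f (nxt kst)) hxstX hy1X
    (Ne.symm hy1x) hd12 hd1a.symm (by rw [hm1f] at hy1a; exact hy1a) hd2a
    (by rw [hy12]; exact hy2a.symm)
end

section
/- Let S ∈ T be an elementary trapping set of size a, suppose T contains no elementary trapping set of size a+1 but contains an elementary trapping set of size a+2, and suppose the girth of G is greater than 4. Let S' ∈ T be an elementary trapping set of size a+2 with S ⊆ S'. Then S' \ S consists of exactly two variable nodes v and w; neither v nor w is adjacent to any check node of Γ_e(S); v and w are each adjacent to exactly one check node of Γ_o(S), and these two check nodes are distinct; v and w have a common neighboring check node not in Γ(S); and G(S' \ S) contains no cycle. -/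
open SimpleGraph

namespace Stmt6Aux
open scoped Classical
variable {V : Type} [Fintype V] {G : SimpleGraph V}

variable {V : Type} [Fintype V] {G : SimpleGraph V}

lemma mem_Gam_iff {S : Set V} {c : V} : c ∈ Gam G S ↔ 0 < degIn G S c := by
  constructor
  · rintro ⟨v, hv, hadj⟩
    exact (Set.ncard_pos (Set.toFinite _)).mpr ⟨v, hv, hadj.symm⟩
  · intro h
    obtain ⟨v, hv, hadj⟩ := (Set.ncard_pos (Set.toFinite _)).mp h
    exact ⟨v, hv, hadj.symm⟩

lemma degIn_mono {S S' : Set V} (h : S ⊆ S') (c : V) : degIn G S c ≤ degIn G S' c :=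
  Set.ncard_le_ncard (fun x hx => ⟨h hx.1, hx.2⟩) (Set.toFinite _)

lemma degIn_insert {S : Set V} {v c : V} (hv : v ∉ S) :
    degIn G (insert v S) c = degIn G S c + if G.Adj c v then 1 else 0 := by
  unfold degIn
  by_cases h : G.Adj c v
  · have he : {x | x ∈ insert v S ∧ G.Adj c x} = insert v {x | x ∈ S ∧ G.Adj c x} := by
      ext x; simp only [Set.mem_insert_iff, Set.mem_setOf_eq]
      constructor
      · rintro ⟨(rfl | hx), ha⟩
        · exact Or.inl rfl
        · exact Or.inr ⟨hx, ha⟩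
      · rintro (rfl | ⟨hx, ha⟩)
        · exact ⟨Or.inl rfl, h⟩
        · exact ⟨Or.inr hx, ha⟩
    rw [he, Set.ncard_insert_of_notMem (fun hc => hv hc.1) (Set.toFinite _)]
    simp [h]
  · have he : {x | x ∈ insert v S ∧ G.Adj c x} = {x | x ∈ S ∧ G.Adj c x} := by
      ext x; simp only [Set.mem_insert_iff, Set.mem_setOf_eq]
      constructor
      · rintro ⟨(rfl | hx), ha⟩
        · exact absurd ha h
        · exact ⟨hx, ha⟩
      · rintro ⟨hx, ha⟩; exact ⟨Or.inr hx, ha⟩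
    rw [he]; simp [h]

lemma three_le_degIn {S : Set V} {c x y z : V} (hx : x ∈ S) (hy : y ∈ S) (hz : z ∈ S)
    (hxy : x ≠ y) (hxz : x ≠ z) (hyz : y ≠ z)
    (ax : G.Adj c x) (ay : G.Adj c y) (az : G.Adj c z) : 3 ≤ degIn G S c := by
  have hsub : ({x, y, z} : Set V) ⊆ {u | u ∈ S ∧ G.Adj c u} := by
    rintro u (rfl | rfl | rfl)
    · exact ⟨hx, ax⟩
    · exact ⟨hy, ay⟩
    · exact ⟨hz, az⟩
  have h3 : ({x, y, z} : Set V).ncard = 3 := by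
    rw [Set.ncard_insert_of_notMem (by simp [hxy, hxz]) (Set.toFinite _),
      Set.ncard_pair hyz]
  calc 3 = ({x, y, z} : Set V).ncard := h3.symm
    _ ≤ _ := Set.ncard_le_ncard hsub (Set.toFinite _)

lemma exists_other {S' : Set V} {c v : V} (h2 : degIn G S' c = 2) (hv : v ∈ S')
    (ha : G.Adj c v) :
    ∃ u, u ∈ S' ∧ u ≠ v ∧ G.Adj c u ∧ ∀ z ∈ S', G.Adj c z → z = v ∨ z = u := by
  obtain ⟨a, b, hab, hT⟩ := Set.ncard_eq_two.mp h2
  have hvT : v ∈ {x | x ∈ S' ∧ G.Adj c x} := ⟨hv, ha⟩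
  rw [hT] at hvT
  rcases hvT with rfl | rfl
  · have hb : b ∈ ({v, b} : Set V) := by simp
    rw [← hT] at hb
    exact ⟨b, hb.1, fun h => hab h.symm, hb.2, fun z hz haz => by
      have : z ∈ ({v, b} : Set V) := hT ▸ (⟨hz, haz⟩ : z ∈ {x | x ∈ S' ∧ G.Adj c x})
      simpa using this⟩
  · have hb : a ∈ ({a, v} : Set V) := by simp
    rw [← hT] at hb
    exact ⟨a, hb.1, hab.symm ∘ Eq.symm, hb.2, fun z hz haz => by
      have : z ∈ ({a, v} : Set V) := hT ▸ (⟨hz, haz⟩ : z ∈ {x | x ∈ S' ∧ G.Adj c x})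
      have := this; simp at this; tauto⟩



lemma cycle_length_ge (hgirth : (4 : ℕ∞) < G.girth) {a : V} (w : G.Walk a a)
    (hw : w.IsCycle) : 5 ≤ w.length := by
  have h1 : G.egirth ≤ w.length := by
    rw [egirth]
    refine le_trans (iInf_le _ a) (le_trans (iInf_le _ w) (iInf_le _ hw))
  have h2 : (4 : ℕ) < G.girth := by exact_mod_cast hgirth
  have h3 : G.egirth ≠ ⊤ := by
    intro h
    exact (SimpleGraph.egirth_eq_top.mp h) _ hw
  have h4 : G.egirth = (G.girth : ℕ∞) := by
    rw [girth, ENat.coe_toNat h3]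
  rw [h4] at h1
  exact_mod_cast le_trans (by exact_mod_cast h2 : (5 : ℕ∞) ≤ (G.girth : ℕ∞)) h1

lemma no_4cycle (hgirth : (4 : ℕ∞) < G.girth) {v w c1 c2 : V} (hc : c1 ≠ c2) (hvw : v ≠ w)
    (h1 : G.Adj v c1) (h2 : G.Adj w c1) (h3 : G.Adj w c2) (h4 : G.Adj v c2) : False := by
  let p : G.Walk v v := .cons h1 (.cons h2.symm (.cons h3 (.cons h4.symm .nil)))
  have hcyc : p.IsCycle := by
    rw [Walk.isCycle_def]
    refine ⟨?_, by simp [p], ?_⟩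
    · rw [Walk.isTrail_def]
      simp only [p, Walk.edges_cons, Walk.edges_nil, List.nodup_cons, List.mem_cons,
        List.not_mem_nil, or_false, List.nodup_nil, and_true]
      have n1 := h1.ne
      have n2 := h2.ne
      have n3 := h3.ne
      have n4 := h4.ne
      refine ⟨?_, ?_, ?_⟩ <;> simp [Sym2.eq_iff] <;> tauto
    · simp only [p, Walk.support_cons, Walk.support_nil, List.tail_cons]
      have n1 := h1.ne
      have n2 := h2.ne
      have n3 := h3.ne
      have n4 := h4.ne
      simp [List.nodup_cons]
      refine ⟨⟨?_, ?_, ?_⟩, ⟨?_, ?_⟩, ?_⟩ <;> tauto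
  have := cycle_length_ge hgirth p hcyc
  simp [p] at this

lemma walk_parity (hbip : Bipartite G isVar) {x y : V} (p : G.Walk x y) :
    Even p.length ↔ (isVar x ↔ isVar y) := by
  induction p with
  | nil => simp
  | @cons x b y h q ih =>
    have hf := hbip _ _ h
    rw [Walk.length_cons, Nat.even_add_one, ih]
    tauto

lemma getVert_class (hbip : Bipartite G isVar) {x y : V} (p : G.Walk x y) :
    ∀ i, i ≤ p.length → ((isVar (p.getVert i) ↔ isVar x) ↔ Even i) := by
  intro i
  induction i with
  | zero => simp [Walk.getVert_zero]
  | succ i ih =>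
    intro hi
    have hlt : i < p.length := by omega
    have hadj := p.adj_getVert_succ hlt
    have hf := hbip _ _ hadj
    rw [Nat.even_add_one, ← ih (by omega)]
    tauto

lemma support_eq_map {x y : V} (p : G.Walk x y) :
    p.support = (List.range (p.length + 1)).map p.getVert := by
  induction p with
  | nil =>
    show _ = List.map _ (List.range 1)
    simp [List.range_succ]
  | @cons x b y h q ih =>
    rw [Walk.support_cons, Walk.length_cons, ih]
    conv_rhs => rw [List.range_succ_eq_map, List.map_cons, List.map_map]
    congr 1

lemma cycle_getVert_inj {x : V} {q : G.Walk x x} (hq : q.support.tail.Nodup) {i j : ℕ}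
    (hi1 : 1 ≤ i) (hin : i ≤ q.length) (hj1 : 1 ≤ j) (hjn : j ≤ q.length)
    (h : q.getVert i = q.getVert j) : i = j := by
  have hs : q.support.tail = (List.range q.length).map (fun k => q.getVert (k + 1)) := by
    rw [support_eq_map, List.range_succ_eq_map]
    simp [List.map_map, Function.comp]
  rw [hs] at hq
  have hlen : ((List.range q.length).map (fun k => q.getVert (k + 1))).length = q.length := by
    simp
  have hi' : i - 1 < q.length := by omega
  have hj' : j - 1 < q.length := by omega
  have := hq.getElem_inj_iff (i := i - 1) (j := j - 1)
    (hi := by simpa using hi') (hj := by simpa using hj')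
  simp only [List.getElem_map, List.getElem_range] at this
  have heq : q.getVert (i - 1 + 1) = q.getVert (j - 1 + 1) := by
    have e1 : i - 1 + 1 = i := by omega
    have e2 : j - 1 + 1 = j := by omega
    rw [e1, e2]; exact h
  have := this.mp heq
  omega


lemma Gam_mono {S S' : Set V} (h : S ⊆ S') : Gam G S ⊆ Gam G S' := by
  rintro c ⟨v, hv, ha⟩; exact ⟨v, h hv, ha⟩

lemma connected_insert {S : Set V} (hconn : (G.induce (S ∪ Gam G S)).Connected)
    {u c1 : V} (hc1 : c1 ∈ Gam G S) (ha1 : G.Adj u c1) :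
    (G.induce (insert u S ∪ Gam G (insert u S))).Connected := by
  set A : Set V := S ∪ Gam G S with hA
  set A' : Set V := insert u S ∪ Gam G (insert u S) with hA'
  have hAA' : A ⊆ A' := by
    rintro x (hx | hx)
    · exact Or.inl (Or.inr hx)
    · exact Or.inr (Gam_mono (Set.subset_insert _ _) hx)
  have huA' : u ∈ A' := Or.inl (Or.inl rfl)
  have hc1A : c1 ∈ A := Or.inr hc1
  have hc1A' : c1 ∈ A' := hAA' hc1A
  -- reachability of every vertex to c1
  have hadj_c1u : (G.induce A').Adj ⟨u, huA'⟩ ⟨c1, hc1A'⟩ := by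
    simp only [comap_adj, Function.Embedding.coe_subtype]
    exact ha1
  have key : ∀ x : A', (G.induce A').Reachable x ⟨c1, hc1A'⟩ := by
    rintro ⟨x, hx⟩
    by_cases hxA : x ∈ A
    · have hr : (G.induce A).Reachable ⟨x, hxA⟩ ⟨c1, hc1A⟩ := hconn.preconnected _ _
      have hmap := hr.map (induceHomOfLE G hAA').toHom
      exact hmap
    · rcases hx with (hx | hx) | hx
      · subst hx
        exact hadj_c1u.reachable
      · exact absurd (Or.inl hx) hxA
      · obtain ⟨y, hy, hya⟩ := hx
        rcases hy with rfl | hy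
        · have hadj : (G.induce A').Adj ⟨x, Or.inr ⟨y, Or.inl rfl, hya⟩⟩ ⟨y, huA'⟩ := by
            simp only [comap_adj, Function.Embedding.coe_subtype]
            exact hya.symm
          exact hadj.reachable.trans hadj_c1u.reachable
        · exact absurd (Or.inr ⟨y, hy, hya⟩) hxA
  rw [connected_iff]
  exact ⟨fun x y => (key x).trans (key y).symm, ⟨⟨c1, hc1A'⟩⟩⟩


lemma no_two_odd {isVar : V → Prop} {S : Set V} {a : ℕ}
    (hSL : S ⊆ {v | isVar v}) (hST : InT G S) (hSe : IsElem G S) (hSa : S.ncard = a)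
    (hno1 : ∀ U ⊆ {v | isVar v}, InT G U → IsElem G U → U.ncard ≠ a + 1)
    {u : V} (hu : isVar u) (huS : u ∉ S)
    (huE : ∀ c ∈ GamE G S, ¬ G.Adj u c)
    {c1 c2 : V} (hc1 : c1 ∈ GamO G S) (hc2 : c2 ∈ GamO G S) (hne : c1 ≠ c2)
    (ha1 : G.Adj u c1) (ha2 : G.Adj u c2) : False := by
  set U : Set V := insert u S with hU
  -- degrees of odd checks are 1
  have hodd1 : ∀ c ∈ GamO G S, degIn G S c = 1 := by
    rintro c ⟨hcG, hodd⟩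
    rcases hSe c hcG with h | h
    · exact h
    · rw [h] at hodd; exact absurd hodd (by decide)
  -- key degree computation in U
  have hdegU : ∀ c, degIn G U c = degIn G S c + if G.Adj c u then 1 else 0 :=
    fun c => degIn_insert huS
  -- Gam U membership
  have hGamU : ∀ c, c ∈ Gam G U → c ∈ Gam G S ∨ G.Adj u c := by
    rintro c ⟨y, hy, hya⟩
    rcases hy with rfl | hy
    · exact Or.inr hya
    · exact Or.inl ⟨y, hy, hya⟩
  -- elementary
  have hUe : IsElem G U := by
    intro c hcU
    rw [hdegU c]
    by_cases hcu : G.Adj c u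
    · simp only [hcu, if_true]
      by_cases hcS : c ∈ Gam G S
      · rcases hSe c hcS with h | h
        · rw [h]; right; rfl
        · exfalso; exact huE c ⟨hcS, h ▸ even_two⟩ hcu.symm
      · have : degIn G S c = 0 := by
          by_contra h
          exact hcS (mem_Gam_iff.mpr (Nat.pos_of_ne_zero h))
        rw [this]; left; rfl
    · simp only [hcu, if_false, add_zero]
      rcases hGamU c hcU with hcS | hadj
      · exact hSe c hcS
      · exact absurd hadj.symm hcu
  -- GamE S ⊆ GamE U
  have hEsub : GamE G S ⊆ GamE G U := by
    rintro c ⟨hcG, heven⟩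
    have hnadj : ¬ G.Adj c u := fun h => huE c ⟨hcG, heven⟩ h.symm
    refine ⟨Gam_mono (Set.subset_insert _ _) hcG, ?_⟩
    rw [hdegU c]; simpa [hnadj] using heven
  -- c1, c2 ∈ GamE U
  have hcE : ∀ c ∈ GamO G S, G.Adj u c → c ∈ GamE G U := by
    intro c hc hadj
    refine ⟨⟨u, Or.inl rfl, hadj⟩, ?_⟩
    rw [hdegU c, hodd1 c hc]
    simp [hadj.symm]
  -- InT U
  have hUT : InT G U := by
    constructor
    · exact connected_insert hST.1 hc1.1 ha1
    · intro x hx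
      rcases hx with rfl | hx
      · -- x = u : c1 c2 work
        have hsub : ({c1, c2} : Set V) ⊆ {c | c ∈ GamE G U ∧ G.Adj x c} := by
          rintro c (rfl | rfl)
          · exact ⟨hcE c hc1 ha1, ha1⟩
          · exact ⟨hcE c hc2 ha2, ha2⟩
        calc 2 = ({c1, c2} : Set V).ncard := (Set.ncard_pair hne).symm
          _ ≤ _ := Set.ncard_le_ncard hsub (Set.toFinite _)
      · refine le_trans (hST.2 x hx) (Set.ncard_le_ncard ?_ (Set.toFinite _))
        rintro c ⟨hcE', hadj⟩
        exact ⟨hEsub hcE', hadj⟩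
  -- cardinality
  have hUcard : U.ncard = a + 1 := by
    rw [hU, Set.ncard_insert_of_notMem huS (Set.toFinite _), hSa]
  exact hno1 U (by rintro x (rfl | hx); exact hu; exact hSL hx) hUT hUe hUcard


lemma acyclic_pair (hbip : Bipartite G isVar) (hgirth : (4 : ℕ∞) < G.girth) {v w : V}
    (hv : isVar v) (hw : isVar w) :
    (G.induce (({v, w} : Set V) ∪ Gam G {v, w})).IsAcyclic := by
  set B : Set V := ({v, w} : Set V) ∪ Gam G {v, w} with hB
  intro x p hp
  let f : G.induce B ↪g G := Embedding.induce B
  have hcoe : ∀ s : B, f.toHom s = s.1 := fun s => by rfl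
  have hfx : f.toHom x = x.1 := hcoe x
  set q : G.Walk x.1 x.1 := p.map f.toHom |>.copy hfx hfx with hq'
  have hq : q.IsCycle := (Walk.isCycle_copy _ _).mpr (hp.map f.injective)
  have hlen : q.length = p.length := by simp [hq']
  have h5 : 5 ≤ q.length := cycle_length_ge hgirth _ hq
  have heven : Even q.length := (walk_parity hbip q).mpr Iff.rfl
  have h6 : 6 ≤ q.length := by obtain ⟨k, hk⟩ := heven; omega
  have htail : q.support.tail.Nodup := ((Walk.isCycle_def _).mp hq).2.2
  have hmem : ∀ i, i ≤ q.length → q.getVert i ∈ B := by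
    intro i hi
    have h1 : q.getVert i ∈ q.support := Walk.mem_support_iff_exists_getVert.mpr ⟨i, rfl, hi⟩
    rw [hq', Walk.support_copy, Walk.support_map] at h1
    obtain ⟨s, _, hseq⟩ := List.mem_map.mp h1
    show ((Walk.map f.toHom p).copy hfx hfx).getVert i ∈ B
    rw [← hseq, hcoe s]
    exact s.2
  have hvarB : ∀ b ∈ B, isVar b → b = v ∨ b = w := by
    rintro b (hb | hb) hvar
    · simpa using hb
    · obtain ⟨y, hy, hya⟩ := hb
      have : isVar y := by rcases hy with rfl | hy; exact hv; simp at hy; subst hy; exact hw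
      exact absurd hvar ((hbip y b hya).mp this)
  have hcl := getVert_class hbip q
  have main : ∀ i1 i2 i3 : ℕ, 1 ≤ i1 → i1 < i2 → i2 < i3 → i3 ≤ q.length →
      (q.getVert i1 = v ∨ q.getVert i1 = w) →
      (q.getVert i2 = v ∨ q.getVert i2 = w) →
      (q.getVert i3 = v ∨ q.getVert i3 = w) → False := by
    intro i1 i2 i3 ha hb hc hd h1 h2 h3
    rcases h1 with e1 | e1 <;> rcases h2 with e2 | e2 <;> rcases h3 with e3 | e3
    · have := cycle_getVert_inj htail ha (by omega) (by omega) (by omega) (e1.trans e2.symm); omega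
    · have := cycle_getVert_inj htail ha (by omega) (by omega) (by omega) (e1.trans e2.symm); omega
    · have := cycle_getVert_inj htail ha (by omega) (by omega) hd (e1.trans e3.symm); omega
    · have := cycle_getVert_inj htail (by omega) (by omega) (by omega) hd (e2.trans e3.symm); omega
    · have := cycle_getVert_inj htail (by omega) (by omega) (by omega) hd (e2.trans e3.symm); omega
    · have := cycle_getVert_inj htail ha (by omega) (by omega) hd (e1.trans e3.symm); omega
    · have := cycle_getVert_inj htail ha (by omega) (by omega) (by omega) (e1.trans e2.symm); omega
    · have := cycle_getVert_inj htail ha (by omega) (by omega) (by omega) (e1.trans e2.symm); omega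
  have hx0 : q.getVert 0 = x.1 := Walk.getVert_zero q
  by_cases hP : isVar x.1
  · -- variable nodes at even positions 2, 4, 6
    have hvar : ∀ i, i ≤ q.length → Even i → (q.getVert i = v ∨ q.getVert i = w) := by
      intro i hi he
      have := (hcl i hi).mpr he
      exact hvarB _ (hmem i hi) (this.mpr hP)
    exact main 2 4 6 (by omega) (by omega) (by omega) h6
      (hvar 2 (by omega) (by decide)) (hvar 4 (by omega) (by decide))
      (hvar 6 (by omega) (by decide))
  · -- variable nodes at odd positions 1, 3, 5
    have hvar : ∀ i, i ≤ q.length → ¬ Even i → (q.getVert i = v ∨ q.getVert i = w) := by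
      intro i hi he
      have h1 : ¬ (isVar (q.getVert i) ↔ isVar x.1) := fun h => he ((hcl i hi).mp h)
      have h2 : isVar (q.getVert i) := by tauto
      exact hvarB _ (hmem i hi) h2
    exact main 1 3 5 (by omega) (by omega) (by omega) (by omega)
      (hvar 1 (by omega) (by decide)) (hvar 3 (by omega) (by decide))
      (hvar 5 (by omega) (by decide))


lemma side (hgirth : (4 : ℕ∞) < G.girth) {S S' : Set V} {v w : V}
    (hS'e : IsElem G S') (h2adj : 2 ≤ adjCount G (GamE G S') v)
    (hS'eq : S' = insert v (insert w S)) (hvw : v ≠ w) (hvS : v ∉ S) (hwS : w ∉ S)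
    (ham : ∀ c c', c ∈ GamO G S → G.Adj v c → c' ∈ GamO G S → G.Adj v c' → c = c') :
    (∃ c, c ∈ GamO G S ∧ G.Adj v c) ∧ (∃ c, c ∉ Gam G S ∧ G.Adj v c ∧ G.Adj w c) := by
  have hvS' : v ∈ S' := by rw [hS'eq]; exact Or.inl rfl
  have step : ∀ d, d ∈ GamE G S' → G.Adj v d →
      (d ∈ GamO G S ∧ G.Adj v d) ∨ (d ∉ Gam G S ∧ G.Adj v d ∧ G.Adj w d) := by
    rintro d ⟨hdG, hdev⟩ hadj
    have h2 : degIn G S' d = 2 := by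
      rcases hS'e d hdG with h | h
      · rw [h] at hdev; exact absurd hdev (by decide)
      · exact h
    obtain ⟨z, hzS', hzv, hdz, hchar⟩ := exists_other h2 hvS' hadj.symm
    have hz : z = w ∨ z ∈ S := by
      rw [hS'eq] at hzS'
      rcases hzS' with rfl | rfl | hz
      · exact absurd rfl hzv
      · exact Or.inl rfl
      · exact Or.inr hz
    rcases hz with rfl | hzS
    · right
      refine ⟨?_, hadj, hdz.symm⟩
      rintro ⟨y, hy, hya⟩
      have hyS' : y ∈ S' := by rw [hS'eq]; exact Or.inr (Or.inr hy)
      rcases hchar y hyS' hya.symm with rfl | rfl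
      · exact hvS hy
      · exact hwS hy
    · left
      refine ⟨⟨⟨z, hzS, hdz.symm⟩, ?_⟩, hadj⟩
      have hsing : {x | x ∈ S ∧ G.Adj d x} = {z} := by
        ext y
        simp only [Set.mem_setOf_eq, Set.mem_singleton_iff]
        constructor
        · rintro ⟨hyS, hya⟩
          have hyS' : y ∈ S' := by rw [hS'eq]; exact Or.inr (Or.inr hyS)
          rcases hchar y hyS' hya with rfl | rfl
          · exact absurd hyS hvS
          · rfl
        · rintro rfl; exact ⟨hzS, hdz⟩
      unfold degIn
      rw [hsing, Set.ncard_singleton]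
      exact ⟨0, rfl⟩
  have h1lt : 1 < {c | c ∈ GamE G S' ∧ G.Adj v c}.ncard :=
    lt_of_lt_of_le one_lt_two h2adj
  obtain ⟨d1, d2, hd1, hd2, hne⟩ := (Set.one_lt_ncard_iff (Set.toFinite _)).mp h1lt
  rcases step d1 hd1.1 hd1.2 with s1 | s1 <;> rcases step d2 hd2.1 hd2.2 with s2 | s2
  · exact absurd (ham _ _ s1.1 s1.2 s2.1 s2.2) hne
  · exact ⟨⟨d1, s1⟩, ⟨d2, s2⟩⟩
  · exact ⟨⟨d2, s2⟩, ⟨d1, s1⟩⟩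
  · exact (no_4cycle hgirth hne hvw s1.2.1 s1.2.2 s2.2.2 s2.2.1).elim

end Stmt6Aux

open Stmt6Aux in
/-- Let `S ∈ 𝒯` be an elementary trapping set of size `a`, suppose `𝒯`
contains no elementary trapping set of size `a+1` but contains one of size `a+2`, and
suppose the girth of `G` is greater than 4. If `S' ∈ 𝒯` is an elementary trapping set of
size `a+2` containing `S`, then `S' \ S` consists of exactly two variable nodes `v ≠ w`,
neither adjacent to any node of `Γ_e(S)`, each adjacent to exactly one node of `Γ_o(S)`
(distinct for `v` and `w`), having a common check-node neighbor outside `Γ(S)`, and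
`G(S' \ S)` contains no cycle. -/
theorem stmt6 {V : Type} [Fintype V] (G : SimpleGraph V) (isVar : V → Prop)
    (hbip : Bipartite G isVar) (hdeg2 : ∀ v : V, 2 ≤ degG G v)
    (hgirth : (4 : ℕ∞) < G.girth)
    (S S' : Set V) (a : ℕ)
    (hSL : S ⊆ {v | isVar v}) (hS'L : S' ⊆ {v | isVar v})
    (hST : InT G S) (hS'T : InT G S')
    (hSe : IsElem G S) (hS'e : IsElem G S')
    (hSa : S.ncard = a)
    (hno1 : ∀ U ⊆ {v | isVar v}, InT G U → IsElem G U → U.ncard ≠ a + 1)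
    (hex2 : ∃ U ⊆ {v | isVar v}, InT G U ∧ IsElem G U ∧ U.ncard = a + 2)
    (hsub : S ⊆ S') (hS'a : S'.ncard = a + 2) :
    ∃ v w : V, v ≠ w ∧ S' \ S = {v, w} ∧
      (∀ u ∈ S' \ S, ∀ c ∈ GamE G S, ¬ G.Adj u c) ∧
      {c | c ∈ GamO G S ∧ G.Adj v c}.ncard = 1 ∧
      {c | c ∈ GamO G S ∧ G.Adj w c}.ncard = 1 ∧
      (∀ c c' : V, c ∈ GamO G S → G.Adj v c → c' ∈ GamO G S → G.Adj w c' → c ≠ c') ∧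
      (∃ c : V, c ∉ Gam G S ∧ G.Adj v c ∧ G.Adj w c) ∧
      (G.induce ((S' \ S) ∪ Gam G (S' \ S))).IsAcyclic := by
    classical
  have hdiff2 : (S' \ S).ncard = 2 := by
    rw [Set.ncard_diff hsub (Set.toFinite _), hS'a, hSa]
    omega
  obtain ⟨v, w, hvw, hset⟩ := Set.ncard_eq_two.mp hdiff2
  have hvd : v ∈ S' \ S := by rw [hset]; exact Or.inl rfl
  have hwd : w ∈ S' \ S := by rw [hset]; exact Or.inr rfl
  have hvS' := hvd.1
  have hvS := hvd.2
  have hwS' := hwd.1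
  have hwS := hwd.2
  have hvvar : isVar v := hS'L hvS'
  have hwvar : isVar w := hS'L hwS'
  have hS'eqv : S' = insert v (insert w S) := by
    ext x
    simp only [Set.mem_insert_iff]
    constructor
    · intro hx
      by_cases hxS : x ∈ S
      · exact Or.inr (Or.inr hxS)
      · have hxd : x ∈ S' \ S := ⟨hx, hxS⟩
        rw [hset] at hxd
        rcases hxd with rfl | rfl
        · exact Or.inl rfl
        · exact Or.inr (Or.inl rfl)
    · rintro (rfl | rfl | hx)
      · exact hvS'
      · exact hwS'
      · exact hsub hx
  have hS'eqw : S' = insert w (insert v S) := by rw [hS'eqv, Set.insert_comm]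
  have hnotE : ∀ u ∈ S' \ S, ∀ c ∈ GamE G S, ¬ G.Adj u c := by
    rintro u hu c ⟨hcG, hcev⟩ hadj
    have h2 : degIn G S c = 2 := by
      rcases hSe c hcG with h | h
      · rw [h] at hcev; exact absurd hcev (by decide)
      · exact h
    obtain ⟨x, y, hxy, hT⟩ := Set.ncard_eq_two.mp h2
    have hx : x ∈ {z | z ∈ S ∧ G.Adj c z} := by rw [hT]; exact Or.inl rfl
    have hy : y ∈ {z | z ∈ S ∧ G.Adj c z} := by rw [hT]; exact Or.inr rfl
    have h3 : 3 ≤ degIn G S' c :=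
      three_le_degIn (hsub hx.1) (hsub hy.1) hu.1 hxy
        (fun h => hu.2 (h ▸ hx.1)) (fun h => hu.2 (h ▸ hy.1))
        hx.2 hy.2 hadj.symm
    have hcG' : c ∈ Gam G S' := mem_Gam_iff.mpr (by omega)
    rcases hS'e c hcG' with h | h <;> omega
  have hamv : ∀ c c', c ∈ GamO G S → G.Adj v c → c' ∈ GamO G S → G.Adj v c' → c = c' := by
    intro c c' hc hac hc' hac'
    by_contra hne
    exact no_two_odd hSL hST hSe hSa hno1 hvvar hvS (hnotE v hvd) hc hc' hne hac hac'
  have hamw : ∀ c c', c ∈ GamO G S → G.Adj w c → c' ∈ GamO G S → G.Adj w c' → c = c' := by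
    intro c c' hc hac hc' hac'
    by_contra hne
    exact no_two_odd hSL hST hSe hSa hno1 hwvar hwS (hnotE w hwd) hc hc' hne hac hac'
  obtain ⟨⟨cv, hcv, hacv⟩, cc, hccG, hccv, hccw⟩ :=
    side hgirth hS'e (hS'T.2 v hvS') hS'eqv hvw hvS hwS hamv
  obtain ⟨⟨cw, hcw, hacw⟩, -⟩ :=
    side hgirth hS'e (hS'T.2 w hwS') hS'eqw hvw.symm hwS hvS hamw
  have hcountv : {c | c ∈ GamO G S ∧ G.Adj v c}.ncard = 1 :=
    Set.ncard_eq_one.mpr ⟨cv, Set.eq_singleton_iff_unique_mem.mpr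
      ⟨⟨hcv, hacv⟩, fun x hx => hamv x cv hx.1 hx.2 hcv hacv⟩⟩
  have hcountw : {c | c ∈ GamO G S ∧ G.Adj w c}.ncard = 1 :=
    Set.ncard_eq_one.mpr ⟨cw, Set.eq_singleton_iff_unique_mem.mpr
      ⟨⟨hcw, hacw⟩, fun x hx => hamw x cw hx.1 hx.2 hcw hacw⟩⟩
  have hdist : ∀ c c' : V, c ∈ GamO G S → G.Adj v c → c' ∈ GamO G S → G.Adj w c' → c ≠ c' := by
    rintro c c' hc hac hc' hac' rfl
    have h1 : degIn G S c = 1 := by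
      rcases hSe c hc.1 with h | h
      · exact h
      · rcases hc.2 with ⟨k, hk⟩; omega
    obtain ⟨x, hx⟩ := Set.ncard_eq_one.mp h1
    have hxm : x ∈ {z | z ∈ S ∧ G.Adj c z} := by rw [hx]; exact rfl
    have h3 : 3 ≤ degIn G S' c :=
      three_le_degIn (hsub hxm.1) hvS' hwS'
        (fun h => hvS (h ▸ hxm.1)) (fun h => hwS (h ▸ hxm.1)) hvw
        hxm.2 hac.symm hac'.symm
    have hcG' : c ∈ Gam G S' := mem_Gam_iff.mpr (by omega)
    rcases hS'e c hcG' with h | h <;> omega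
  refine ⟨v, w, hvw, hset, hnotE, hcountv, hcountw, hdist, ⟨cc, hccG, hccv, hccw⟩, ?_⟩
  rw [hset]
  exact acyclic_pair hbip hgirth hvvar hwvar
end

section
/- Let G = (L ∪ R, E) be a Tanner graph with girth g > 4. If an (a,b) trapping set S contains a variable node v whose degree in G satisfies d(v) > b, then a ≥ d(v) + 1 − b. -/
open SimpleGraph

lemma no_four_cycle {V : Type} (G : SimpleGraph V) (hgirth : (4 : ℕ∞) < G.girth)
    {v u c1 c2 : V} (hvu : v ≠ u) (hc : c1 ≠ c2)
    (h1 : G.Adj v c1) (h2 : G.Adj c1 u) (h3 : G.Adj u c2) (h4 : G.Adj c2 v) : False := by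
  have n1 : v ≠ c1 := h1.ne
  have n2 : c1 ≠ u := h2.ne
  have n3 : u ≠ c2 := h3.ne
  have n4 : c2 ≠ v := h4.ne
  have n5 : c1 ≠ v := h1.ne'
  have n6 : u ≠ c1 := h2.ne'
  have n7 : c2 ≠ u := h3.ne'
  have n8 : v ≠ c2 := h4.ne'
  have n9 : u ≠ v := hvu.symm
  have n10 : c2 ≠ c1 := hc.symm
  have hcyc : (Walk.cons h1 (.cons h2 (.cons h3 (.cons h4 .nil)))).IsCycle := by
    refine ⟨⟨⟨?_⟩, by simp⟩, ?_⟩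
    · simp only [Walk.edges_cons, Walk.edges_nil, List.nodup_cons, List.mem_cons,
        List.not_mem_nil, or_false, Sym2.eq, Sym2.rel_iff', Prod.mk.injEq, Prod.swap_prod_mk,
        List.nodup_nil, and_true]
      tauto
    · simp only [Walk.support_cons, Walk.support_nil, List.tail_cons, List.nodup_cons,
        List.mem_cons, List.not_mem_nil, or_false, List.nodup_nil, and_true]
      tauto
  have hle : G.egirth ≤ (Walk.cons h1 (.cons h2 (.cons h3 (.cons h4 .nil)))).length :=
    le_egirth.mp le_rfl _ _ hcyc
  simp only [Walk.length_cons, Walk.length_nil] at hle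
  have h5 : (4 : ℕ) < G.girth := by exact_mod_cast hgirth
  have : G.girth ≤ 4 := by
    have := ENat.toNat_le_toNat hle (by simp)
    simpa [SimpleGraph.girth] using this
  omega

/-- In a Tanner graph of girth greater than 4, if an `(a,b)` trapping
set `S` contains a variable node `v` with `d(v) > b`, then `a ≥ d(v) + 1 − b`. -/
theorem stmt7 {V : Type} [Fintype V] (G : SimpleGraph V) (isVar : V → Prop)
    (hbip : Bipartite G isVar) (hgirth : (4 : ℕ∞) < G.girth)
    (S : Set V) (a b : ℕ) (hSL : S ⊆ {v | isVar v})
    (ha : S.ncard = a) (hb : (GamO G S).ncard = b)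
    (v : V) (hv : v ∈ S) (hd : b < degG G v) :
    degG G v + 1 - b ≤ a := by
  classical
  set N := G.neighborSet v with hN
  set A := N \ GamO G S with hA
  set B := S \ {v} with hB
  have key : ∀ c : V, ∃ u, c ∈ A → u ∈ B ∧ G.Adj c u := by
    intro c
    by_cases hc : c ∈ A
    · obtain ⟨hcN, hcO⟩ := hc
      have hadj : G.Adj v c := hcN
      have hGam : c ∈ Gam G S := ⟨v, hv, hadj⟩
      have hvmem : v ∈ {u | u ∈ S ∧ G.Adj c u} := ⟨hv, hadj.symm⟩
      have heven : Even (degIn G S c) := by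
        rcases Nat.even_or_odd (degIn G S c) with h | h
        · exact h
        · exact absurd ⟨hGam, h⟩ hcO
      have hpos : 0 < degIn G S c :=
        (Set.ncard_pos (Set.toFinite _)).mpr ⟨v, hvmem⟩
      have h2le : 1 < degIn G S c := by
        obtain ⟨k, hk⟩ := heven; omega
      obtain ⟨u, hu, hune⟩ := Set.exists_ne_of_one_lt_ncard h2le v
      exact ⟨u, fun _ => ⟨⟨hu.1, hune⟩, hu.2⟩⟩
    · exact ⟨v, fun h => absurd h hc⟩
  choose f hf using key
  have hinj : Set.InjOn f A := by
    intro c1 hc1 c2 hc2 heq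
    by_contra hne
    obtain ⟨hB1, hadj1⟩ := hf c1 hc1
    obtain ⟨hB2, hadj2⟩ := hf c2 hc2
    have hvu : v ≠ f c1 := fun h => hB1.2 (by simp [← h])
    have hadj2' : G.Adj (f c1) c2 := by rw [heq]; exact hadj2.symm
    exact no_four_cycle G hgirth hvu hne hc1.1 hadj1 hadj2' (G.adj_symm hc2.1)
  have h1 : A.ncard ≤ B.ncard :=
    Set.ncard_le_ncard_of_injOn f (fun c hc => (hf c hc).1) hinj (Set.toFinite _)
  have h2 : B.ncard = a - 1 := by
    rw [hB, Set.ncard_diff_singleton_of_mem hv, ha]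
  have h3 : N.ncard ≤ A.ncard + b := by
    calc N.ncard ≤ (A ∪ GamO G S).ncard := by
          apply Set.ncard_le_ncard _ (Set.toFinite _)
          intro c hc
          by_cases h : c ∈ GamO G S
          · exact Or.inr h
          · exact Or.inl ⟨hc, h⟩
      _ ≤ A.ncard + (GamO G S).ncard := Set.ncard_union_le _ _
      _ = A.ncard + b := by rw [hb]
  have h4 : 1 ≤ a := by
    rw [← ha]
    exact (Set.ncard_pos (Set.toFinite _)).mpr ⟨v, hv⟩
  have h5 : degG G v = N.ncard := rfl
  omega
end

section
/- Let G = (L ∪ R, E) be a left-regular Tanner graph with left degree d_l ≥ 2, and let S be a nonempty (a,b) trapping set such that G(S) is connected and contains no cycle. Then b ≥ a(d_l − 2) + 2. -/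
open SimpleGraph

/-- In a left-regular Tanner graph with left degree `d_l ≥ 2`, if `S`
is a nonempty `(a,b)` trapping set whose induced subgraph `G(S)` is connected and
contains no cycle, then `b ≥ a(d_l − 2) + 2`. -/
theorem stmt8 {V : Type} [Fintype V] (G : SimpleGraph V) (isVar : V → Prop)
    (hbip : Bipartite G isVar)
    (dl : ℕ) (hdl : 2 ≤ dl) (hreg : ∀ v, isVar v → degG G v = dl)
    (S : Set V) (a b : ℕ) (hSL : S ⊆ {v | isVar v}) (hne : S.Nonempty)
    (ha : S.ncard = a) (hb : (GamO G S).ncard = b)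
    (hconn : (G.induce (S ∪ Gam G S)).Connected)
    (hacyc : (G.induce (S ∪ Gam G S)).IsAcyclic) :
    a * (dl - 2) + 2 ≤ b := by
  classical
  -- check nodes are non-variable nodes
  have hGvar : ∀ c ∈ Gam G S, ¬ isVar c := by
    rintro c ⟨v, hv, hadj⟩
    exact (hbip v c hadj).mp (hSL hv)
  have hdisj : Disjoint S (Gam G S) := by
    rw [Set.disjoint_left]
    intro x hx hxG
    exact hGvar x hxG (hSL hx)
  set T : Set V := S ∪ Gam G S with hT
  haveI : Fintype ↥T := Fintype.ofFinite _
  set H : SimpleGraph ↥T := G.induce T with hH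
  have htree : H.IsTree := ⟨hconn, hacyc⟩
  -- degrees in H
  set D : V → ℕ := fun v => if v ∈ S then dl else degIn G S v with hD
  have hdeg : ∀ x : ↥T, H.degree x = D x.1 := by
    intro x
    have hx : H.degree x = (H.neighborSet x).ncard := by
      rw [← SimpleGraph.card_neighborSet_eq_degree, Set.ncard_eq_toFinset_card',
        Set.toFinset_card]
    have himg : (H.neighborSet x).ncard = (Subtype.val '' (H.neighborSet x)).ncard :=
      (Set.ncard_image_of_injective _ Subtype.val_injective).symm
    by_cases hxS : x.1 ∈ S
    · -- variable node: full degree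
      have himgeq : Subtype.val '' (H.neighborSet x) = G.neighborSet x.1 := by
        ext w
        constructor
        · rintro ⟨y, hy, rfl⟩
          exact hy
        · intro hw
          have hwT : w ∈ T := Or.inr ⟨x.1, hxS, hw⟩
          exact ⟨⟨w, hwT⟩, hw, rfl⟩
      have : H.degree x = degG G x.1 := by
        rw [hx, himg, himgeq]; rfl
      rw [this, hreg _ (hSL hxS), hD]
      simp [hxS]
    · -- check node
      have hxG : x.1 ∈ Gam G S := x.2.resolve_left hxS
      have himgeq : Subtype.val '' (H.neighborSet x) = {v | v ∈ S ∧ G.Adj x.1 v} := by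
        ext w
        constructor
        · rintro ⟨y, hy, rfl⟩
          have hadj : G.Adj x.1 y.1 := hy
          rcases y.2 with hyS | hyG
          · exact ⟨hyS, hadj⟩
          · exact absurd ((hbip x.1 y.1 hadj).mpr (hGvar _ hyG)) (hGvar _ hxG)
        · rintro ⟨hwS, hadj⟩
          exact ⟨⟨w, Or.inl hwS⟩, hadj, rfl⟩
      have : H.degree x = degIn G S x.1 := by
        rw [hx, himg, himgeq]; rfl
      rw [this, hD]
      simp [hxS]
  -- handshake
  have hhand : ∑ x : ↥T, H.degree x = 2 * H.edgeFinset.card :=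
    H.sum_degrees_eq_twice_card_edges
  have hsum1 : ∑ x : ↥T, H.degree x = ∑ v ∈ T.toFinset, D v := by
    rw [Finset.sum_congr rfl fun x _ => hdeg x]
    exact Finset.sum_set_coe (f := D) T
  -- split the sum
  have hTfin : T.toFinset = S.toFinset ∪ (Gam G S).toFinset := by
    simp [hT]
  have hdisjfin : Disjoint S.toFinset (Gam G S).toFinset := by
    rw [Set.disjoint_toFinset]; exact hdisj
  have hsum2 : ∑ v ∈ T.toFinset, D v
      = a * dl + ∑ c ∈ (Gam G S).toFinset, degIn G S c := by
    rw [hTfin, Finset.sum_union hdisjfin]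
    congr 1
    · have hc : ∀ v ∈ S.toFinset, D v = dl := by
        intro v hv
        simp only [Set.mem_toFinset] at hv
        simp [hD, hv]
      rw [Finset.sum_congr rfl hc, Finset.sum_const, smul_eq_mul, mul_comm, ← ha,
        Set.ncard_eq_toFinset_card', mul_comm]
    · refine Finset.sum_congr rfl fun c hc => ?_
      simp only [Set.mem_toFinset] at hc
      have : c ∉ S := fun hcS => (Set.disjoint_left.mp hdisj) hcS hc
      simp [hD, this]
  -- every check node has positive degree in G(S)
  have hpos : ∀ c ∈ Gam G S, 1 ≤ degIn G S c := by
    rintro c ⟨v, hv, hadj⟩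
    have : ({v' | v' ∈ S ∧ G.Adj c v'} : Set V).Nonempty := ⟨v, hv, hadj.symm⟩
    have := (Set.ncard_pos (Set.toFinite _)).mpr this
    exact this
  -- partition of Gam into GamO and GamE
  have hGsplit : (Gam G S).toFinset = (GamO G S).toFinset ∪ (GamE G S).toFinset := by
    ext c
    simp only [Set.mem_toFinset, Finset.mem_union]
    simp only [GamO, GamE, Set.mem_setOf_eq]
    constructor
    · intro hc
      rcases Nat.even_or_odd (degIn G S c) with h | h
      · exact Or.inr ⟨hc, h⟩
      · exact Or.inl ⟨hc, h⟩
    · rintro (⟨hc, _⟩ | ⟨hc, _⟩) <;> exact hc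
  have hGOEdisj : Disjoint (GamO G S).toFinset (GamE G S).toFinset := by
    rw [Finset.disjoint_left]
    rintro c hc hc'
    simp only [Set.mem_toFinset] at hc hc'
    simp only [GamO, GamE, Set.mem_setOf_eq] at hc hc'
    exact (Nat.not_even_iff_odd.mpr hc.2) hc'.2
  set e : ℕ := (GamE G S).ncard with he
  have hGcard : (Gam G S).ncard = b + e := by
    rw [Set.ncard_eq_toFinset_card', hGsplit, Finset.card_union_of_disjoint hGOEdisj,
      ← Set.ncard_eq_toFinset_card', ← Set.ncard_eq_toFinset_card', hb, he]
  -- lower bound for the degree sum over checks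
  have hlow : b + 2 * e ≤ ∑ c ∈ (Gam G S).toFinset, degIn G S c := by
    rw [hGsplit, Finset.sum_union hGOEdisj]
    have h1 : b ≤ ∑ c ∈ (GamO G S).toFinset, degIn G S c := by
      calc b = (GamO G S).toFinset.card * 1 := by
              rw [mul_one, ← hb, Set.ncard_eq_toFinset_card']
        _ ≤ _ := by
              rw [← smul_eq_mul]
              refine Finset.card_nsmul_le_sum _ _ _ fun c hc => ?_
              simp only [Set.mem_toFinset] at hc
              simp only [GamO, Set.mem_setOf_eq] at hc
              exact hpos c hc.1
    have h2 : 2 * e ≤ ∑ c ∈ (GamE G S).toFinset, degIn G S c := by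
      calc 2 * e = (GamE G S).toFinset.card * 2 := by
              rw [he, mul_comm, Set.ncard_eq_toFinset_card']
        _ ≤ _ := by
              rw [← smul_eq_mul]
              refine Finset.card_nsmul_le_sum _ _ _ fun c hc => ?_
              simp only [Set.mem_toFinset] at hc
              simp only [GamE, Set.mem_setOf_eq] at hc
              obtain ⟨k, hk⟩ := hc.2
              have := hpos c hc.1
              omega
    omega
  -- tree edge count
  have hE : H.edgeFinset.card + 1 = Fintype.card ↥T := htree.card_edgeFinset
  have hTcard : Fintype.card ↥T = a + (b + e) := by
    rw [← Set.toFinset_card, ← Set.ncard_eq_toFinset_card', hT,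
      Set.ncard_union_eq hdisj (Set.toFinite _) (Set.toFinite _), ha, hGcard]
  -- put it together
  obtain ⟨d2, rfl⟩ : ∃ d2, dl = d2 + 2 := ⟨dl - 2, by omega⟩
  have key : 2 * H.edgeFinset.card = a * (d2 + 2) + ∑ c ∈ (Gam G S).toFinset, degIn G S c := by
    rw [← hhand, hsum1, hsum2]
  have hmul : a * (d2 + 2) = a * d2 + 2 * a := by ring
  have hgoal : a * (d2 + 2 - 2) = a * d2 := by norm_num
  rw [hgoal]
  set m := a * d2
  omega
end

section
/- Let G = (L ∪ R, E) be a left-regular Tanner graph with left degree d_l ≥ 2, and let S be a nonempty (a,b) elementary trapping set such that G(S) is connected and contains no cycle. Then b = a(d_l − 2) + 2. -/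
open SimpleGraph

/-- In a left-regular Tanner graph with left degree `d_l ≥ 2`, if `S`
is a nonempty `(a,b)` elementary trapping set whose induced subgraph `G(S)` is connected
and contains no cycle, then `b = a(d_l − 2) + 2`. -/
theorem stmt9 {V : Type} [Fintype V] (G : SimpleGraph V) (isVar : V → Prop)
    (hbip : Bipartite G isVar)
    (dl : ℕ) (hdl : 2 ≤ dl) (hreg : ∀ v, isVar v → degG G v = dl)
    (S : Set V) (a b : ℕ) (hSL : S ⊆ {v | isVar v}) (hne : S.Nonempty)
    (ha : S.ncard = a) (hb : (GamO G S).ncard = b)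
    (helem : IsElem G S)
    (hconn : (G.induce (S ∪ Gam G S)).Connected)
    (hacyc : (G.induce (S ∪ Gam G S)).IsAcyclic) :
    b = a * (dl - 2) + 2 := by
  unfold Bipartite at hbip
  unfold degG at hreg
  unfold GamO Gam degIn at hb
  unfold IsElem Gam degIn at helem
  unfold Gam at hconn hacyc

  classical
  set Γ : Set V := {c | ∃ v ∈ S, G.Adj v c} with hΓdef
  have hΓvar : ∀ c ∈ Γ, ¬ isVar c := by
    rintro c ⟨v, hv, hadj⟩
    exact fun hc => ((hbip v c hadj).mp (hSL hv)) hc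
  have hdisj : Disjoint S Γ := Set.disjoint_left.mpr fun v hv hc => (hΓvar v hc) (hSL hv)
  have hnbrΓ : ∀ v ∈ S, ∀ w, G.Adj v w → w ∈ Γ := fun v hv w hw => ⟨v, hv, hw⟩
  have hCC : ∀ c ∈ Γ, ∀ d ∈ Γ, ¬ G.Adj c d := fun c hc d hd hadj =>
    (hΓvar c hc) ((hbip c d hadj).mpr (hΓvar d hd))
  set U : Set V := S ∪ Γ with hUdef
  set H := G.induce U with hHdef
  -- per-vertex degree formula in the induced graph
  have hdeg : ∀ x : ↑U, H.degree x = {w | w ∈ U ∧ G.Adj ↑x w}.ncard := by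
    intro x
    have himg : Subtype.val '' (H.neighborSet x) = {w | w ∈ U ∧ G.Adj ↑x w} := by
      ext w
      constructor
      · rintro ⟨⟨w, hw⟩, hadj, rfl⟩; exact ⟨hw, hadj⟩
      · rintro ⟨hw, hadj⟩; exact ⟨⟨w, hw⟩, hadj, rfl⟩
    rw [← himg, Set.ncard_image_of_injective _ Subtype.val_injective,
      ← SimpleGraph.card_neighborSet_eq_degree, ← Nat.card_eq_fintype_card,
      Nat.card_coe_set_eq]
  have hFvar : ∀ v ∈ S, {w | w ∈ U ∧ G.Adj v w}.ncard = dl := by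
    intro v hv
    have : {w | w ∈ U ∧ G.Adj v w} = G.neighborSet v := by
      ext w
      exact ⟨fun h => h.2, fun h => ⟨Or.inr (hnbrΓ v hv w h), h⟩⟩
    rw [this, hreg v (hSL hv)]
  have hFchk : ∀ c ∈ Γ, {w | w ∈ U ∧ G.Adj c w} = {v | v ∈ S ∧ G.Adj c v} := by
    intro c hc
    ext w
    constructor
    · rintro ⟨hw | hw, hadj⟩
      · exact ⟨hw, hadj⟩
      · exact absurd hadj (hCC c hc w hw)
    · rintro ⟨hw, hadj⟩; exact ⟨Or.inl hw, hadj⟩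
  -- handshake
  have hhand : ∑ x : ↑U, H.degree x = 2 * H.edgeFinset.card :=
    H.sum_degrees_eq_twice_card_edges
  have hsum1 : ∑ x : ↑U, H.degree x = ∑ u ∈ U.toFinset, {w | w ∈ U ∧ G.Adj u w}.ncard := by
    rw [← Finset.sum_set_coe]
    exact Finset.sum_congr rfl fun x _ => hdeg x
  have hUfin : U.toFinset = S.toFinset ∪ Γ.toFinset := by simp [hUdef]
  have hdisjF : Disjoint S.toFinset Γ.toFinset := Set.disjoint_toFinset.mpr hdisj
  have hsplit : ∑ u ∈ U.toFinset, {w | w ∈ U ∧ G.Adj u w}.ncard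
      = ∑ u ∈ S.toFinset, {w | w ∈ U ∧ G.Adj u w}.ncard
        + ∑ u ∈ Γ.toFinset, {w | w ∈ U ∧ G.Adj u w}.ncard := by
    rw [hUfin, Finset.sum_union hdisjF]
  have hsumS : ∑ u ∈ S.toFinset, {w | w ∈ U ∧ G.Adj u w}.ncard = a * dl := by
    rw [Finset.sum_congr rfl fun v hv => hFvar v (Set.mem_toFinset.mp hv),
      Finset.sum_const, smul_eq_mul, ← Set.ncard_eq_toFinset_card', ha]
  -- double counting: sum of check degrees equals a * dl
  have hdegfin : ∀ c, {v | v ∈ S ∧ G.Adj c v}.ncard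
      = (S.toFinset.filter (fun v => G.Adj c v)).card := by
    intro c
    rw [Set.ncard_eq_toFinset_card']
    congr 1
    ext v
    simp [Set.mem_toFinset]
  have hsumΓ : ∑ c ∈ Γ.toFinset, {v | v ∈ S ∧ G.Adj c v}.ncard = a * dl := by
    have h1 : ∀ v ∈ S.toFinset, (Γ.toFinset.filter (fun c => G.Adj c v)).card = dl := by
      intro v hv
      have hv' : v ∈ S := Set.mem_toFinset.mp hv
      have : Γ.toFinset.filter (fun c => G.Adj c v) = (G.neighborSet v).toFinset := by
        ext c
        simp only [Finset.mem_filter, Set.mem_toFinset, mem_neighborSet]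
        exact ⟨fun h => h.2.symm, fun h => ⟨hnbrΓ v hv' c h, h.symm⟩⟩
      rw [this, ← Set.ncard_eq_toFinset_card', hreg v (hSL hv')]
    calc ∑ c ∈ Γ.toFinset, {v | v ∈ S ∧ G.Adj c v}.ncard
        = ∑ c ∈ Γ.toFinset, ∑ v ∈ S.toFinset, (if G.Adj c v then 1 else 0) := by
          refine Finset.sum_congr rfl fun c _ => ?_
          rw [hdegfin c, Finset.card_filter]
      _ = ∑ v ∈ S.toFinset, ∑ c ∈ Γ.toFinset, (if G.Adj c v then 1 else 0) :=
          Finset.sum_comm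
      _ = ∑ v ∈ S.toFinset, (Γ.toFinset.filter (fun c => G.Adj c v)).card := by
          refine Finset.sum_congr rfl fun v _ => ?_
          rw [Finset.card_filter]
      _ = ∑ v ∈ S.toFinset, dl := Finset.sum_congr rfl h1
      _ = a * dl := by
          rw [Finset.sum_const, smul_eq_mul, ← Set.ncard_eq_toFinset_card', ha]
  -- split Γ into odd- and even-degree checks
  set ΓO : Set V := {c | c ∈ Γ ∧ Odd ({v | v ∈ S ∧ G.Adj c v}).ncard} with hΓOdef
  set ΓE : Set V := {c | c ∈ Γ ∧ Even ({v | v ∈ S ∧ G.Adj c v}).ncard} with hΓEdef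
  have hΓOE : Γ.toFinset = ΓO.toFinset ∪ ΓE.toFinset := by
    ext c
    simp only [Finset.mem_union, Set.mem_toFinset, hΓOdef, hΓEdef, Set.mem_setOf_eq]
    constructor
    · intro hc
      rcases Nat.even_or_odd ({v | v ∈ S ∧ G.Adj c v}).ncard with h | h
      · exact Or.inr ⟨hc, h⟩
      · exact Or.inl ⟨hc, h⟩
    · rintro (⟨hc, _⟩ | ⟨hc, _⟩) <;> exact hc
  have hΓOEdisj : Disjoint ΓO.toFinset ΓE.toFinset := by
    rw [Finset.disjoint_left]
    intro c hcO hcE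
    rw [Set.mem_toFinset] at hcO hcE
    exact (Nat.not_even_iff_odd.mpr hcO.2) hcE.2
  have hsumO : ∑ c ∈ ΓO.toFinset, {v | v ∈ S ∧ G.Adj c v}.ncard = b := by
    have : ∀ c ∈ ΓO.toFinset, {v | v ∈ S ∧ G.Adj c v}.ncard = 1 := by
      intro c hc
      rw [Set.mem_toFinset] at hc
      rcases helem c hc.1 with h | h
      · exact h
      · exact absurd (h ▸ hc.2) (by decide)
    rw [Finset.sum_congr rfl this, Finset.sum_const, smul_eq_mul, mul_one,
      ← Set.ncard_eq_toFinset_card', ← hb]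
  have hsumE : ∑ c ∈ ΓE.toFinset, {v | v ∈ S ∧ G.Adj c v}.ncard = 2 * ΓE.ncard := by
    have : ∀ c ∈ ΓE.toFinset, {v | v ∈ S ∧ G.Adj c v}.ncard = 2 := by
      intro c hc
      rw [Set.mem_toFinset] at hc
      rcases helem c hc.1 with h | h
      · exact absurd (h ▸ hc.2) (by decide)
      · exact h
    rw [Finset.sum_congr rfl this, Finset.sum_const, smul_eq_mul,
      ← Set.ncard_eq_toFinset_card', mul_comm]
  have hΓcard : Γ.ncard = b + ΓE.ncard := by
    rw [Set.ncard_eq_toFinset_card' Γ, hΓOE, Finset.card_union_of_disjoint hΓOEdisj,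
      ← Set.ncard_eq_toFinset_card', ← Set.ncard_eq_toFinset_card', hb]
  have hΓsum2 : ∑ c ∈ Γ.toFinset, {v | v ∈ S ∧ G.Adj c v}.ncard = b + 2 * ΓE.ncard := by
    rw [hΓOE, Finset.sum_union hΓOEdisj, hsumO, hsumE]
  -- tree relation
  have htree : H.IsTree := ⟨hconn, hacyc⟩
  have hcardU : Fintype.card ↑U = a + Γ.ncard := by
    rw [← Nat.card_eq_fintype_card, Nat.card_coe_set_eq, hUdef,
      Set.ncard_union_eq hdisj (Set.toFinite S) (Set.toFinite Γ), ha]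
  have hEdges : H.edgeFinset.card + 1 = a + Γ.ncard := by
    rw [htree.card_edgeFinset, hcardU]
  -- put everything together
  have hE2 : 2 * H.edgeFinset.card = a * dl + (b + 2 * ΓE.ncard) := by
    rw [← hhand, hsum1, hsplit, hsumS]
    congr 1
    rw [← hΓsum2]
    refine Finset.sum_congr rfl fun c hc => ?_
    rw [hFchk c (Set.mem_toFinset.mp hc)]
  have hE5 : a * dl = b + 2 * ΓE.ncard := by
    rw [← hsumΓ, ← hΓsum2]
  have haux : a * (dl - 2) + 2 * a = a * dl := by
    have h2 : dl - 2 + 2 = dl := Nat.sub_add_cancel hdl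
    calc a * (dl - 2) + 2 * a = a * ((dl - 2) + 2) := by ring
      _ = a * dl := by rw [h2]
  have hge : 2 * a ≤ a * dl := by
    calc 2 * a = a * 2 := Nat.mul_comm 2 a
      _ ≤ a * dl := Nat.mul_le_mul le_rfl hdl
  omega
end

section
/- Let G = (L ∪ R, E) be a Tanner graph and let S be a nonempty (a,b) trapping set such that G(S) is connected and contains no cycle. Then b ≥ (Σ_{v∈S} d(v)) − 2a + 2; equivalently, b ≥ a(d̄_S − 2) + 2, where d̄_S = (Σ_{v∈S} d(v))/a is the average degree in G of the variable nodes of S. -/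
open SimpleGraph

/-- In a Tanner graph, if `S` is a nonempty `(a,b)` trapping set whose
induced subgraph `G(S)` is connected and contains no cycle, then
`b ≥ (Σ_{v ∈ S} d(v)) − 2a + 2`; equivalently `b ≥ a(d̄_S − 2) + 2` where
`d̄_S = (Σ_{v ∈ S} d(v))/a` is the average degree of the variable nodes of `S`. -/
theorem stmt10 {V : Type} [Fintype V] (G : SimpleGraph V) (isVar : V → Prop)
    (hbip : Bipartite G isVar)
    (S : Set V) (a b : ℕ) (hSL : S ⊆ {v | isVar v}) (hne : S.Nonempty)
    (ha : S.ncard = a) (hb : (GamO G S).ncard = b)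
    (hconn : (G.induce (S ∪ Gam G S)).Connected)
    (hacyc : (G.induce (S ∪ Gam G S)).IsAcyclic) :
    (∑ v ∈ S.toFinite.toFinset, (degG G v : ℤ)) - 2 * a + 2 ≤ (b : ℤ) ∧
    (a : ℚ) * ((∑ v ∈ S.toFinite.toFinset, (degG G v : ℚ)) / a - 2) + 2 ≤ (b : ℚ) := by
  classical
  set T : Set V := S ∪ Gam G S with hT
  -- basic structural facts
  have hGamVar : ∀ c ∈ Gam G S, ¬ isVar c := by
    rintro c ⟨v, hvS, hadj⟩
    exact (hbip v c hadj).mp (hSL hvS)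
  have hdisj : Disjoint S (Gam G S) := by
    rw [Set.disjoint_left]
    intro v hvS hvG
    exact hGamVar v hvG (hSL hvS)
  -- Finsets
  set Sf : Finset V := S.toFinset with hSf
  set Γf : Finset V := (Gam G S).toFinset with hΓf
  set D : ℕ := ∑ v ∈ Sf, degG G v with hD
  set g : ℕ := Γf.card with hg
  -- degG / degIn as filter cards
  have hdegG : ∀ v, degG G v = (Finset.univ.filter (fun c => G.Adj v c)).card := by
    intro v
    rw [degG, Set.ncard_eq_toFinset_card']
    congr 1
    ext c
    simp [SimpleGraph.mem_neighborSet]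
  have hdegIn : ∀ c, degIn G S c = (Finset.univ.filter (fun v => v ∈ S ∧ G.Adj c v)).card := by
    intro c
    rw [degIn, Set.ncard_eq_toFinset_card']
    congr 1
    ext v
    simp
  -- double counting : sum of degIn over Γ equals D
  have hA : ∑ c ∈ Γf, degIn G S c = D := by
    have hzero : ∀ c ∈ Finset.univ \ Γf, degIn G S c = 0 := by
      intro c hc
      rw [Finset.mem_sdiff, hΓf, Set.mem_toFinset] at hc
      rw [hdegIn, Finset.card_eq_zero]
      ext v
      simp only [Finset.mem_filter, Finset.mem_univ, true_and, Finset.notMem_empty, iff_false]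
      rintro ⟨hvS, hadj⟩
      exact hc.2 ⟨v, hvS, hadj.symm⟩
    have h1 : ∑ c ∈ Γf, degIn G S c = ∑ c ∈ Finset.univ, degIn G S c := by
      rw [← Finset.sum_sdiff (Finset.subset_univ Γf), Finset.sum_eq_zero hzero, zero_add]
    have h2 : ∑ c ∈ Finset.univ, degIn G S c
        = ∑ c ∈ Finset.univ, ∑ v ∈ Finset.univ, if v ∈ S ∧ G.Adj c v then 1 else 0 := by
      refine Finset.sum_congr rfl fun c _ => ?_
      rw [hdegIn, Finset.card_filter]
    have h3 : Sf = Finset.univ.filter (· ∈ S) := by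
      ext v; simp [hSf]
    rw [h1, h2, Finset.sum_comm, hD, h3, Finset.sum_filter]
    refine Finset.sum_congr rfl fun v _ => ?_
    by_cases hvS : v ∈ S
    · simp only [hvS, if_true, true_and, hdegG, Finset.card_filter]
      refine Finset.sum_congr rfl fun c _ => ?_
      rw [adj_comm]
    · simp [hvS]
  -- positivity of degIn for c ∈ Γ
  have hpos : ∀ c ∈ Gam G S, 1 ≤ degIn G S c := by
    rintro c ⟨v, hvS, hadj⟩
    have h1 : ({v' | v' ∈ S ∧ G.Adj c v'} : Set V).Nonempty := ⟨v, hvS, hadj.symm⟩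
    rw [← Set.ncard_pos (Set.toFinite _)] at h1
    exact h1
  -- lower bound on the degree sum over Γ
  have hsumΓ : 2 * g ≤ (∑ c ∈ Γf, degIn G S c) + b := by
    have hsplit := Finset.filter_union_filter_not_eq (fun c => Odd (degIn G S c)) Γf
    set Of := Γf.filter (fun c => Odd (degIn G S c)) with hOf
    set Ef := Γf.filter (fun c => ¬ Odd (degIn G S c)) with hEf
    have hdisj2 : Disjoint Of Ef := Finset.disjoint_filter_filter_not _ _ _
    have hOb : Of.card = b := by
      rw [← hb, hOf]
      rw [Set.ncard_eq_toFinset_card']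
      congr 1
      ext c
      simp [GamO, hΓf, Set.mem_toFinset]
      exact Iff.symm (Set.mem_toFinset (s := GamO G S))
    have hcards : Of.card + Ef.card = g := by
      rw [hg, ← hsplit, Finset.card_union_of_disjoint hdisj2]
    have hsum1 : Of.card ≤ ∑ c ∈ Of, degIn G S c := by
      rw [Finset.card_eq_sum_ones]
      refine Finset.sum_le_sum fun c hc => ?_
      rw [hOf, Finset.mem_filter, hΓf, Set.mem_toFinset] at hc
      exact hpos c hc.1
    have hsum2 : 2 * Ef.card ≤ ∑ c ∈ Ef, degIn G S c :=
      calc 2 * Ef.card = ∑ _c ∈ Ef, 2 := by rw [Finset.sum_const, smul_eq_mul, Nat.mul_comm]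
        _ ≤ ∑ c ∈ Ef, degIn G S c := by
            refine Finset.sum_le_sum fun c hc => ?_
            rw [hEf, Finset.mem_filter, hΓf, Set.mem_toFinset, Nat.not_odd_iff_even] at hc
            have h1 := hpos c hc.1
            rcases hc.2 with ⟨k, hk⟩
            omega
    have hsumsplit : ∑ c ∈ Γf, degIn G S c = (∑ c ∈ Of, degIn G S c) + ∑ c ∈ Ef, degIn G S c := by
      rw [← Finset.sum_union hdisj2, hsplit]
    omega
  -- the tree fact : D + 1 = a + g
  have htree : (G.induce T).IsTree := ⟨hconn, hacyc⟩
  have hTcard : Fintype.card ↥T = a + g := by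
    rw [← Set.toFinset_card]
    have h1 : T.toFinset = Sf ∪ Γf := by
      ext v; simp [hT, hSf, hΓf, Set.mem_toFinset]
    rw [h1, Finset.card_union_of_disjoint, ← ha, hg, Set.ncard_eq_toFinset_card']
    rw [hSf, hΓf, Finset.disjoint_left]
    intro v hv1 hv2
    rw [Set.mem_toFinset] at hv1 hv2
    exact Set.disjoint_left.mp hdisj hv1 hv2
  have hedge : (G.induce T).edgeFinset.card + 1 = a + g := by
    rw [htree.card_edgeFinset, hTcard]
  -- degrees in the induced graph
  have hdegInd : ∀ x : ↥T, (G.induce T).degree x = ({y | y ∈ T ∧ G.Adj ↑x y} : Set V).ncard := by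
    intro x
    rw [← SimpleGraph.card_neighborSet_eq_degree, Set.ncard_eq_toFinset_card',
      Set.toFinset_card]
    exact Fintype.card_congr
      ⟨fun y => ⟨y.1.1, y.1.2, y.2⟩, fun y => ⟨⟨y.1, y.2.1⟩, y.2.2⟩, fun _ => rfl, fun _ => rfl⟩
  -- handshake : 2 * edges = 2 * D
  have hhs : 2 * (G.induce T).edgeFinset.card = 2 * D := by
    rw [← SimpleGraph.sum_degrees_eq_twice_card_edges]
    have h0 : ∑ x : ↥T, (G.induce T).degree x
        = ∑ v ∈ T.toFinset, ({y | y ∈ T ∧ G.Adj v y} : Set V).ncard := by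
      rw [Finset.sum_congr rfl (fun x _ => hdegInd x)]
      exact (Finset.sum_subtype T.toFinset (fun x => Set.mem_toFinset)
        (fun v => ({y | y ∈ T ∧ G.Adj v y} : Set V).ncard)).symm
    have h1 : T.toFinset = Sf ∪ Γf := by
      ext v; simp [hT, hSf, hΓf, Set.mem_toFinset]
    have hdf : Disjoint Sf Γf := by
      rw [hSf, hΓf, Finset.disjoint_left]
      intro v hv1 hv2
      rw [Set.mem_toFinset] at hv1 hv2
      exact Set.disjoint_left.mp hdisj hv1 hv2
    rw [h0, h1, Finset.sum_union hdf]
    have hS : ∀ v ∈ Sf, ({y | y ∈ T ∧ G.Adj v y} : Set V).ncard = degG G v := by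
      intro v hv
      rw [hSf, Set.mem_toFinset] at hv
      rw [degG]
      congr 1
      ext y
      simp only [Set.mem_setOf_eq, SimpleGraph.mem_neighborSet, and_iff_right_iff_imp]
      intro hadj
      exact Or.inr ⟨v, hv, hadj⟩
    have hΓ : ∀ c ∈ Γf, ({y | y ∈ T ∧ G.Adj c y} : Set V).ncard = degIn G S c := by
      intro c hc
      rw [hΓf, Set.mem_toFinset] at hc
      rw [degIn]
      congr 1
      ext y
      simp only [Set.mem_setOf_eq]
      constructor
      · rintro ⟨hyT, hadj⟩
        rcases hyT with hyS | hyG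
        · exact ⟨hyS, hadj⟩
        · exact absurd ((hbip c y hadj).mpr (hGamVar y hyG)) (hGamVar c hc)
      · rintro ⟨hyS, hadj⟩
        exact ⟨Or.inl hyS, hadj⟩
    rw [Finset.sum_congr rfl hS, Finset.sum_congr rfl hΓ, hA, hD, two_mul]
  have hED : (G.induce T).edgeFinset.card = D := by omega
  -- key integer inequality
  have hZ : (D : ℤ) - 2 * a + 2 ≤ (b : ℤ) := by
    have h1 : D + 1 = a + g := by rw [← hED]; exact hedge
    have h2 : 2 * g ≤ D + b := by rw [← hA]; exact hsumΓ
    have := hsumΓ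
    push_cast [← h1] at h2 ⊢
    omega
  have hSfin : S.toFinite.toFinset = Sf := by
    ext v; rw [Set.Finite.mem_toFinset, hSf, Set.mem_toFinset]
  have hsumZ : ∑ v ∈ S.toFinite.toFinset, (degG G v : ℤ) = (D : ℤ) := by
    rw [hSfin, hD]; push_cast; rfl
  have hapos : 0 < a := by
    rw [← ha]
    exact (Set.ncard_pos (Set.toFinite S)).mpr hne
  constructor
  · rw [hsumZ]; exact hZ
  · have hsumQ : ∑ v ∈ S.toFinite.toFinset, (degG G v : ℚ) = (D : ℚ) := by
      rw [hSfin, hD]; push_cast; rfl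
    rw [hsumQ]
    have hane : (a : ℚ) ≠ 0 := by positivity
    have : (a : ℚ) * ((D : ℚ) / a - 2) + 2 = (D : ℚ) - 2 * a + 2 := by
      field_simp
    rw [this]
    have : ((D : ℤ) : ℚ) - 2 * ((a : ℤ) : ℚ) + 2 ≤ ((b : ℤ) : ℚ) := by
      exact_mod_cast hZ
    push_cast at this ⊢
    linarith
end

section
/- Let G = (L ∪ R, E) be a Tanner graph containing at least one cycle, let g be its girth, and let C be a cycle of length g in G. Then the set S of variable nodes lying on C is an elementary trapping set: every check node of G(S) has degree 1 or 2 in G(S). -/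
open SimpleGraph

section MyAux
variable {V : Type} {G : SimpleGraph V}

/-- A path from `a` to `b` containing the edge `s(a,b)` has length 1. -/
lemma myAux_edge_mem_path {a b : V} (P : G.Walk a b) (hP : P.IsPath)
    (he : s(a, b) ∈ P.edges) : P.length = 1 := by
  cases P with
  | nil => simp at he
  | @cons _ x _ h q =>
    rw [SimpleGraph.Walk.cons_isPath_iff] at hP
    rw [SimpleGraph.Walk.edges_cons, List.mem_cons] at he
    rcases he with he | he
    · rw [Sym2.eq_iff] at he
      rcases he with ⟨-, hbx⟩ | ⟨hax, -⟩
      · subst hbx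
        rw [SimpleGraph.Walk.isPath_iff_eq_nil] at *
        rw [hP.1]
        simp
      · exact absurd hax.symm h.ne'
    · exact absurd (SimpleGraph.Walk.fst_mem_support_of_mem_edges q he) hP.2

lemma myAux_concat_isPath {a b c : V} (P : G.Walk a b) (hP : P.IsPath) (h : G.Adj b c)
    (hc : c ∉ P.support) : (P.concat h).IsPath := by
  rw [SimpleGraph.Walk.isPath_def] at *
  rw [SimpleGraph.Walk.concat_eq_append, SimpleGraph.Walk.support_append]
  simp [List.nodup_append, hP, hc]
  exact fun x hx hxc => hc (hxc ▸ hx)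

/-- The two arcs of a cycle between its base point and another support vertex are paths. -/
lemma myAux_arc_facts [DecidableEq V] {c x : V} (q : G.Walk c c) (hq : q.IsCycle) (hx : x ∈ q.support)
    (hxc : x ≠ c) :
    (q.takeUntil x hx).IsPath ∧ (q.dropUntil x hx).IsPath ∧
    (q.takeUntil x hx).length + (q.dropUntil x hx).length = q.length ∧
    1 ≤ (q.takeUntil x hx).length ∧ 1 ≤ (q.dropUntil x hx).length := by
  set A := q.takeUntil x hx with hA
  set B := q.dropUntil x hx with hB
  have hspec : A.append B = q := q.take_spec hx
  have hlen : A.length + B.length = q.length := by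
    rw [← hspec, SimpleGraph.Walk.length_append]
  have hA1 : 1 ≤ A.length := by
    by_contra hcon
    have : A.length = 0 := by omega
    exact hxc (SimpleGraph.Walk.eq_of_length_eq_zero this).symm
  have hB1 : 1 ≤ B.length := by
    by_contra hcon
    have : B.length = 0 := by omega
    exact hxc (SimpleGraph.Walk.eq_of_length_eq_zero this)
  have hsupp : q.support = A.support ++ B.support.tail := by
    rw [← hspec, SimpleGraph.Walk.support_append]
  have htail : q.support.tail = A.support.tail ++ B.support.tail := by
    have h' := hsupp
    rw [SimpleGraph.Walk.support_eq_cons A, SimpleGraph.Walk.support_eq_cons q] at h'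
    simpa using congrArg List.tail h'
  have hnd : q.support.tail.Nodup := hq.support_nodup
  rw [htail, List.nodup_append] at hnd
  obtain ⟨hndA, hndB, hdisj⟩ := hnd
  have hcB : c ∈ B.support.tail := by
    have hce : c ∈ B.support := SimpleGraph.Walk.end_mem_support B
    rw [SimpleGraph.Walk.support_eq_cons B] at hce
    rcases List.mem_cons.mp hce with hce | hce
    · exact absurd hce.symm hxc
    · exact hce
  have hxA : x ∈ A.support.tail := by
    have hxe : x ∈ A.support := SimpleGraph.Walk.end_mem_support A
    rw [SimpleGraph.Walk.support_eq_cons A] at hxe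
    rcases List.mem_cons.mp hxe with hxe | hxe
    · exact absurd hxe hxc
    · exact hxe
  refine ⟨?_, ?_, hlen, hA1, hB1⟩
  · rw [SimpleGraph.Walk.isPath_def, SimpleGraph.Walk.support_eq_cons A, List.nodup_cons]
    exact ⟨fun hcA => hdisj c hcA c hcB rfl, hndA⟩
  · rw [SimpleGraph.Walk.isPath_def, SimpleGraph.Walk.support_eq_cons B, List.nodup_cons]
    exact ⟨fun hxB => hdisj x hxA x hxB rfl, hndB⟩

lemma myAux_pigeon {a b v1 v2 v3 : V} (h12 : v1 ≠ v2) (h13 : v1 ≠ v3) (h23 : v2 ≠ v3)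
    (h1 : v1 = a ∨ v1 = b) (h2 : v2 = a ∨ v2 = b) (h3 : v3 = a ∨ v3 = b) : False := by
  rcases h1 with rfl | rfl <;> rcases h2 with rfl | rfl <;> rcases h3 with rfl | rfl <;>
    simp_all

end MyAux

/-- In a Tanner graph containing at least one cycle, the set of
variable nodes lying on a shortest cycle (a cycle whose length equals the girth `g`)
is an elementary trapping set: every check node of `G(S)` has degree 1 or 2 in `G(S)`. -/
theorem stmt11 {V : Type} [Fintype V] (G : SimpleGraph V) (isVar : V → Prop)
    (hbip : Bipartite G isVar)
    (u : V) (p : G.Walk u u) (hp : p.IsCycle)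
    (hlen : (p.length : ℕ∞) = G.girth) :
    IsElem G {v | isVar v ∧ v ∈ p.support} := by
  classical
  intro c hc
  obtain ⟨v0, hv0S, hadj0⟩ := hc
  set T : Set V := {v : V | (isVar v ∧ v ∈ p.support) ∧ G.Adj c v} with hTdef
  have hdeg : degIn G {v | isVar v ∧ v ∈ p.support} c = T.ncard := rfl
  have hfin : T.Finite := Set.toFinite _
  have hpos : 1 ≤ T.ncard := by
    rw [Nat.one_le_iff_ne_zero, ← Nat.pos_iff_ne_zero]
    exact (Set.ncard_pos hfin).mpr ⟨v0, hv0S, hadj0.symm⟩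
  have hle2 : T.ncard ≤ 2 := by
    by_contra hcon
    push_neg at hcon
    have hfc : 3 ≤ hfin.toFinset.card := by
      rwa [Set.ncard_eq_toFinset_card T hfin] at hcon
    obtain ⟨t, hts, htc⟩ := Finset.exists_subset_card_eq hfc
    obtain ⟨v1, v2, v3, h12, h13, h23, rfl⟩ := Finset.card_eq_three.mp htc
    have hm : ∀ w ∈ ({v1, v2, v3} : Finset V), isVar w ∧ w ∈ p.support ∧ G.Adj c w := by
      intro w hw
      have := hts hw
      rw [Set.Finite.mem_toFinset] at this
      exact ⟨this.1.1, this.1.2, this.2⟩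
    have hm1 := hm v1 (by simp)
    have hm2 := hm v2 (by simp)
    have hm3 := hm v3 (by simp)
    -- basic facts
    have h3len : 3 ≤ p.length := hp.three_le_length
    have hgirth : ∀ (x : V) (w : G.Walk x x), w.IsCycle → p.length ≤ w.length := by
      intro x w hw
      have hna : ¬ G.IsAcyclic := fun h => h p hp
      have hcoe : (G.girth : ℕ∞) = G.egirth :=
        ENat.coe_toNat (by rwa [ne_eq, SimpleGraph.egirth_eq_top])
      have hlee : G.egirth ≤ (w.length : ℕ∞) := SimpleGraph.le_egirth.mp le_rfl x w hw
      rw [← hcoe, ← hlen] at hlee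
      exact_mod_cast hlee
    have hpar : ∀ i, i ≤ p.length → (isVar (p.getVert i) ↔ (Even i ↔ isVar u)) := by
      intro i
      induction i with
      | zero =>
        intro _
        rw [SimpleGraph.Walk.getVert_zero]
        simp only [Even.zero]
        tauto
      | succ n ih =>
        intro hle
        have hadj := p.adj_getVert_succ (show n < p.length by omega)
        have hb := hbip _ _ hadj
        have hihn := ih (by omega)
        have hpar2 : Even (n + 1) ↔ ¬ Even n := Nat.even_add_one
        tauto
    have hEven : Even p.length := by
      have h0 := hpar p.length le_rfl
      rw [SimpleGraph.Walk.getVert_length] at h0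
      tauto
    have hG4 : p.length = 4 → False := by
      intro hg4
      by_cases hu : isVar u
      · have key : ∀ w, isVar w → w ∈ p.support → w = u ∨ w = p.getVert 2 := by
          intro w hw hwmem
          obtain ⟨tn, htn, htle⟩ := SimpleGraph.Walk.mem_support_iff_exists_getVert.mp hwmem
          have hiff := hpar tn htle
          rw [htn] at hiff
          have hev : Even tn := by tauto
          obtain ⟨k, hk⟩ := hev
          have ht4 : tn = 0 ∨ tn = 2 ∨ tn = 4 := by omega
          rcases ht4 with rfl | rfl | rfl
          · left; rw [← htn, SimpleGraph.Walk.getVert_zero]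
          · right; rw [← htn]
          · left; rw [← htn, ← hg4, SimpleGraph.Walk.getVert_length]
        exact myAux_pigeon h12 h13 h23 (key v1 hm1.1 hm1.2.1) (key v2 hm2.1 hm2.2.1)
          (key v3 hm3.1 hm3.2.1)
      · have key : ∀ w, isVar w → w ∈ p.support → w = p.getVert 1 ∨ w = p.getVert 3 := by
          intro w hw hwmem
          obtain ⟨tn, htn, htle⟩ := SimpleGraph.Walk.mem_support_iff_exists_getVert.mp hwmem
          have hiff := hpar tn htle
          rw [htn] at hiff
          have hod : ¬ Even tn := by tauto
          rw [Nat.not_even_iff] at hod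
          have ht4 : tn = 1 ∨ tn = 3 := by omega
          rcases ht4 with rfl | rfl
          · left; rw [← htn]
          · right; rw [← htn]
        exact myAux_pigeon h12 h13 h23 (key v1 hm1.1 hm1.2.1) (key v2 hm2.1 hm2.2.1)
          (key v3 hm3.1 hm3.2.1)
    have hrotmem : ∀ (z : V) (hz : z ∈ p.support) (w : V),
        w ∈ p.support ↔ w ∈ (p.rotate z hz).support := by
      intro z hz w
      have hr : p.rotate z hz = (p.dropUntil z hz).append (p.takeUntil z hz) := rfl
      conv_lhs => rw [← p.take_spec hz]
      rw [hr, SimpleGraph.Walk.mem_support_append_iff, SimpleGraph.Walk.mem_support_append_iff]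
      tauto
    have hrotlen : ∀ (z : V) (hz : z ∈ p.support), (p.rotate z hz).length = p.length := by
      intro z hz
      have hr : p.rotate z hz = (p.dropUntil z hz).append (p.takeUntil z hz) := rfl
      have h2 := congrArg SimpleGraph.Walk.length (p.take_spec hz)
      rw [SimpleGraph.Walk.length_append] at h2
      rw [hr, SimpleGraph.Walk.length_append]
      omega
    by_cases hcp : c ∈ p.support
    · -- the check node lies on the cycle
      set q := p.rotate c hcp with hqdef
      have hqc : q.IsCycle := hp.rotate hcp
      have hql : q.length = p.length := hrotlen c hcp
      have keyC : ∀ w, w ∈ p.support → G.Adj c w →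
          w = q.getVert 1 ∨ w = q.getVert (q.length - 1) := by
        intro w hwp hadj
        have hwq : w ∈ q.support := (hrotmem c hcp w).mp hwp
        have hwc : w ≠ c := hadj.ne'
        obtain ⟨hApath, hBpath, hsum, hA1, hB1⟩ := myAux_arc_facts q hqc hwq hwc
        set A := q.takeUntil w hwq with hAdef
        set B := q.dropUntil w hwq with hBdef
        have hAv : q.getVert A.length = w := by
          conv_lhs => rw [← q.take_spec hwq]
          rw [SimpleGraph.Walk.getVert_append]
          rw [← hAdef]
          simp
        have hAor : A.length = 1 ∨ p.length ≤ A.length + 1 := by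
          by_cases he : s(w, c) ∈ A.edges
          · left
            exact myAux_edge_mem_path A hApath (by rwa [Sym2.eq_swap] at he)
          · right
            have hcyc : (SimpleGraph.Walk.cons hadj.symm A).IsCycle :=
              (SimpleGraph.Walk.cons_isCycle_iff A hadj.symm).mpr ⟨hApath, he⟩
            have := hgirth w _ hcyc
            simpa [SimpleGraph.Walk.length_cons] using this
        have hBor : B.length = 1 ∨ p.length ≤ B.length + 1 := by
          by_cases he : s(c, w) ∈ B.edges
          · left
            exact myAux_edge_mem_path B hBpath (by rwa [Sym2.eq_swap] at he)
          · right
            have hcyc : (SimpleGraph.Walk.cons hadj B).IsCycle :=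
              (SimpleGraph.Walk.cons_isCycle_iff B hadj).mpr ⟨hBpath, he⟩
            have := hgirth c _ hcyc
            simpa [SimpleGraph.Walk.length_cons] using this
        rcases hAor with h | h
        · left; rw [← hAv, h]
        rcases hBor with h' | h'
        · right; rw [← hAv]; congr 1; omega
        · exfalso; omega
      exact myAux_pigeon h12 h13 h23 (keyC v1 hm1.2.1 hm1.2.2) (keyC v2 hm2.2.1 hm2.2.2)
        (keyC v3 hm3.2.1 hm3.2.2)
    · -- the check node is off the cycle
      have hv1p := hm1.2.1
      set q := p.rotate v1 hv1p with hqdef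
      have hqc : q.IsCycle := hp.rotate hv1p
      have hql : q.length = p.length := hrotlen v1 hv1p
      have hv2q : v2 ∈ q.support := (hrotmem v1 hv1p v2).mp hm2.2.1
      obtain ⟨hApath, hBpath, hsum, hA1, hB1⟩ := myAux_arc_facts q hqc hv2q h12.symm
      set A := q.takeUntil v2 hv2q with hAdef
      set B := q.dropUntil v2 hv2q with hBdef
      have hcq : c ∉ q.support := fun h => hcp ((hrotmem v1 hv1p c).mpr h)
      have hcA : c ∉ A.support := fun h => hcq (q.support_takeUntil_subset hv2q h)
      have hcB : c ∉ B.support := fun h => hcq (q.support_dropUntil_subset hv2q h)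
      have hbound1 : p.length ≤ A.length + 2 := by
        have hPc : (A.concat hm2.2.2.symm).IsPath :=
          myAux_concat_isPath A hApath hm2.2.2.symm hcA
        have hedge : s(c, v1) ∉ (A.concat hm2.2.2.symm).edges := by
          intro he
          rw [SimpleGraph.Walk.concat_eq_append, SimpleGraph.Walk.edges_append] at he
          rcases List.mem_append.mp he with he' | he'
          · exact hcA (SimpleGraph.Walk.fst_mem_support_of_mem_edges A he')
          · simp only [SimpleGraph.Walk.edges_cons, SimpleGraph.Walk.edges_nil,
              List.mem_singleton] at he'
            rw [Sym2.eq_iff] at he'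
            rcases he' with ⟨-, h1c⟩ | ⟨-, h1c⟩
            · exact hcp (h1c ▸ hm1.2.1)
            · exact h12 h1c
        have hcyc : (SimpleGraph.Walk.cons hm1.2.2 (A.concat hm2.2.2.symm)).IsCycle :=
          (SimpleGraph.Walk.cons_isCycle_iff _ hm1.2.2).mpr ⟨hPc, hedge⟩
        have := hgirth c _ hcyc
        simp only [SimpleGraph.Walk.length_cons, SimpleGraph.Walk.length_concat] at this
        omega
      have hbound2 : p.length ≤ B.length + 2 := by
        have hPc : (B.concat hm1.2.2.symm).IsPath :=
          myAux_concat_isPath B hBpath hm1.2.2.symm hcB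
        have hedge : s(c, v2) ∉ (B.concat hm1.2.2.symm).edges := by
          intro he
          rw [SimpleGraph.Walk.concat_eq_append, SimpleGraph.Walk.edges_append] at he
          rcases List.mem_append.mp he with he' | he'
          · exact hcB (SimpleGraph.Walk.fst_mem_support_of_mem_edges B he')
          · simp only [SimpleGraph.Walk.edges_cons, SimpleGraph.Walk.edges_nil,
              List.mem_singleton] at he'
            rw [Sym2.eq_iff] at he'
            rcases he' with ⟨-, h2c⟩ | ⟨-, h2c⟩
            · exact hcp (h2c ▸ hm2.2.1)
            · exact h12 h2c.symm
        have hcyc : (SimpleGraph.Walk.cons hm2.2.2 (B.concat hm1.2.2.symm)).IsCycle :=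
          (SimpleGraph.Walk.cons_isCycle_iff _ hm2.2.2).mpr ⟨hPc, hedge⟩
        have := hgirth c _ hcyc
        simp only [SimpleGraph.Walk.length_cons, SimpleGraph.Walk.length_concat] at this
        omega
      have h4 : p.length = 4 := by
        obtain ⟨k, hk⟩ := hEven
        omega
      exact hG4 h4
  rw [hdeg]
  omega
end

section
/- Let G = (L ∪ R, E) be a left-regular Tanner graph in which every variable node has degree at least 2, and let S ⊆ L be a nonempty absorbing set. Then the induced subgraph G(S) contains at least one cycle. -/
open SimpleGraph

/-- In a path starting at `a`, the only edge containing `a` is the first one. -/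
lemma path_edge_fst {V : Type} {G : SimpleGraph V} {a b : V} (r : G.Walk a b)
    (hr : r.IsPath) (w : V) (hmem : s(a, w) ∈ r.edges) : w = r.getVert 1 := by
  cases r with
  | nil => simp at hmem
  | cons h t =>
    rw [SimpleGraph.Walk.cons_isPath_iff] at hr
    rw [SimpleGraph.Walk.edges_cons, List.mem_cons] at hmem
    rcases hmem with heq | hmem
    · rw [Sym2.eq_iff] at heq
      rcases heq with ⟨-, rfl⟩ | ⟨rfl, rfl⟩
      · simp [SimpleGraph.Walk.getVert_cons_succ]
      · exact absurd rfl h.ne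
    · exact absurd (SimpleGraph.Walk.fst_mem_support_of_mem_edges t hmem) hr.2

/-- A finite graph containing a nonempty set `A` in which every vertex has, for any
forbidden vertex `u`, a neighbor in `A` distinct from `u`, is not acyclic. -/
lemma not_isAcyclic_of_min2 {V : Type} [Fintype V] (G : SimpleGraph V) (A : Set V)
    (hA : A.Nonempty)
    (H2 : ∀ v ∈ A, ∀ u : V, ∃ w ∈ A, w ≠ u ∧ G.Adj v w) : ¬ G.IsAcyclic := by
  classical
  intro hac
  have key : ∀ n : ℕ, ∃ (u v : V) (p : G.Walk u v),
      p.IsPath ∧ (∀ x ∈ p.support, x ∈ A) ∧ p.length = n := by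
    intro n
    induction n with
    | zero =>
      obtain ⟨a, ha⟩ := hA
      exact ⟨a, a, SimpleGraph.Walk.nil, SimpleGraph.Walk.IsPath.nil,
        by simpa using ha, rfl⟩
    | succ n ih =>
      obtain ⟨u, v, p, hp, hsup, hlen⟩ := ih
      obtain ⟨w, hwA, hwx, hadj⟩ :=
        H2 v (hsup v p.end_mem_support) (p.reverse.getVert 1)
      by_cases hw : w ∈ p.support
      · exfalso
        refine hac (SimpleGraph.Walk.cons hadj (p.dropUntil w hw)) ?_
        rw [SimpleGraph.Walk.cons_isCycle_iff]
        refine ⟨hp.dropUntil hw, fun hmem => ?_⟩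
        have hmem' : s(v, w) ∈ p.edges :=
          SimpleGraph.Walk.edges_dropUntil_subset p hw hmem
        have hmemr : s(v, w) ∈ p.reverse.edges := by
          rw [SimpleGraph.Walk.edges_reverse, List.mem_reverse]; exact hmem'
        exact hwx (path_edge_fst p.reverse hp.reverse w hmemr)
      · refine ⟨u, w, p.concat hadj, ?_, ?_, by simp [SimpleGraph.Walk.length_concat, hlen]⟩
        · have : (p.concat hadj).reverse.IsPath := by
            rw [SimpleGraph.Walk.reverse_concat, SimpleGraph.Walk.cons_isPath_iff]
            refine ⟨hp.reverse, ?_⟩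
            rw [SimpleGraph.Walk.support_reverse, List.mem_reverse]
            exact hw
          rw [← SimpleGraph.Walk.reverse_reverse (p.concat hadj)]
          exact this.reverse
        · intro x hx
          rw [SimpleGraph.Walk.support_concat, List.mem_append] at hx
          rcases hx with hx | hx
          · exact hsup x hx
          · simp only [List.mem_singleton] at hx
            exact hx ▸ hwA
  obtain ⟨u, v, p, hp, -, hlen⟩ := key (Fintype.card V)
  exact absurd hp.length_lt (by omega)

/-- In a left-regular Tanner graph whose variable nodes all have
degree at least 2, the induced subgraph `G(S)` of a nonempty absorbing set `S` contains
at least one cycle. -/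
theorem stmt13 {V : Type} [Fintype V] (G : SimpleGraph V) (isVar : V → Prop)
    (hbip : Bipartite G isVar)
    (l : ℕ) (hl : 2 ≤ l) (hreg : ∀ v, isVar v → degG G v = l)
    (S : Set V) (hSL : S ⊆ {v | isVar v}) (hne : S.Nonempty)
    (habs : ∀ v ∈ S, adjCount G (GamO G S) v < adjCount G (GamE G S) v) :
    ¬ (G.induce (S ∪ Gam G S)).IsAcyclic := by
  classical
  haveI : Fintype ↥(S ∪ Gam G S) := Fintype.ofFinite _
  -- every variable node of `S` has at least two neighbors among satisfied checks
  have hvar : ∀ v ∈ S, 2 ≤ adjCount G (GamE G S) v := by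
    intro v hv
    have hsplit : adjCount G (GamO G S) v + adjCount G (GamE G S) v = l := by
      have hdeg := hreg v (hSL hv)
      rw [← hdeg]
      unfold adjCount degG
      rw [← Set.ncard_union_eq ?disj (Set.toFinite _) (Set.toFinite _)]
      · congr 1
        ext c
        simp only [Set.mem_union, Set.mem_setOf_eq, SimpleGraph.mem_neighborSet]
        constructor
        · rintro (⟨-, h⟩ | ⟨-, h⟩) <;> exact h
        · intro h
          have hc : c ∈ Gam G S := ⟨v, hv, h⟩
          rcases Nat.even_or_odd (degIn G S c) with he | ho
          · exact Or.inr ⟨⟨hc, he⟩, h⟩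
          · exact Or.inl ⟨⟨hc, ho⟩, h⟩
      case disj =>
        rw [Set.disjoint_left]
        rintro c ⟨⟨-, ho⟩, -⟩ ⟨⟨-, he⟩, -⟩
        exact (Nat.not_even_iff_odd.mpr ho) he
    have := habs v hv
    omega
  -- every satisfied check node has at least two neighbors in `S`
  have hchk : ∀ c ∈ GamE G S, 2 ≤ degIn G S c := by
    rintro c ⟨hcGam, he⟩
    obtain ⟨v, hvS, hadj⟩ := hcGam
    have hpos : 0 < degIn G S c := by
      unfold degIn
      rw [Set.ncard_pos (Set.toFinite _)]
      exact ⟨v, hvS, hadj.symm⟩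
    obtain ⟨k, hk⟩ := he
    omega
  -- apply the minimum-degree-two lemma to `S ∪ Γ_e(S)` inside the induced graph
  refine not_isAcyclic_of_min2 _ {x : ↥(S ∪ Gam G S) | ↑x ∈ S ∪ GamE G S} ?_ ?_
  · obtain ⟨v, hv⟩ := hne
    exact ⟨⟨v, Or.inl hv⟩, Or.inl hv⟩
  · rintro x hx u
    rcases hx with hxS | hxE
    · -- `x` is a variable node
      have h2 : 1 < adjCount G (GamE G S) ↑x := lt_of_lt_of_le one_lt_two (hvar _ hxS)
      obtain ⟨w, hwT, hwne⟩ := Set.exists_ne_of_one_lt_ncard h2 (↑u : V)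
      refine ⟨⟨w, Or.inr hwT.1.1⟩, Or.inr hwT.1, ?_, hwT.2⟩
      exact fun h => hwne (congrArg Subtype.val h)
    · -- `x` is a satisfied check node
      have h2 : 1 < degIn G S ↑x := lt_of_lt_of_le one_lt_two (hchk _ hxE)
      obtain ⟨w, hwT, hwne⟩ := Set.exists_ne_of_one_lt_ncard h2 (↑u : V)
      refine ⟨⟨w, Or.inl hwT.1⟩, Or.inl hwT.1, ?_, hwT.2⟩
      exact fun h => hwne (congrArg Subtype.val h)
end

section
/- Let G = (L ∪ R, E) be a left-regular Tanner graph with left degree l ≥ 3, and let S ⊆ L be a nonempty Zyablov–Pinsker (ZP) trapping set. Then the induced subgraph G(S) contains at least one cycle. -/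
open SimpleGraph

lemma min_deg_two_not_acyclic {V : Type} [Fintype V] [Nonempty V] (G : SimpleGraph V)
    (hdeg : ∀ v : V, ∃ w₁ w₂ : V, w₁ ≠ w₂ ∧ G.Adj v w₁ ∧ G.Adj v w₂) :
    ¬ G.IsAcyclic := by
  classical
  intro hac
  set T : Set ℕ := {n | ∃ u v : V, ∃ p : G.Walk u v, p.IsPath ∧ p.length = n} with hT
  have h0 : (0 : ℕ) ∈ T := by
    obtain ⟨v⟩ := ‹Nonempty V›
    exact ⟨v, v, Walk.nil, Walk.IsPath.nil, rfl⟩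
  have hbdd : BddAbove T := by
    refine ⟨Fintype.card V, fun n hn => ?_⟩
    obtain ⟨u, v, p, hp, rfl⟩ := hn
    exact hp.length_lt.le
  have hmem : sSup T ∈ T := Nat.sSup_mem ⟨0, h0⟩ hbdd
  obtain ⟨u, v, p, hp, hlen⟩ := hmem
  -- every neighbor of v is on p
  have hsupp : ∀ w : V, G.Adj v w → w ∈ p.support := by
    intro w hw
    by_contra hws
    have hq : (Walk.cons hw.symm p.reverse).IsPath := by
      rw [Walk.cons_isPath_iff]
      refine ⟨hp.reverse, ?_⟩
      rwa [Walk.support_reverse, List.mem_reverse]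
    have : p.length + 1 ∈ T := ⟨w, u, _, hq, by simp⟩
    have := le_csSup hbdd this
    omega
  obtain ⟨w₁, w₂, hne12, h1, h2⟩ := hdeg v
  -- for each neighbor w on p, p decomposes with last edge to w
  have key : ∀ w : V, ∀ hw : G.Adj v w, ∀ hws : w ∈ p.support,
      p.reverse = Walk.cons hw ((p.takeUntil w hws).reverse) := by
    intro w hw hws
    have hq : (p.dropUntil w hws).IsPath := hp.dropUntil hws
    have he : (Walk.cons hw.symm Walk.nil : G.Walk w v).IsPath := by
      rw [Walk.cons_isPath_iff]
      exact ⟨Walk.IsPath.nil, by simp [hw.ne']⟩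
    have huniq : (⟨_, hq⟩ : G.Path w v) = ⟨_, he⟩ := hac.path_unique _ _
    have hdrop : p.dropUntil w hws = Walk.cons hw.symm Walk.nil :=
      congrArg Subtype.val huniq
    conv_lhs => rw [← p.take_spec hws]
    rw [Walk.reverse_append, hdrop]
    simp
  have e1 := congrArg (fun q => q.getVert 1) (key w₁ h1 (hsupp w₁ h1))
  have e2 := congrArg (fun q => q.getVert 1) (key w₂ h2 (hsupp w₂ h2))
  simp only [Walk.getVert_cons_succ, Walk.getVert_zero] at e1 e2
  exact hne12 (e1.symm.trans e2)

/-- In a left-regular Tanner graph with left degree `l ≥ 3`, the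
induced subgraph `G(S)` of a nonempty ZP trapping set `S` contains at least one cycle. -/
theorem stmt14 {V : Type} [Fintype V] (G : SimpleGraph V) (isVar : V → Prop)
    (hbip : Bipartite G isVar)
    (l : ℕ) (hl : 3 ≤ l) (hreg : ∀ v, isVar v → degG G v = l)
    (S : Set V) (hSL : S ⊆ {v | isVar v}) (hne : S.Nonempty)
    (hzp : ∀ v ∈ S, adjCount G (GamO G S) v < l - (l - 1) / 2) :
    ¬ (G.induce (S ∪ Gam G S)).IsAcyclic := by
  classical
  intro hac
  -- Step 1: every v ∈ S has ≥ 2 neighbors in GamE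
  have hE : ∀ v ∈ S, 2 ≤ adjCount G (GamE G S) v := by
    intro v hv
    have hdeg := hreg v (hSL hv)
    have hsplit : G.neighborSet v =
        {c | c ∈ GamO G S ∧ G.Adj v c} ∪ {c | c ∈ GamE G S ∧ G.Adj v c} := by
      ext c
      simp only [mem_neighborSet, Set.mem_union, Set.mem_setOf_eq]
      constructor
      · intro hadj
        have hc : c ∈ Gam G S := ⟨v, hv, hadj⟩
        rcases Nat.even_or_odd (degIn G S c) with he | ho
        · exact Or.inr ⟨⟨hc, he⟩, hadj⟩
        · exact Or.inl ⟨⟨hc, ho⟩, hadj⟩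
      · rintro (⟨_, h⟩ | ⟨_, h⟩) <;> exact h
    have hdisj : Disjoint {c | c ∈ GamO G S ∧ G.Adj v c} {c | c ∈ GamE G S ∧ G.Adj v c} := by
      rw [Set.disjoint_left]
      rintro c ⟨⟨_, ho⟩, _⟩ ⟨⟨_, he⟩, _⟩
      exact (Nat.not_even_iff_odd.mpr ho) he
    have hsum : adjCount G (GamO G S) v + adjCount G (GamE G S) v = l := by
      rw [← hdeg]
      unfold degG adjCount
      rw [hsplit, Set.ncard_union_eq hdisj (Set.toFinite _) (Set.toFinite _)]
    have hzpv := hzp v hv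
    omega
  -- Step 2: every c ∈ GamE has ≥ 2 neighbors in S
  have hC : ∀ c ∈ GamE G S, 2 ≤ degIn G S c := by
    rintro c ⟨⟨v, hv, hadj⟩, heven⟩
    have hpos : 0 < degIn G S c := by
      unfold degIn
      rw [Set.ncard_pos (Set.toFinite _)]
      exact ⟨v, hv, hadj.symm⟩
    obtain ⟨k, hk⟩ := heven
    omega
  -- Step 3: set up the induced subgraph on S ∪ GamE inside S ∪ Gam
  set U : Set V := S ∪ Gam G S with hU
  set W : Set ↥U := {x | (x : V) ∈ S ∪ GamE G S} with hW
  have hGamE_sub : GamE G S ⊆ Gam G S := fun c hc => hc.1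
  -- nonempty
  obtain ⟨v₀, hv₀⟩ := hne
  haveI : Nonempty ↥W := ⟨⟨⟨v₀, Or.inl hv₀⟩, Or.inl hv₀⟩⟩
  haveI : Fintype ↥W := Fintype.ofFinite _
  have hKacyclic : ((G.induce U).induce W).IsAcyclic := by
    intro x c hc
    exact hac _ ((Walk.map_isCycle_iff_of_injective
      (f := (SimpleGraph.Embedding.induce (G := G.induce U) W).toHom)
      (SimpleGraph.Embedding.induce (G := G.induce U) W).injective).mpr hc)
  refine min_deg_two_not_acyclic ((G.induce U).induce W) ?_ hKacyclic
  rintro ⟨⟨x, hxU⟩, hxW⟩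
  rcases hxW with hxS | hxE
  · -- x ∈ S : two neighbors in GamE
    have h2 := hE x hxS
    obtain ⟨c₁, hc₁, c₂, hc₂, hne12⟩ :=
      (Set.one_lt_ncard (Set.toFinite _)).mp (by omega : 1 < adjCount G (GamE G S) x)
    refine ⟨⟨⟨c₁, Or.inr (hGamE_sub hc₁.1)⟩, Or.inr hc₁.1⟩,
            ⟨⟨c₂, Or.inr (hGamE_sub hc₂.1)⟩, Or.inr hc₂.1⟩, ?_, hc₁.2, hc₂.2⟩
    simp only [ne_eq, Subtype.mk_eq_mk]
    exact fun h => hne12 (congrArg (fun y : ↥W => ((y : ↥U) : V)) h)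
  · -- x ∈ GamE : two neighbors in S
    have h2 := hC x hxE
    obtain ⟨v₁, hv₁, v₂, hv₂, hne12⟩ :=
      (Set.one_lt_ncard (Set.toFinite _)).mp (by omega : 1 < degIn G S x)
    refine ⟨⟨⟨v₁, Or.inl hv₁.1⟩, Or.inl hv₁.1⟩,
            ⟨⟨v₂, Or.inl hv₂.1⟩, Or.inl hv₂.1⟩, ?_, hv₁.2, hv₂.2⟩
    simp only [ne_eq, Subtype.mk_eq_mk]
    exact fun h => hne12 (congrArg (fun y : ↥W => ((y : ↥U) : V)) h)
end
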